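/- arXiv:2309.04096 — 9 statements merged into one kernel-verified Lean document; each statement's English description precedes it below -/
import Mathlib

section
/- Let H(x,t,ρ) be C², let b(x,t,ρ) be a bounded C¹ solution of b_t + H_x b_ρ − H_ρ b_x = H_{ρρ}b² + 2H_{ρx}b + H_{xx}, and set β := H_x + bH_ρ. Let φ_x^y(ρ;t) be the flow of the ODE dρ/dz = b(z,t,ρ(z)). Then the flow satisfies ∂_t[φ_x^y(ρ;t)] = β(y,t,φ_x^y(ρ;t)) − β(x,t,ρ)·∂_ρ[φ_x^y(ρ;t)] for all x ≤ y, t, ρ. -/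
open Set

/-- Partial derivative in the first (space) variable. -/
noncomputable def pdx (F : ℝ → ℝ → ℝ → ℝ) (x t ρ : ℝ) : ℝ := deriv (fun a => F a t ρ) x

/-- Partial derivative in the second (time) variable. -/
noncomputable def pdt (F : ℝ → ℝ → ℝ → ℝ) (x t ρ : ℝ) : ℝ := deriv (fun s => F x s ρ) t

/-- Partial derivative in the third (momentum) variable. -/
noncomputable def pdr (F : ℝ → ℝ → ℝ → ℝ) (x t ρ : ℝ) : ℝ := deriv (fun r => F x t r) ρ

/-- `β = H_x + b·H_ρ`. -/
noncomputable def betaFn (H b : ℝ → ℝ → ℝ → ℝ) (x t ρ : ℝ) : ℝ :=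
  pdx H x t ρ + b x t ρ * pdr H x t ρ

/-!
Write `W(z) = φ_x^z(ρ;t)`, `u(z) = ∂_t φ_x^z(ρ;t)` and `v(z) = ∂_ρ φ_x^z(ρ;t)`. Differentiating the
integral form `φ_x^z = φ_x^x + ∫_x^z b(w,t,φ_x^w) dw` in the parameter gives the variational
equations `u' = b_t + b_ρ u` and `v' = b_ρ v` along `W`. The PDE for `b`, together with
`H_{xρ} = H_{ρx}`, says precisely that `z ↦ β(z,t,W z)` satisfies `β' = b_t + b_ρ β` as well.
Hence `Q = u − β(·,t,W) + β(x,t,ρ) v` solves the linear equation `Q' = b_ρ Q` with `Q(x) = 0`,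
so `Q ≡ 0`.
-/

def uncurry₃ {α β γ δ : Type*} (F : α → β → γ → δ) (p : α × β × γ) : δ := F p.1 p.2.1 p.2.2

section PartialDerivatives

variable {F : ℝ → ℝ → ℝ → ℝ}

theorem HasFDerivAt.hasDerivAt_uncurry₃_comp {F' : ℝ × ℝ × ℝ →L[ℝ] ℝ} {γ₁ γ₂ γ₃ : ℝ → ℝ}
    {d₁ d₂ d₃ s : ℝ} (hF : HasFDerivAt (uncurry₃ F) F' (γ₁ s, γ₂ s, γ₃ s))
    (h₁ : HasDerivAt γ₁ d₁ s) (h₂ : HasDerivAt γ₂ d₂ s) (h₃ : HasDerivAt γ₃ d₃ s) :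
    HasDerivAt (fun w => F (γ₁ w) (γ₂ w) (γ₃ w)) (F' (d₁, d₂, d₃)) s :=
  HasFDerivAt.comp_hasDerivAt (l := uncurry₃ F) s hF (h₁.prodMk (h₂.prodMk h₃))

theorem pdx_eq_fderiv {x t ρ : ℝ} (hF : DifferentiableAt ℝ (uncurry₃ F) (x, t, ρ)) :
    pdx F x t ρ = fderiv ℝ (uncurry₃ F) (x, t, ρ) (1, 0, 0) :=
  (hF.hasFDerivAt.hasDerivAt_uncurry₃_comp (hasDerivAt_id x) (hasDerivAt_const x t)
    (hasDerivAt_const x ρ)).deriv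

theorem pdt_eq_fderiv {x t ρ : ℝ} (hF : DifferentiableAt ℝ (uncurry₃ F) (x, t, ρ)) :
    pdt F x t ρ = fderiv ℝ (uncurry₃ F) (x, t, ρ) (0, 1, 0) :=
  (hF.hasFDerivAt.hasDerivAt_uncurry₃_comp (hasDerivAt_const t x) (hasDerivAt_id t)
    (hasDerivAt_const t ρ)).deriv

theorem pdr_eq_fderiv {x t ρ : ℝ} (hF : DifferentiableAt ℝ (uncurry₃ F) (x, t, ρ)) :
    pdr F x t ρ = fderiv ℝ (uncurry₃ F) (x, t, ρ) (0, 0, 1) :=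
  (hF.hasFDerivAt.hasDerivAt_uncurry₃_comp (hasDerivAt_const ρ x) (hasDerivAt_const ρ t)
    (hasDerivAt_id ρ)).deriv

theorem fderiv_uncurry₃_apply {x t ρ : ℝ} (hF : DifferentiableAt ℝ (uncurry₃ F) (x, t, ρ))
    (d₁ d₂ d₃ : ℝ) :
    fderiv ℝ (uncurry₃ F) (x, t, ρ) (d₁, d₂, d₃)
      = d₁ * pdx F x t ρ + d₂ * pdt F x t ρ + d₃ * pdr F x t ρ := by
  have hd : ((d₁, d₂, d₃) : ℝ × ℝ × ℝ)
      = d₁ • ((1 : ℝ), (0 : ℝ), (0 : ℝ)) + d₂ • ((0 : ℝ), (1 : ℝ), (0 : ℝ))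
        + d₃ • ((0 : ℝ), (0 : ℝ), (1 : ℝ)) := by
    simp
  rw [hd, map_add, map_add, map_smul, map_smul, map_smul, pdx_eq_fderiv hF, pdt_eq_fderiv hF,
    pdr_eq_fderiv hF, smul_eq_mul, smul_eq_mul, smul_eq_mul]

theorem DifferentiableAt.hasDerivAt_uncurry₃_comp {γ₁ γ₂ γ₃ : ℝ → ℝ} {d₁ d₂ d₃ s : ℝ}
    (hF : DifferentiableAt ℝ (uncurry₃ F) (γ₁ s, γ₂ s, γ₃ s))
    (h₁ : HasDerivAt γ₁ d₁ s) (h₂ : HasDerivAt γ₂ d₂ s) (h₃ : HasDerivAt γ₃ d₃ s) :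
    HasDerivAt (fun w => F (γ₁ w) (γ₂ w) (γ₃ w))
      (d₁ * pdx F (γ₁ s) (γ₂ s) (γ₃ s) + d₂ * pdt F (γ₁ s) (γ₂ s) (γ₃ s)
        + d₃ * pdr F (γ₁ s) (γ₂ s) (γ₃ s)) s := by
  rw [← fderiv_uncurry₃_apply hF]
  exact hF.hasFDerivAt.hasDerivAt_uncurry₃_comp h₁ h₂ h₃

theorem uncurry₃_pdx (hF : Differentiable ℝ (uncurry₃ F)) :
    uncurry₃ (pdx F) = fun p => fderiv ℝ (uncurry₃ F) p (1, 0, 0) :=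
  funext fun p => pdx_eq_fderiv (hF p)

theorem uncurry₃_pdt (hF : Differentiable ℝ (uncurry₃ F)) :
    uncurry₃ (pdt F) = fun p => fderiv ℝ (uncurry₃ F) p (0, 1, 0) :=
  funext fun p => pdt_eq_fderiv (hF p)

theorem uncurry₃_pdr (hF : Differentiable ℝ (uncurry₃ F)) :
    uncurry₃ (pdr F) = fun p => fderiv ℝ (uncurry₃ F) p (0, 0, 1) :=
  funext fun p => pdr_eq_fderiv (hF p)

variable {n : WithTop ℕ∞}

theorem contDiff_uncurry₃_pdx (hF : ContDiff ℝ (n + 1) (uncurry₃ F)) :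
    ContDiff ℝ n (uncurry₃ (pdx F)) := by
  rw [uncurry₃_pdx (hF.differentiable (by simp))]
  exact (hF.fderiv_right le_rfl).clm_apply contDiff_const

theorem contDiff_uncurry₃_pdt (hF : ContDiff ℝ (n + 1) (uncurry₃ F)) :
    ContDiff ℝ n (uncurry₃ (pdt F)) := by
  rw [uncurry₃_pdt (hF.differentiable (by simp))]
  exact (hF.fderiv_right le_rfl).clm_apply contDiff_const

theorem contDiff_uncurry₃_pdr (hF : ContDiff ℝ (n + 1) (uncurry₃ F)) :
    ContDiff ℝ n (uncurry₃ (pdr F)) := by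
  rw [uncurry₃_pdr (hF.differentiable (by simp))]
  exact (hF.fderiv_right le_rfl).clm_apply contDiff_const

theorem pdr_pdx_eq_pdx_pdr (hF : ContDiff ℝ 2 (uncurry₃ F)) (x t ρ : ℝ) :
    pdr (pdx F) x t ρ = pdx (pdr F) x t ρ := by
  have hF1 : Differentiable ℝ (uncurry₃ F) := hF.differentiable (by simp)
  have hF' : Differentiable ℝ (fderiv ℝ (uncurry₃ F)) :=
    (hF.fderiv_right (m := 1) (by norm_num)).differentiable (by simp)
  rw [pdr_eq_fderiv ((contDiff_uncurry₃_pdx (n := 1) hF).differentiable (by simp) _),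
    pdx_eq_fderiv ((contDiff_uncurry₃_pdr (n := 1) hF).differentiable (by simp) _),
    uncurry₃_pdx hF1, uncurry₃_pdr hF1, fderiv_clm_apply (hF' _) (differentiableAt_const _),
    fderiv_clm_apply (hF' _) (differentiableAt_const _)]
  simpa using (hF.contDiffAt (x := (x, t, ρ))).isSymmSndFDerivAt (by simp) _ _

end PartialDerivatives

theorem hasDerivAt_intervalIntegral_of_continuous_deriv {E : Type*} [NormedAddCommGroup E]
    [NormedSpace ℝ E] {F F' : ℝ → ℝ → E} (hF : Continuous (Function.uncurry F))
    (hF' : Continuous (Function.uncurry F'))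
    (hderiv : ∀ s w, HasDerivAt (fun s => F s w) (F' s w) s) (a b s₀ : ℝ) :
    HasDerivAt (fun s => ∫ w in a..b, F s w) (∫ w in a..b, F' s₀ w) s₀ := by
  obtain ⟨C, hC⟩ : ∃ C, ∀ q ∈ Icc (s₀ - 1) (s₀ + 1) ×ˢ uIcc a b, ‖Function.uncurry F' q‖ ≤ C :=
    (isCompact_Icc.prod isCompact_uIcc).exists_bound_of_continuousOn hF'.continuousOn
  have hbound : ∀ᵐ w ∂MeasureTheory.volume, w ∈ uIoc a b →
      ∀ s ∈ Metric.ball s₀ 1, ‖F' s w‖ ≤ C := by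
    refine Filter.Eventually.of_forall fun w hw s hs => hC (s, w) ⟨?_, uIoc_subset_uIcc hw⟩
    rw [Real.ball_eq_Ioo] at hs
    exact Ioo_subset_Icc_self hs
  exact (intervalIntegral.hasDerivAt_integral_of_dominated_loc_of_deriv_le
    (Metric.ball_mem_nhds s₀ one_pos)
    (Filter.Eventually.of_forall fun s =>
      (hF.comp (Continuous.prodMk_right s)).aestronglyMeasurable)
    ((hF.comp (Continuous.prodMk_right s₀)).intervalIntegrable a b)
    (hF'.comp (Continuous.prodMk_right s₀)).aestronglyMeasurable hbound intervalIntegrable_const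
    (Filter.Eventually.of_forall fun w _ s _ => hderiv s w)).2

theorem hasDerivAt_paramDeriv_of_ode {f : ℝ → ℝ → ℝ} {G : ℝ → ℝ → ℝ → ℝ}
    (hf : ContDiff ℝ 1 (Function.uncurry f)) (hG : ContDiff ℝ 1 (uncurry₃ G))
    (hode : ∀ z s, HasDerivAt (fun w => f w s) (G z s (f z s)) z) (z₀ s₀ : ℝ) :
    HasDerivAt (fun z => deriv (f z) s₀)
      (pdt G z₀ s₀ (f z₀ s₀) + pdr G z₀ s₀ (f z₀ s₀) * deriv (f z₀) s₀) z₀ := by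
  have hf_fderiv : ∀ z s, HasDerivAt (f z) (fderiv ℝ (Function.uncurry f) (z, s) (0, 1)) s :=
    fun z s => HasFDerivAt.comp_hasDerivAt (l := Function.uncurry f) s
      (hf.differentiable one_ne_zero (z, s)).hasFDerivAt
      ((hasDerivAt_const s z).prodMk (hasDerivAt_id s))
  have hf_s : ∀ z s, HasDerivAt (f z) (deriv (f z) s) s := fun z s =>
    (hf_fderiv z s).differentiableAt.hasDerivAt
  have hf_s_cont : Continuous fun q : ℝ × ℝ => deriv (f q.2) q.1 := by
    simp_rw [fun z s => (hf_fderiv z s).deriv]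
    exact ((hf.continuous_fderiv one_ne_zero).comp continuous_swap).clm_apply continuous_const
  have hcurve : Continuous fun q : ℝ × ℝ => ((q.2, q.1, f q.2 q.1) : ℝ × ℝ × ℝ) :=
    continuous_snd.prodMk (continuous_fst.prodMk (hf.continuous.comp continuous_swap))
  have hG_along : Continuous fun q : ℝ × ℝ => G q.2 q.1 (f q.2 q.1) := hG.continuous.comp hcurve
  set a : ℝ → ℝ → ℝ := fun s z => pdt G z s (f z s) + pdr G z s (f z s) * deriv (f z) s
  have ha : Continuous (Function.uncurry a) :=
    (((contDiff_uncurry₃_pdt (n := 0) (by simpa using hG)).continuous.comp hcurve).add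
      (((contDiff_uncurry₃_pdr (n := 0) (by simpa using hG)).continuous.comp hcurve).mul
        hf_s_cont))
  have hintegral : ∀ z s, f z s = f z₀ s + ∫ w in z₀..z, G w s (f w s) := fun z s => by
    rw [intervalIntegral.integral_eq_sub_of_hasDerivAt (fun w _ => hode w s)
      ((hG_along.comp (Continuous.prodMk_right s)).intervalIntegrable z₀ z)]
    ring
  have hleibniz : ∀ z, HasDerivAt (fun s => ∫ w in z₀..z, G w s (f w s))
      (∫ w in z₀..z, a s₀ w) s₀ := fun z =>
    hasDerivAt_intervalIntegral_of_continuous_deriv (F := fun s w => G w s (f w s)) hG_along ha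
      (fun s w => ((hG.differentiable one_ne_zero _).hasDerivAt_uncurry₃_comp
        (hasDerivAt_const s w) (hasDerivAt_id s) (hf_s w s)).congr_deriv
          (by simp only [a, id]; ring)) z₀ z s₀
  have hparam : ∀ z, deriv (f z) s₀ = deriv (f z₀) s₀ + ∫ w in z₀..z, a s₀ w := fun z =>
    (hf_s z s₀).unique <| ((hf_s z₀ s₀).add (hleibniz z)).congr_of_eventuallyEq
      (Filter.Eventually.of_forall fun s => hintegral z s)
  exact (((ha.comp (Continuous.prodMk_right s₀)).integral_hasStrictDerivAt z₀ z₀).hasDerivAt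
    |>.const_add _).congr_of_eventuallyEq (Filter.Eventually.of_forall hparam)

theorem eq_zero_of_hasDerivAt_eq_mul {Q a : ℝ → ℝ} (ha : Continuous a)
    (hQ : ∀ z, HasDerivAt Q (a z * Q z) z) {x : ℝ} (hx : Q x = 0) (y : ℝ) : Q y = 0 := by
  have hconst : ∀ z, HasDerivAt (fun w => Q w * Real.exp (-∫ v in x..w, a v)) 0 z := fun z =>
    ((hQ z).mul (ha.integral_hasStrictDerivAt x z).hasDerivAt.neg.exp).congr_deriv (by ring)
  have h := is_const_of_deriv_eq_zero (fun z => (hconst z).differentiableAt)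
    (fun z => (hconst z).deriv) y x
  simpa [hx, Real.exp_ne_zero] using h

theorem hasDerivAt_betaFn_comp {H b : ℝ → ℝ → ℝ → ℝ} (hH : ContDiff ℝ 2 (uncurry₃ H))
    (hb : ContDiff ℝ 1 (uncurry₃ b))
    (hPDE : ∀ x t ρ : ℝ,
      pdt b x t ρ + pdx H x t ρ * pdr b x t ρ - pdr H x t ρ * pdx b x t ρ
        = pdr (pdr H) x t ρ * (b x t ρ) ^ 2 + 2 * pdx (pdr H) x t ρ * b x t ρ
          + pdx (pdx H) x t ρ)
    {W : ℝ → ℝ} {z t : ℝ} (hW : HasDerivAt W (b z t (W z)) z) :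
    HasDerivAt (fun w => betaFn H b w t (W w))
      (pdt b z t (W z) + pdr b z t (W z) * betaFn H b z t (W z)) z := by
  have chain : ∀ F : ℝ → ℝ → ℝ → ℝ, ContDiff ℝ 1 (uncurry₃ F) →
      HasDerivAt (fun w => F w t (W w))
        (1 * pdx F z t (W z) + 0 * pdt F z t (W z) + b z t (W z) * pdr F z t (W z)) z :=
    fun F hF => (hF.differentiable one_ne_zero _).hasDerivAt_uncurry₃_comp
      (hasDerivAt_id z) (hasDerivAt_const z t) hW
  refine ((chain _ (contDiff_uncurry₃_pdx hH)).add
    ((chain b hb).mul (chain _ (contDiff_uncurry₃_pdr hH)))).congr_deriv ?_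
  rw [pdr_pdx_eq_pdx_pdr hH]
  simp only [betaFn]
  linear_combination -hPDE z t (W z)

theorem stmt4_general
    (H b : ℝ → ℝ → ℝ → ℝ) (φ : ℝ → ℝ → ℝ → ℝ → ℝ)
    (hH : ContDiff ℝ 2 (fun p : ℝ × ℝ × ℝ => H p.1 p.2.1 p.2.2))
    (hb : ContDiff ℝ 1 (fun p : ℝ × ℝ × ℝ => b p.1 p.2.1 p.2.2))
    (hPDE : ∀ x t ρ : ℝ,
      pdt b x t ρ + pdx H x t ρ * pdr b x t ρ - pdr H x t ρ * pdx b x t ρ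
        = pdr (pdr H) x t ρ * (b x t ρ) ^ 2 + 2 * pdx (pdr H) x t ρ * b x t ρ
          + pdx (pdx H) x t ρ)
    (hφ_init : ∀ x ρ t, φ x x ρ t = ρ)
    (hφ_ode : ∀ x z ρ t, HasDerivAt (fun w => φ x w ρ t) (b z t (φ x z ρ t)) z)
    (hφ_C1 : ContDiff ℝ 1 (fun p : ℝ × ℝ × ℝ × ℝ => φ p.1 p.2.1 p.2.2.1 p.2.2.2)) :
    ∀ x y t ρ : ℝ, x ≤ y →
      deriv (fun s => φ x y ρ s) t
        = betaFn H b y t (φ x y ρ t)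
          - betaFn H b x t ρ * deriv (fun r => φ x y r t) ρ := by
  intro x y t ρ _
  set W := fun z => φ x z ρ t
  set u := fun z => deriv (fun s => φ x z ρ s) t
  set v := fun z => deriv (fun r => φ x z r t) ρ
  have hu : ∀ z, HasDerivAt u (pdt b z t (W z) + pdr b z t (W z) * u z) z := fun z =>
    hasDerivAt_paramDeriv_of_ode (f := fun z s => φ x z ρ s)
      (hφ_C1.comp (f := fun q : ℝ × ℝ => (x, q.1, ρ, q.2)) (by fun_prop)) hb
      (fun z s => hφ_ode x z ρ s) z t
  have hv : ∀ z, HasDerivAt v (pdr b z t (W z) * v z) z := fun z => by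
    have h := hasDerivAt_paramDeriv_of_ode (f := fun z r => φ x z r t) (G := fun z _ q => b z t q)
      (hφ_C1.comp (f := fun q : ℝ × ℝ => (x, q.1, q.2, t)) (by fun_prop))
      (hb.comp (f := fun p : ℝ × ℝ × ℝ => (p.1, t, p.2.2)) (by fun_prop))
      (fun z r => hφ_ode x z r t) z ρ
    simp only [pdt, deriv_const', zero_add] at h
    exact h
  set Q := fun z => u z - betaFn H b z t (W z) + betaFn H b x t ρ * v z
  have hQ : ∀ z, HasDerivAt Q (pdr b z t (W z) * Q z) z := fun z =>
    (((hu z).sub (hasDerivAt_betaFn_comp hH hb hPDE (hφ_ode x z ρ t))).add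
      ((hv z).const_mul _)).congr_deriv (by ring)
  have hQx : Q x = 0 := by simp [Q, u, v, W, hφ_init]
  have hW : Continuous W := hφ_C1.continuous.comp (f := fun z => (x, z, ρ, t)) (by fun_prop)
  have hQy := eq_zero_of_hasDerivAt_eq_mul
    ((contDiff_uncurry₃_pdr (n := 0) (by rw [zero_add]; exact hb)).continuous.comp
      (by fun_prop : Continuous fun z => (z, t, W z))) hQ hQx y
  simp only [Q, u, v, W] at hQy
  linarith

/-- Lemma (2.8): the flow `φ_x^y(ρ;t)` of `dρ/dz = b(z,t,ρ)` satisfies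
`∂_t φ = β(y,t,φ) − β(x,t,ρ)·∂_ρ φ`. -/
theorem stmt4
    (H b : ℝ → ℝ → ℝ → ℝ) (φ : ℝ → ℝ → ℝ → ℝ → ℝ)
    (hH : ContDiff ℝ 2 (fun p : ℝ × ℝ × ℝ => H p.1 p.2.1 p.2.2))
    (hb : ContDiff ℝ 1 (fun p : ℝ × ℝ × ℝ => b p.1 p.2.1 p.2.2))
    (hb_bdd : ∃ M : ℝ, ∀ x t ρ, |b x t ρ| ≤ M)
    (hPDE : ∀ x t ρ : ℝ,
      pdt b x t ρ + pdx H x t ρ * pdr b x t ρ - pdr H x t ρ * pdx b x t ρ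
        = pdr (pdr H) x t ρ * (b x t ρ) ^ 2 + 2 * pdx (pdr H) x t ρ * b x t ρ
          + pdx (pdx H) x t ρ)
    (hφ_init : ∀ x ρ t, φ x x ρ t = ρ)
    (hφ_ode : ∀ x z ρ t, HasDerivAt (fun w => φ x w ρ t) (b z t (φ x z ρ t)) z)
    (hφ_C1 : ContDiff ℝ 1 (fun p : ℝ × ℝ × ℝ × ℝ => φ p.1 p.2.1 p.2.2.1 p.2.2.2)) :
    ∀ x y t ρ : ℝ, x ≤ y →
      deriv (fun s => φ x y ρ s) t
        = betaFn H b y t (φ x y ρ t)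
          - betaFn H b x t ρ * deriv (fun r => φ x y r t) ρ :=
  stmt4_general H b φ hH hb hPDE hφ_init hφ_ode hφ_C1
end

section
/- Assume the kinetic setting below, with f a C¹ solution of the kinetic equation f_t − (vf)_x − C⁺f − C⁻f = Q⁺(f) − Q⁻(f). Then the zeroth moment λ(x,t,ρ) = ∫_ρ^∞ f(x,t,ρ,ρ₊)dρ₊ and the flux moment A(x,t,ρ) = ∫_ρ^∞ v(x,t,ρ,ρ₊)f(x,t,ρ,ρ₊)dρ₊ satisfy the transport identity λ_t(x,t,ρ) + β(x,t,ρ)λ_ρ(x,t,ρ) = b(x,t,ρ)A_ρ(x,t,ρ) + A_x(x,t,ρ). -/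
open MeasureTheory Set

/-- The Rankine–Hugoniot velocity `v(x,t,ρ₋,ρ₊) = (H(x,t,ρ₋)−H(x,t,ρ₊))/(ρ₋−ρ₊)`,
extended by `H_ρ` on the diagonal. -/
noncomputable def vel (H : ℝ → ℝ → ℝ → ℝ) (x t a c : ℝ) : ℝ :=
  if a = c then deriv (fun r => H x t r) a else (H x t a - H x t c) / (a - c)

/-- The zeroth moment `λ(x,t,ρ) = ∫_ρ^∞ f(x,t,ρ,ρ₊) dρ₊`. -/
noncomputable def lamF (f : ℝ → ℝ → ℝ → ℝ → ℝ) (x t ρ : ℝ) : ℝ :=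
  ∫ rp in Ioi ρ, f x t ρ rp

/-- The flux moment `A(x,t,ρ) = ∫_ρ^∞ v(x,t,ρ,ρ₊) f(x,t,ρ,ρ₊) dρ₊`. -/
noncomputable def AF (H : ℝ → ℝ → ℝ → ℝ) (f : ℝ → ℝ → ℝ → ℝ → ℝ) (x t ρ : ℝ) : ℝ :=
  ∫ rp in Ioi ρ, vel H x t ρ rp * f x t ρ rp

/-- `β = H_x + b·H_ρ`. -/
noncomputable def betaF (H b : ℝ → ℝ → ℝ → ℝ) (x t ρ : ℝ) : ℝ :=
  deriv (fun a => H a t ρ) x + b x t ρ * deriv (fun r => H x t r) ρ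

/-- `K(x,t,ρ₊,ρ₋) = b(x,t,ρ₊)v(x,t,ρ₋,ρ₊) − β(x,t,ρ₊)`. -/
noncomputable def KF (H b : ℝ → ℝ → ℝ → ℝ) (x t rp rm : ℝ) : ℝ :=
  b x t rp * vel H x t rm rp - betaF H b x t rp

/-- The coagulation gain term `Q⁺(f)`. -/
noncomputable def QplusF (H : ℝ → ℝ → ℝ → ℝ) (f : ℝ → ℝ → ℝ → ℝ → ℝ)
    (x t rm rp : ℝ) : ℝ :=
  ∫ rs in Ioo rm rp, (vel H x t rs rp - vel H x t rm rs) * f x t rm rs * f x t rs rp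

/-- The loss kernel `Jf`. -/
noncomputable def JF (H : ℝ → ℝ → ℝ → ℝ) (f : ℝ → ℝ → ℝ → ℝ → ℝ)
    (x t rm rp : ℝ) : ℝ :=
  AF H f x t rp - AF H f x t rm - vel H x t rm rp * (lamF f x t rp - lamF f x t rm)

/-- The boundary-drift operator `C⁺f = ∂_{ρ₊}[K(x,t,ρ₊,ρ₋) f(x,t,ρ₋,ρ₊)]`. -/
noncomputable def CplusF (H b : ℝ → ℝ → ℝ → ℝ) (f : ℝ → ℝ → ℝ → ℝ → ℝ)
    (x t rm rp : ℝ) : ℝ :=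
  deriv (fun r => KF H b x t r rm * f x t rm r) rp

/-- The boundary-drift operator `C⁻f = b ∂_{ρ₋}(vf) − β ∂_{ρ₋}f`. -/
noncomputable def CminusF (H b : ℝ → ℝ → ℝ → ℝ) (f : ℝ → ℝ → ℝ → ℝ → ℝ)
    (x t rm rp : ℝ) : ℝ :=
  b x t rm * deriv (fun r => vel H x t r rp * f x t r rp) rm
    - betaF H b x t rm * deriv (fun r => f x t r rp) rm

/-- `f` solves the kinetic equation `f_t − (vf)_x − C⁺f − C⁻f = Q⁺(f) − f·Jf`. -/
def SolvesKineticF (H b : ℝ → ℝ → ℝ → ℝ) (f : ℝ → ℝ → ℝ → ℝ → ℝ) : Prop :=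
  ∀ x t rm rp : ℝ,
    deriv (fun s => f x s rm rp) t - deriv (fun z => vel H z t rm rp * f z t rm rp) x
        - CplusF H b f x t rm rp - CminusF H b f x t rm rp
      = QplusF H f x t rm rp - f x t rm rp * JF H f x t rm rp

/-!
Since `f(x,t,ρ,·)` is continuous, supported in `[Pm, Pp]` and vanishes for `ρ₊ ≤ ρ`, the
moments are integrals over the whole line, and all of `λ_t`, `λ_ρ`, `A_ρ`, `A_x` may be computed
by differentiating under the integral sign. Integrating the kinetic equation in `ρ₊` then gives
the identity, because the two remaining terms integrate to zero: `C⁺f` is a `ρ₊`-derivative of a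
compactly supported function, and after exchanging the order of integration over the triangle
`ρ < ρ★ < ρ₊`, both `∫ Q⁺(f)` and `∫ f·Jf` equal `∫ f(ρ,s) (A(s) − v(ρ,s) λ(s)) ds`.
-/

open Filter Topology Function

section ParametricIntegral

variable {E : Type*} [NormedAddCommGroup E] [NormedSpace ℝ E] {G : E → ℝ → ℝ}

theorem hasFDerivAt_uncurry_comp_inl (hG : ContDiff ℝ 1 (uncurry G)) (p : E) (s : ℝ) :
    HasFDerivAt (G · s) ((fderiv ℝ (uncurry G) (p, s)).comp (.inl ℝ E ℝ)) p :=
  (hG.differentiable one_ne_zero (p, s)).hasFDerivAt.comp (f := fun e : E => (e, s)) p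
    (hasFDerivAt_prodMk_left p s)

theorem continuous_fderiv_uncurry_comp_inl (hG : ContDiff ℝ 1 (uncurry G)) :
    Continuous fun q : E × ℝ => (fderiv ℝ (uncurry G) q).comp (.inl ℝ E ℝ) :=
  (hG.continuous_fderiv one_ne_zero).clm_comp continuous_const

variable [LocallyCompactSpace E] {K : Set ℝ}

theorem hasFDerivAt_setIntegral_of_contDiff (hG : ContDiff ℝ 1 (uncurry G)) (hK : IsCompact K)
    (p₀ : E) :
    HasFDerivAt (fun p => ∫ s in K, G p s)
      (∫ s in K, (fderiv ℝ (uncurry G) (p₀, s)).comp (.inl ℝ E ℝ)) p₀ := by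
  obtain ⟨U, hUc, hU⟩ := exists_compact_mem_nhds p₀
  obtain ⟨C, hC⟩ := (hUc.prod hK).exists_bound_of_continuousOn
    (continuous_fderiv_uncurry_comp_inl hG).continuousOn
  refine hasFDerivAt_integral_of_dominated_of_fderiv_le (bound := fun _ => C) hU
    (Eventually.of_forall fun p =>
      (hG.continuous.comp (continuous_const.prodMk continuous_id)).aestronglyMeasurable)
    ((hG.continuous.comp (continuous_const.prodMk continuous_id)).continuousOn.integrableOn_compact
      hK)
    (((continuous_fderiv_uncurry_comp_inl hG).comp
      (continuous_const.prodMk continuous_id)).aestronglyMeasurable)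
    ?_ (integrableOn_const hK.measure_ne_top)
    (Eventually.of_forall fun s p _ => hasFDerivAt_uncurry_comp_inl hG p s)
  exact ae_restrict_of_forall_mem hK.measurableSet fun s hs p hp => hC (p, s) ⟨hp, hs⟩

theorem contDiff_setIntegral_of_contDiff (hG : ContDiff ℝ 1 (uncurry G)) (hK : IsCompact K) :
    ContDiff ℝ 1 fun p => ∫ s in K, G p s := by
  rw [contDiff_one_iff_fderiv]
  refine ⟨fun p => (hasFDerivAt_setIntegral_of_contDiff hG hK p).differentiableAt, ?_⟩
  rw [funext fun p => (hasFDerivAt_setIntegral_of_contDiff hG hK p).fderiv]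
  exact continuous_parametric_integral_of_continuous (continuous_fderiv_uncurry_comp_inl hG) hK

theorem continuous_integral_of_eq_zero {g : ℝ → ℝ → ℝ} (hg : Continuous (uncurry g))
    (hK : IsCompact K) (hsupp : ∀ u, ∀ y ∉ K, g u y = 0) : Continuous fun u => ∫ y, g u y := by
  rw [funext fun u => (setIntegral_eq_integral_of_forall_compl_eq_zero (hsupp u)).symm]
  exact continuous_parametric_integral_of_continuous hg hK

theorem hasDerivAt_integral_of_contDiff {g : ℝ → ℝ → ℝ} (hg : ContDiff ℝ 1 (uncurry g))
    (hK : IsCompact K) (hsupp : ∀ u, ∀ y ∉ K, g u y = 0) (u₀ : ℝ) :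
    Integrable (fun y => deriv (g · y) u₀) ∧
      HasDerivAt (fun u => ∫ y, g u y) (∫ y, deriv (g · y) u₀) u₀ := by
  have hderiv : ∀ y, deriv (g · y) u₀ = (fderiv ℝ (uncurry g) (u₀, y)).comp (.inl ℝ ℝ ℝ) 1 :=
    fun y => (hasFDerivAt_uncurry_comp_inl hg u₀ y).hasDerivAt.deriv
  have hcont : Continuous fun y => (fderiv ℝ (uncurry g) (u₀, y)).comp (.inl ℝ ℝ ℝ) :=
    (continuous_fderiv_uncurry_comp_inl hg).comp (by fun_prop)
  have hdsupp : ∀ y ∉ K, deriv (g · y) u₀ = 0 := fun y hy => by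
    rw [funext fun u => hsupp u y hy, deriv_const]
  refine ⟨?_, ?_⟩
  · refine Continuous.integrable_of_hasCompactSupport ?_ (HasCompactSupport.intro hK hdsupp)
    rw [funext hderiv]
    exact hcont.clm_apply continuous_const
  · have h := (hasFDerivAt_setIntegral_of_contDiff hg hK u₀).hasDerivAt
    rw [ContinuousLinearMap.integral_apply (hcont.continuousOn.integrableOn_compact hK)] at h
    rw [← funext hderiv, setIntegral_eq_integral_of_forall_compl_eq_zero hdsupp,
      funext fun u => setIntegral_eq_integral_of_forall_compl_eq_zero (hsupp u)] at h
    exact h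

end ParametricIntegral

theorem integral_deriv_eq_zero_of_hasCompactSupport {g : ℝ → ℝ} (hg : ContDiff ℝ 1 g)
    (hc : HasCompactSupport g) : Integrable (deriv g) ∧ ∫ y, deriv g y = 0 := by
  have hint : Integrable (deriv g) :=
    (hg.continuous_deriv le_rfl).integrable_of_hasCompactSupport hc.deriv
  exact ⟨hint, integral_eq_zero_of_hasDerivAt_of_integrable
    (fun y => (hg.differentiable one_ne_zero y).hasDerivAt) hint
    (hg.continuous.integrable_of_hasCompactSupport hc)⟩

theorem Continuous.eq_zero_of_le_of_forall_lt {g : ℝ → ℝ} (hg : Continuous g) {a : ℝ}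
    (h : ∀ c < a, g c = 0) {c : ℝ} (hc : c ≤ a) : g c = 0 :=
  EqOn.of_subset_closure (f := g) (g := 0) h hg.continuousOn continuousOn_const Iio_subset_Iic_self
    (closure_Iio a).ge hc

theorem integral_integral_Ioo_eq_setIntegral_Ioi {φ : ℝ → ℝ → ℝ}
    (hφ : Integrable (uncurry φ) (volume.prod volume)) (ρ : ℝ) :
    Integrable (fun y => ∫ s in Ioo ρ y, φ s y) ∧
      ∫ y, ∫ s in Ioo ρ y, φ s y = ∫ s in Ioi ρ, ∫ y in Ioi s, φ s y := by
  set S : Set (ℝ × ℝ) := {q | ρ < q.1 ∧ q.1 < q.2}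
  have hS : MeasurableSet S :=
    (measurableSet_lt measurable_const measurable_fst).inter
      (measurableSet_lt measurable_fst measurable_snd)
  set ψ : ℝ → ℝ → ℝ := fun s y => S.indicator (uncurry φ) (s, y)
  have hψ : Integrable (uncurry ψ) (volume.prod volume) := hφ.indicator hS
  have hinner : ∀ y, ∫ s in Ioo ρ y, φ s y = ∫ s, ψ s y := fun y => by
    rw [← integral_indicator measurableSet_Ioo]
    rfl
  have houter : ∀ s, ∫ y, ψ s y = (Ioi ρ).indicator (fun s => ∫ y in Ioi s, φ s y) s := by
    intro s
    by_cases hs : ρ < s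
    · rw [indicator_of_mem (show s ∈ Ioi ρ from hs), ← integral_indicator measurableSet_Ioi]
      congr 1 with y
      simp [ψ, S, indicator, hs]
    · rw [indicator_of_notMem (show s ∉ Ioi ρ from hs)]
      simp [ψ, S, indicator, hs]
  simp_rw [hinner]
  refine ⟨hψ.integral_prod_right, ?_⟩
  rw [← integral_integral_swap hψ, ← integral_indicator measurableSet_Ioi]
  exact integral_congr_ae (Eventually.of_forall houter)

section Velocity

variable {H : ℝ → ℝ → ℝ → ℝ}

theorem contDiff_deriv_thd (hH : ContDiff ℝ 2 fun p : ℝ × ℝ × ℝ => H p.1 p.2.1 p.2.2) :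
    ContDiff ℝ 1 fun p : ℝ × ℝ × ℝ => deriv (H p.1 p.2.1 ·) p.2.2 := by
  have h : ∀ p : ℝ × ℝ × ℝ, deriv (H p.1 p.2.1 ·) p.2.2
      = fderiv ℝ (fun p : ℝ × ℝ × ℝ => H p.1 p.2.1 p.2.2) p (0, 0, 1) := fun p =>
    ((hH.differentiable (by norm_num) p).hasFDerivAt.comp_hasDerivAt
      (f := fun r : ℝ => (p.1, p.2.1, r)) p.2.2
      ((hasDerivAt_const p.2.2 p.1).prodMk ((hasDerivAt_const p.2.2 p.2.1).prodMk
        (hasDerivAt_id p.2.2)))).deriv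
  rw [funext h]
  exact (hH.fderiv_right le_rfl).clm_apply contDiff_const

theorem contDiff_deriv_fst (hH : ContDiff ℝ 2 fun p : ℝ × ℝ × ℝ => H p.1 p.2.1 p.2.2) :
    ContDiff ℝ 1 fun p : ℝ × ℝ × ℝ => deriv (H · p.2.1 p.2.2) p.1 := by
  have h : ∀ p : ℝ × ℝ × ℝ, deriv (H · p.2.1 p.2.2) p.1
      = fderiv ℝ (fun p : ℝ × ℝ × ℝ => H p.1 p.2.1 p.2.2) p (1, 0, 0) := fun p =>
    ((hH.differentiable (by norm_num) p).hasFDerivAt.comp_hasDerivAt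
      (f := fun a : ℝ => (a, p.2.1, p.2.2)) p.1
      ((hasDerivAt_id p.1).prodMk ((hasDerivAt_const p.1 p.2.1).prodMk
        (hasDerivAt_const p.1 p.2.2)))).deriv
  rw [funext h]
  exact (hH.fderiv_right le_rfl).clm_apply contDiff_const

theorem vel_eq_integral (hH : ContDiff ℝ 2 fun p : ℝ × ℝ × ℝ => H p.1 p.2.1 p.2.2)
    (x t a c : ℝ) : vel H x t a c = ∫ s in Icc (0 : ℝ) 1, deriv (H x t ·) (c + (a - c) * s) := by
  rw [integral_Icc_eq_integral_Ioc, ← intervalIntegral.integral_of_le zero_le_one]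
  rcases eq_or_ne a c with rfl | hac
  · simp [vel]
  · have hcont : Continuous (deriv (H x t ·)) :=
      (contDiff_deriv_thd hH).continuous.comp (f := fun r : ℝ => (x, t, r)) (by fun_prop)
    have hdiff : Differentiable ℝ (H x t ·) :=
      (hH.comp (by fun_prop : ContDiff ℝ 2 fun r : ℝ => (x, t, r))).differentiable (by norm_num)
    rw [intervalIntegral.integral_comp_add_mul _ (sub_ne_zero.mpr hac),
      intervalIntegral.integral_deriv_eq_sub (fun r _ => hdiff r) (hcont.intervalIntegrable _ _)]
    simp [vel, hac, div_eq_inv_mul]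

theorem contDiff_vel (hH : ContDiff ℝ 2 fun p : ℝ × ℝ × ℝ => H p.1 p.2.1 p.2.2) :
    ContDiff ℝ 1 fun p : ℝ × ℝ × ℝ × ℝ => vel H p.1 p.2.1 p.2.2.1 p.2.2.2 := by
  simp_rw [vel_eq_integral hH]
  refine contDiff_setIntegral_of_contDiff
    (G := fun (p : ℝ × ℝ × ℝ × ℝ) s => deriv (H p.1 p.2.1 ·) (p.2.2.2 + (p.2.2.1 - p.2.2.2) * s))
    ?_ isCompact_Icc
  exact (contDiff_deriv_thd hH).comp (f := fun q : (ℝ × ℝ × ℝ × ℝ) × ℝ =>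
    (q.1.1, q.1.2.1, q.1.2.2.2 + (q.1.2.2.1 - q.1.2.2.2) * q.2)) (by fun_prop)

theorem contDiff_betaF {b : ℝ → ℝ → ℝ → ℝ}
    (hH : ContDiff ℝ 2 fun p : ℝ × ℝ × ℝ => H p.1 p.2.1 p.2.2)
    (hb : ContDiff ℝ 1 fun p : ℝ × ℝ × ℝ => b p.1 p.2.1 p.2.2) :
    ContDiff ℝ 1 fun p : ℝ × ℝ × ℝ => betaF H b p.1 p.2.1 p.2.2 :=
  (contDiff_deriv_fst hH).add (hb.mul (contDiff_deriv_thd hH))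

end Velocity

section Moments

variable {H : ℝ → ℝ → ℝ → ℝ} {f : ℝ → ℝ → ℝ → ℝ → ℝ} {x t : ℝ}

theorem lamF_eq_integral {r : ℝ} (h : ∀ y ≤ r, f x t r y = 0) :
    lamF f x t r = ∫ y, f x t r y :=
  setIntegral_eq_integral_of_forall_compl_eq_zero fun y hy => h y (not_lt.mp hy)

theorem AF_eq_integral {r : ℝ} (h : ∀ y ≤ r, f x t r y = 0) :
    AF H f x t r = ∫ y, vel H x t r y * f x t r y :=
  setIntegral_eq_integral_of_forall_compl_eq_zero fun y hy => by rw [h y (not_lt.mp hy), mul_zero]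

variable {Pm Pp : ℝ}

theorem integral_QplusF (hf : Continuous fun q : ℝ × ℝ => f x t q.1 q.2)
    (hv : Continuous fun q : ℝ × ℝ => vel H x t q.1 q.2)
    (hf0 : ∀ a c, c ≤ a → f x t a c = 0) (hfK : ∀ a c, c ∉ Icc Pm Pp → f x t a c = 0) (ρ : ℝ) :
    Integrable (QplusF H f x t ρ) ∧
      ∫ y, QplusF H f x t ρ y
        = ∫ s, f x t ρ s * (AF H f x t s - vel H x t ρ s * lamF f x t s) := by
  have hK : IsCompact (Icc Pm Pp) := isCompact_Icc
  set φ : ℝ → ℝ → ℝ := fun s y => (vel H x t s y - vel H x t ρ s) * f x t ρ s * f x t s y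
  have hφ : Integrable (uncurry φ) (volume.prod volume) := by
    rw [← Measure.volume_eq_prod]
    refine Continuous.integrable_of_hasCompactSupport (by fun_prop)
      (HasCompactSupport.intro (hK.prod hK) fun ⟨s, y⟩ hsy => ?_)
    rcases not_and_or.mp (mem_prod.not.mp hsy) with h | h
    · simp [φ, hfK ρ s h]
    · simp [φ, hfK s y h]
  have hinner : ∀ s, ∫ y in Ioi s, φ s y
      = f x t ρ s * (AF H f x t s - vel H x t ρ s * lamF f x t s) := by
    intro s
    have hvf : Integrable fun y => vel H x t s y * f x t s y :=
      Continuous.integrable_of_hasCompactSupport (by fun_prop)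
        (HasCompactSupport.intro hK fun y hy => by simp [hfK s y hy])
    have hf' : Integrable fun y => f x t s y :=
      Continuous.integrable_of_hasCompactSupport (by fun_prop)
        (HasCompactSupport.intro hK fun y hy => hfK s y hy)
    have hsplit : ∀ y, φ s y
        = f x t ρ s * (vel H x t s y * f x t s y) - f x t ρ s * vel H x t ρ s * f x t s y :=
      fun y => by ring
    simp_rw [hsplit]
    rw [integral_sub ((hvf.const_mul _).integrableOn) ((hf'.const_mul _).integrableOn),
      integral_const_mul, integral_const_mul, AF, lamF]
    ring
  obtain ⟨hint, heq⟩ := integral_integral_Ioo_eq_setIntegral_Ioi hφ ρ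
  refine ⟨hint, ?_⟩
  rw [show QplusF H f x t ρ = fun y => ∫ s in Ioo ρ y, φ s y from rfl, heq]
  simp_rw [hinner]
  exact setIntegral_eq_integral_of_forall_compl_eq_zero fun s hs => by
    rw [hf0 ρ s (not_lt.mp hs), zero_mul]

theorem integral_mul_JF (hf : Continuous fun q : ℝ × ℝ => f x t q.1 q.2)
    (hv : Continuous fun q : ℝ × ℝ => vel H x t q.1 q.2)
    (hf0 : ∀ a c, c ≤ a → f x t a c = 0) (hfK : ∀ a c, c ∉ Icc Pm Pp → f x t a c = 0) (ρ : ℝ) :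
    Integrable (fun y => f x t ρ y * JF H f x t ρ y) ∧
      ∫ y, f x t ρ y * JF H f x t ρ y
        = ∫ s, f x t ρ s * (AF H f x t s - vel H x t ρ s * lamF f x t s) := by
  have hK : IsCompact (Icc Pm Pp) := isCompact_Icc
  have hlam : Continuous fun r => lamF f x t r := by
    rw [funext fun r => lamF_eq_integral (hf0 r)]
    exact continuous_integral_of_eq_zero hf hK hfK
  have hA : Continuous fun r => AF H f x t r := by
    rw [funext fun r => AF_eq_integral (hf0 r)]
    exact continuous_integral_of_eq_zero (hv.mul hf) hK fun r y hy => by simp [hfK r y hy]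
  have hΦ : Integrable fun s => f x t ρ s * (AF H f x t s - vel H x t ρ s * lamF f x t s) :=
    Continuous.integrable_of_hasCompactSupport (by fun_prop)
      (HasCompactSupport.intro hK fun s hs => by simp [hfK ρ s hs])
  have hvf : Integrable fun y => vel H x t ρ y * f x t ρ y :=
    Continuous.integrable_of_hasCompactSupport (by fun_prop)
      (HasCompactSupport.intro hK fun y hy => by simp [hfK ρ y hy])
  have hf' : Integrable (f x t ρ) :=
    Continuous.integrable_of_hasCompactSupport (by fun_prop) (HasCompactSupport.intro hK (hfK ρ))
  have hsplit : ∀ y, f x t ρ y * JF H f x t ρ y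
      = f x t ρ y * (AF H f x t y - vel H x t ρ y * lamF f x t y)
        - (AF H f x t ρ * f x t ρ y - lamF f x t ρ * (vel H x t ρ y * f x t ρ y)) := fun y => by
    rw [JF]; ring
  have hmoments : Integrable fun y =>
      AF H f x t ρ * f x t ρ y - lamF f x t ρ * (vel H x t ρ y * f x t ρ y) :=
    (hf'.const_mul _).sub (hvf.const_mul _)
  simp_rw [hsplit]
  refine ⟨hΦ.sub hmoments, ?_⟩
  rw [integral_sub hΦ hmoments,
    integral_sub (hf'.const_mul _) (hvf.const_mul _), integral_const_mul, integral_const_mul,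
    ← lamF_eq_integral (hf0 ρ), ← AF_eq_integral (hf0 ρ)]
  ring

theorem integral_QplusF_sub_mul_JF (hf : Continuous fun q : ℝ × ℝ => f x t q.1 q.2)
    (hv : Continuous fun q : ℝ × ℝ => vel H x t q.1 q.2)
    (hf0 : ∀ a c, c ≤ a → f x t a c = 0) (hfK : ∀ a c, c ∉ Icc Pm Pp → f x t a c = 0) (ρ : ℝ) :
    ∫ y, (QplusF H f x t ρ y - f x t ρ y * JF H f x t ρ y) = 0 := by
  obtain ⟨hQ_int, hQ⟩ := integral_QplusF hf hv hf0 hfK ρ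
  obtain ⟨hJ_int, hJ⟩ := integral_mul_JF hf hv hf0 hfK ρ
  rw [integral_sub hQ_int hJ_int, hQ, hJ, sub_self]

end Moments

theorem stmt6_general
    (H b : ℝ → ℝ → ℝ → ℝ) (f : ℝ → ℝ → ℝ → ℝ → ℝ) (Pm Pp : ℝ)
    (hH : ContDiff ℝ 2 (fun p : ℝ × ℝ × ℝ => H p.1 p.2.1 p.2.2))
    (hb : ContDiff ℝ 1 (fun p : ℝ × ℝ × ℝ => b p.1 p.2.1 p.2.2))
    (hf_C1 : ContDiff ℝ 1 (fun p : ℝ × ℝ × ℝ × ℝ => f p.1 p.2.1 p.2.2.1 p.2.2.2))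
    (hf_supp : ∀ x t rm rp, ¬ (Pm ≤ rm ∧ rm ≤ rp ∧ rp ≤ Pp) → f x t rm rp = 0)
    (hf_kin : SolvesKineticF H b f) :
    ∀ x t ρ : ℝ,
      deriv (fun s => lamF f x s ρ) t + betaF H b x t ρ * deriv (fun r => lamF f x t r) ρ
        = b x t ρ * deriv (fun r => AF H f x t r) ρ + deriv (fun z => AF H f z t ρ) x := by
  have hK : IsCompact (Icc Pm Pp) := isCompact_Icc
  have hfK : ∀ x t a c, c ∉ Icc Pm Pp → f x t a c = 0 := fun x t a c hc =>
    hf_supp x t a c fun ⟨ha, hac, hc'⟩ => hc ⟨ha.trans hac, hc'⟩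
  have hf0 : ∀ x t a c, c ≤ a → f x t a c = 0 := fun x t a c =>
    (hf_C1.continuous.comp (f := fun c : ℝ => (x, t, a, c)) (by fun_prop)
      ).eq_zero_of_le_of_forall_lt fun c hc => hf_supp x t a c fun h => (h.2.1.trans_lt hc).false
  have hv := contDiff_vel hH
  have hβ := contDiff_betaF hH hb
  intro x t ρ
  obtain ⟨hft_int, hft⟩ := hasDerivAt_integral_of_contDiff (g := fun s y => f x s ρ y)
    (by fun_prop) hK (fun s => hfK x s ρ) t
  obtain ⟨hfρ_int, hfρ⟩ := hasDerivAt_integral_of_contDiff (g := fun r y => f x t r y)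
    (by fun_prop) hK (fun r => hfK x t r) ρ
  obtain ⟨hvfρ_int, hvfρ⟩ := hasDerivAt_integral_of_contDiff
    (g := fun r y => vel H x t r y * f x t r y) (by fun_prop) hK
    (fun r y hy => by simp [hfK x t r y hy]) ρ
  obtain ⟨hvfx_int, hvfx⟩ := hasDerivAt_integral_of_contDiff
    (g := fun z y => vel H z t ρ y * f z t ρ y) (by fun_prop) hK
    (fun z y hy => by simp [hfK z t ρ y hy]) x
  obtain ⟨hC_int, hC⟩ := integral_deriv_eq_zero_of_hasCompactSupport
    (g := fun r => KF H b x t r ρ * f x t ρ r) (by unfold KF; fun_prop)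
    (HasCompactSupport.intro hK fun y hy => by simp [hfK x t ρ y hy])
  have hcoll := integral_QplusF_sub_mul_JF (by fun_prop) (by fun_prop) (hf0 x t) (hfK x t) ρ
  have hkin := congrArg (fun g : ℝ → ℝ => ∫ y, g y) (funext (hf_kin x t ρ))
  simp only [CplusF, CminusF] at hkin
  rw [integral_sub, integral_sub, integral_sub, integral_sub, integral_const_mul,
    integral_const_mul, hC, hcoll] at hkin
  · have hlam : ∀ x t r, lamF f x t r = ∫ y, f x t r y := fun x t r =>
      lamF_eq_integral (hf0 x t r)
    have hA : ∀ x t r, AF H f x t r = ∫ y, vel H x t r y * f x t r y := fun x t r =>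
      AF_eq_integral (hf0 x t r)
    simp only [hlam, hA]
    rw [hft.deriv, hfρ.deriv, hvfρ.deriv, hvfx.deriv]
    linarith
  all_goals fun_prop

/-- Lemma (2.9): the moments of a solution of the kinetic equation satisfy
`λ_t + β λ_ρ = b A_ρ + A_x`. -/
theorem stmt6
    (H b : ℝ → ℝ → ℝ → ℝ) (f : ℝ → ℝ → ℝ → ℝ → ℝ) (Pm Pp : ℝ)
    (hH : ContDiff ℝ 2 (fun p : ℝ × ℝ × ℝ => H p.1 p.2.1 p.2.2))
    (hb : ContDiff ℝ 1 (fun p : ℝ × ℝ × ℝ => b p.1 p.2.1 p.2.2))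
    (hf_C1 : ContDiff ℝ 1 (fun p : ℝ × ℝ × ℝ × ℝ => f p.1 p.2.1 p.2.2.1 p.2.2.2))
    (hf_nonneg : ∀ x t rm rp, 0 ≤ f x t rm rp)
    (hf_supp : ∀ x t rm rp, ¬ (Pm ≤ rm ∧ rm ≤ rp ∧ rp ≤ Pp) → f x t rm rp = 0)
    (hf_kin : SolvesKineticF H b f) :
    ∀ x t ρ : ℝ,
      deriv (fun s => lamF f x s ρ) t + betaF H b x t ρ * deriv (fun r => lamF f x t r) ρ
        = b x t ρ * deriv (fun r => AF H f x t r) ρ + deriv (fun z => AF H f z t ρ) x :=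
  stmt6_general H b f Pm Pp hH hb hf_C1 hf_supp hf_kin
end

section
/- Assume the kinetic setting below with f a nonnegative C¹ kernel vanishing unless P₋ ≤ ρ₋ ≤ ρ₊ ≤ P₊. Then the collision operator Q(f) = Q⁺(f) − Q⁻(f) has vanishing zeroth moment: for every (x,t,ρ), ∫_ρ^∞ Q(f)(x,t,ρ,ρ₊)dρ₊ = 0. -/
open MeasureTheory Set

/-! Write `g = f(x,t,·,·)` and `v = v(x,t,·,·)`. Fubini on the triangle `ρ < ρ★ < ρ₊` turns the
moment of the gain term into `∫_ρ^∞ g(ρ,s) (A(s) − v(ρ,s) λ(s)) ds`. Expanding `Jf`, the moment of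
the loss term is the same integral plus `A(ρ) λ(ρ) − λ(ρ) A(ρ) = 0`. All integrals converge because
`f` is bounded and supported in the square `[P₋,P₊]²`, on which the mean value theorem bounds `v`
by `sup |H_ρ|`. -/

theorem integrable_of_ne_zero_imp_mem_and_norm_le {α E : Type*} [MeasurableSpace α]
    [NormedAddCommGroup E] {μ : Measure α} {s : Set α} {φ : α → E} {C : ℝ}
    (hs : μ s ≠ ⊤) (hφ : AEStronglyMeasurable φ μ) (h : ∀ a, φ a ≠ 0 → a ∈ s ∧ ‖φ a‖ ≤ C) :
    Integrable φ μ := by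
  have hbound : ∀ a, ‖φ a‖ ≤ max C 0 := fun a => by
    by_cases ha : φ a = 0
    · simp [ha]
    · exact (h a ha).2.trans (le_max_left _ _)
  refine (Measure.integrableOn_of_bounded hs hφ (ae_of_all _ hbound))
    |>.integrable_of_forall_notMem_eq_zero fun a ha => ?_
  by_contra hne
  exact ha (h a hne).1

theorem abs_vel_le {H : ℝ → ℝ → ℝ → ℝ} {x t M : ℝ} {s : Set ℝ} (hs : Convex ℝ s)
    (hd : ∀ r ∈ s, DifferentiableAt ℝ (H x t) r) (hM : ∀ r ∈ s, |deriv (H x t) r| ≤ M)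
    {a c : ℝ} (ha : a ∈ s) (hc : c ∈ s) : |vel H x t a c| ≤ M := by
  unfold vel
  split_ifs with hac
  · exact hM a ha
  · have := hs.norm_image_sub_le_of_norm_deriv_le hd hM hc ha
    rw [abs_div, div_le_iff₀ (abs_pos.2 (sub_ne_zero.2 hac))]
    simpa using this

theorem measurable_vel {H : ℝ → ℝ → ℝ → ℝ} {x t : ℝ} (hH : Measurable (H x t)) :
    Measurable (Function.uncurry (vel H x t)) := by
  unfold vel
  refine Measurable.ite (measurableSet_eq_fun measurable_fst measurable_snd)
    ((measurable_deriv _).comp measurable_fst) ?_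
  exact ((hH.comp measurable_fst).sub (hH.comp measurable_snd)).div
    (measurable_fst.sub measurable_snd)

theorem exists_abs_vel_le {H : ℝ → ℝ → ℝ → ℝ} {x t : ℝ} (hH : ContDiff ℝ 1 (H x t)) (P Q : ℝ) :
    ∃ M, ∀ a ∈ Icc P Q, ∀ c ∈ Icc P Q, |vel H x t a c| ≤ M := by
  obtain ⟨M, hM⟩ := isCompact_Icc.exists_bound_of_continuousOn
    (hH.continuous_deriv le_rfl).continuousOn
  exact ⟨M, fun a ha c hc => abs_vel_le (convex_Icc P Q)
    (fun r _ => (hH.differentiable one_ne_zero).differentiableAt) hM ha hc⟩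

section CollisionMoment

variable (H : ℝ → ℝ → ℝ → ℝ) (f : ℝ → ℝ → ℝ → ℝ → ℝ) (x t ρ : ℝ)

noncomputable def gainKernel (c s : ℝ) : ℝ :=
  if ρ < s ∧ s < c then (vel H x t s c - vel H x t ρ s) * f x t ρ s * f x t s c else 0

theorem QplusF_eq_integral_gainKernel (c : ℝ) :
    QplusF H f x t ρ c = ∫ s, gainKernel H f x t ρ c s := by
  rw [QplusF, ← integral_indicator measurableSet_Ioo]
  congr 1 with s
  simp [gainKernel, indicator_apply]

theorem integral_gainKernel_fst {s : ℝ} (hg : Integrable (f x t s))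
    (hvg : Integrable fun c => vel H x t s c * f x t s c) :
    ∫ c, gainKernel H f x t ρ c s = (Ioi ρ).indicator
      (fun s => f x t ρ s * (AF H f x t s - vel H x t ρ s * lamF f x t s)) s := by
  by_cases hs : ρ < s
  · have hK : (gainKernel H f x t ρ · s) = (Ioi s).indicator fun c =>
        f x t ρ s * (vel H x t s c * f x t s c) - f x t ρ s * vel H x t ρ s * f x t s c := by
      ext c
      by_cases hc : s < c <;> simp [gainKernel, hs, hc]
      ring
    rw [hK, integral_indicator measurableSet_Ioi, integral_sub
      ((hvg.const_mul _).integrableOn) ((hg.const_mul _).integrableOn), integral_const_mul,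
      integral_const_mul, indicator_of_mem (mem_Ioi.2 hs), AF, lamF]
    ring
  · simp [gainKernel, hs]

theorem integrable_gainKernel
    (hK : Integrable fun p : ℝ × ℝ =>
      (vel H x t p.2 p.1 - vel H x t ρ p.2) * f x t ρ p.2 * f x t p.2 p.1) :
    Integrable (Function.uncurry (gainKernel H f x t ρ)) := by
  have hset : MeasurableSet {p : ℝ × ℝ | ρ < p.2 ∧ p.2 < p.1} :=
    (measurableSet_lt measurable_const measurable_snd).inter
      (measurableSet_lt measurable_snd measurable_fst)
  have hind : Function.uncurry (gainKernel H f x t ρ) =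
      {p : ℝ × ℝ | ρ < p.2 ∧ p.2 < p.1}.indicator fun p =>
        (vel H x t p.2 p.1 - vel H x t ρ p.2) * f x t ρ p.2 * f x t p.2 p.1 := by
    funext p
    simp only [indicator_apply]
    rfl
  rw [hind]
  exact hK.indicator hset

variable {H f x t ρ}

theorem integral_Ioi_QplusF (hg : ∀ a, Integrable (f x t a))
    (hvg : ∀ a, Integrable fun c => vel H x t a c * f x t a c)
    (hK : Integrable fun p : ℝ × ℝ =>
      (vel H x t p.2 p.1 - vel H x t ρ p.2) * f x t ρ p.2 * f x t p.2 p.1) :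
    IntegrableOn (QplusF H f x t ρ) (Ioi ρ) ∧
      IntegrableOn (fun s => f x t ρ s * (AF H f x t s - vel H x t ρ s * lamF f x t s)) (Ioi ρ) ∧
      ∫ c in Ioi ρ, QplusF H f x t ρ c =
        ∫ s in Ioi ρ, f x t ρ s * (AF H f x t s - vel H x t ρ s * lamF f x t s) := by
  have hKint := integrable_gainKernel H f x t ρ hK
  rw [Measure.volume_eq_prod] at hKint
  have hQ : QplusF H f x t ρ = fun c => ∫ s, gainKernel H f x t ρ c s :=
    funext (QplusF_eq_integral_gainKernel H f x t ρ)
  have hswap : (fun s => ∫ c, gainKernel H f x t ρ c s) = (Ioi ρ).indicator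
      fun s => f x t ρ s * (AF H f x t s - vel H x t ρ s * lamF f x t s) :=
    funext fun s => integral_gainKernel_fst H f x t ρ (hg s) (hvg s)
  have hQ_zero : ∀ c ∉ Ioi ρ, QplusF H f x t ρ c = 0 := fun c hc => by
    rw [QplusF, Ioo_eq_empty (fun h => hc h), Measure.restrict_empty, integral_zero_measure]
  refine ⟨(hQ ▸ hKint.integral_prod_left).integrableOn, ?_, ?_⟩
  · rw [← integrable_indicator_iff measurableSet_Ioi, ← hswap]
    exact hKint.integral_prod_right
  · rw [setIntegral_eq_integral_of_forall_compl_eq_zero hQ_zero,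
      ← integral_indicator measurableSet_Ioi, ← hswap, hQ]
    exact integral_integral_swap hKint

theorem integral_Ioi_AF_mul_sub_lamF_mul (hg : Integrable (f x t ρ))
    (hvg : Integrable fun c => vel H x t ρ c * f x t ρ c) :
    ∫ c in Ioi ρ, (AF H f x t ρ * f x t ρ c - lamF f x t ρ * (vel H x t ρ c * f x t ρ c)) = 0 := by
  rw [integral_sub (hg.const_mul _).integrableOn (hvg.const_mul _).integrableOn,
    integral_const_mul, integral_const_mul, AF, lamF]
  ring

theorem integral_Ioi_QplusF_sub_mul_JF (hg : ∀ a, Integrable (f x t a))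
    (hvg : ∀ a, Integrable fun c => vel H x t a c * f x t a c)
    (hK : Integrable fun p : ℝ × ℝ =>
      (vel H x t p.2 p.1 - vel H x t ρ p.2) * f x t ρ p.2 * f x t p.2 p.1) :
    ∫ c in Ioi ρ, (QplusF H f x t ρ c - f x t ρ c * JF H f x t ρ c) = 0 := by
  obtain ⟨hQ_int, hφ_int, hQ_eq⟩ := integral_Ioi_QplusF hg hvg hK
  have hcorr_int : IntegrableOn (fun c =>
      AF H f x t ρ * f x t ρ c - lamF f x t ρ * (vel H x t ρ c * f x t ρ c)) (Ioi ρ) :=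
    (((hg ρ).const_mul _).sub ((hvg ρ).const_mul _)).integrableOn
  have hsplit : ∀ c, QplusF H f x t ρ c - f x t ρ c * JF H f x t ρ c =
      (QplusF H f x t ρ c - f x t ρ c * (AF H f x t c - vel H x t ρ c * lamF f x t c)) +
        (AF H f x t ρ * f x t ρ c - lamF f x t ρ * (vel H x t ρ c * f x t ρ c)) := fun c => by
    rw [JF]; ring
  simp_rw [hsplit]
  rw [integral_add ?_ hcorr_int, integral_sub hQ_int hφ_int, hQ_eq, sub_self,
    integral_Ioi_AF_mul_sub_lamF_mul (hg ρ) (hvg ρ), add_zero]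
  exact hQ_int.sub hφ_int

end CollisionMoment

section BoundedKernels

variable {v g : ℝ → ℝ → ℝ} {P Q C M : ℝ}

theorem integrable_slice_of_abs_le (hg : Measurable (Function.uncurry g))
    (hgC : ∀ a c, |g a c| ≤ C) (hsupp : ∀ a c, g a c ≠ 0 → c ∈ Icc P Q) (a : ℝ) :
    Integrable (g a) :=
  integrable_of_ne_zero_imp_mem_and_norm_le measure_Icc_lt_top.ne
    (hg.comp measurable_prodMk_left).aestronglyMeasurable fun c hc => ⟨hsupp a c hc, hgC a c⟩

theorem integrable_mul_slice_of_abs_le (hv : Measurable (Function.uncurry v))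
    (hg : Measurable (Function.uncurry g)) (hgC : ∀ a c, |g a c| ≤ C)
    (hvM : ∀ a c, g a c ≠ 0 → |v a c| ≤ M) (hsupp : ∀ a c, g a c ≠ 0 → c ∈ Icc P Q) (a : ℝ) :
    Integrable fun c => v a c * g a c := by
  refine integrable_of_ne_zero_imp_mem_and_norm_le (s := Icc P Q) (C := M * C)
    measure_Icc_lt_top.ne
    ((hv.comp measurable_prodMk_left).mul (hg.comp measurable_prodMk_left)).aestronglyMeasurable
    fun c hc => ?_
  have hgc := right_ne_zero_of_mul hc
  refine ⟨hsupp a c hgc, ?_⟩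
  rw [Real.norm_eq_abs, abs_mul]
  exact mul_le_mul (hvM a c hgc) (hgC a c) (abs_nonneg _) ((abs_nonneg _).trans (hvM a c hgc))

theorem integrable_gain_integrand_of_abs_le (hv : Measurable (Function.uncurry v))
    (hg : Measurable (Function.uncurry g)) (hgC : ∀ a c, |g a c| ≤ C)
    (hvM : ∀ a c, g a c ≠ 0 → |v a c| ≤ M) (hsupp : ∀ a c, g a c ≠ 0 → c ∈ Icc P Q) (ρ : ℝ) :
    Integrable fun p : ℝ × ℝ => (v p.2 p.1 - v ρ p.2) * g ρ p.2 * g p.2 p.1 := by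
  have hmeas : Measurable fun p : ℝ × ℝ => (v p.2 p.1 - v ρ p.2) * g ρ p.2 * g p.2 p.1 :=
    (((hv.comp measurable_swap).sub (hv.comp (measurable_const.prodMk measurable_snd))).mul
      (hg.comp (measurable_const.prodMk measurable_snd))).mul (hg.comp measurable_swap)
  have hfin : volume (Icc P Q ×ˢ Icc P Q) ≠ ⊤ := by
    rw [Measure.volume_eq_prod, Measure.prod_prod]
    exact ENNReal.mul_ne_top measure_Icc_lt_top.ne measure_Icc_lt_top.ne
  refine integrable_of_ne_zero_imp_mem_and_norm_le (C := (M + M) * C * C) hfin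
    hmeas.aestronglyMeasurable fun ⟨c, s⟩ hcs => ?_
  have hρs : g ρ s ≠ 0 := right_ne_zero_of_mul (left_ne_zero_of_mul hcs)
  have hsc : g s c ≠ 0 := right_ne_zero_of_mul hcs
  have hM : 0 ≤ M := (abs_nonneg _).trans (hvM s c hsc)
  refine ⟨⟨hsupp s c hsc, hsupp ρ s hρs⟩, ?_⟩
  have hdiff : |v s c - v ρ s| ≤ M + M :=
    (abs_sub _ _).trans (add_le_add (hvM s c hsc) (hvM ρ s hρs))
  rw [Real.norm_eq_abs, abs_mul, abs_mul]
  exact mul_le_mul (mul_le_mul hdiff (hgC ρ s) (abs_nonneg _) (by linarith)) (hgC s c)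
    (abs_nonneg _) (by have := (abs_nonneg _).trans (hgC ρ s); positivity)

end BoundedKernels

theorem stmt8_general
    (H : ℝ → ℝ → ℝ → ℝ) (f : ℝ → ℝ → ℝ → ℝ → ℝ) (Pm Pp : ℝ)
    (hH : ContDiff ℝ 2 (fun p : ℝ × ℝ × ℝ => H p.1 p.2.1 p.2.2))
    (hf_C1 : ContDiff ℝ 1 (fun p : ℝ × ℝ × ℝ × ℝ => f p.1 p.2.1 p.2.2.1 p.2.2.2))
    (hf_supp : ∀ x t rm rp, ¬ (Pm ≤ rm ∧ rm ≤ rp ∧ rp ≤ Pp) → f x t rm rp = 0) :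
    ∀ x t ρ : ℝ,
      ∫ rp in Ioi ρ, (QplusF H f x t ρ rp - f x t ρ rp * JF H f x t ρ rp) = 0 := by
  intro x t ρ
  have hsupp : ∀ a c, f x t a c ≠ 0 → a ∈ Icc Pm Pp ∧ c ∈ Icc Pm Pp := fun a c h => by
    obtain ⟨hPa, hac, hcP⟩ := not_not.1 (mt (hf_supp x t a c) h)
    exact ⟨⟨hPa, hac.trans hcP⟩, ⟨hPa.trans hac, hcP⟩⟩
  have hHxt : ContDiff ℝ 1 (H x t) :=
    (hH.comp (contDiff_const.prodMk (contDiff_const.prodMk contDiff_id))).of_le one_le_two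
  have hg : Continuous (Function.uncurry (f x t)) :=
    hf_C1.continuous.comp (continuous_const.prodMk (continuous_const.prodMk
      (continuous_fst.prodMk continuous_snd)))
  have hcpt : HasCompactSupport (Function.uncurry (f x t)) :=
    .intro (isCompact_Icc.prod isCompact_Icc) fun p hp =>
      by_contra fun h => hp (mk_mem_prod (hsupp p.1 p.2 h).1 (hsupp p.1 p.2 h).2)
  obtain ⟨C, hgC⟩ := hcpt.exists_bound_of_continuous hg
  obtain ⟨M, hM⟩ := exists_abs_vel_le hHxt Pm Pp
  have hvM : ∀ a c, f x t a c ≠ 0 → |vel H x t a c| ≤ M := fun a c h =>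
    hM a (hsupp a c h).1 c (hsupp a c h).2
  have hgC' : ∀ a c, |f x t a c| ≤ C := fun a c => hgC (a, c)
  have hsupp₂ : ∀ a c, f x t a c ≠ 0 → c ∈ Icc Pm Pp := fun a c h => (hsupp a c h).2
  have hv := measurable_vel hHxt.continuous.measurable
  exact integral_Ioi_QplusF_sub_mul_JF (integrable_slice_of_abs_le hg.measurable hgC' hsupp₂)
    (integrable_mul_slice_of_abs_le hv hg.measurable hgC' hvM hsupp₂)
    (integrable_gain_integrand_of_abs_le hv hg.measurable hgC' hvM hsupp₂ ρ)

/-- Identity (2.12): the collision operator `Q(f) = Q⁺(f) − f·Jf` has vanishing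
zeroth moment. -/
theorem stmt8
    (H : ℝ → ℝ → ℝ → ℝ) (f : ℝ → ℝ → ℝ → ℝ → ℝ) (Pm Pp : ℝ)
    (hH : ContDiff ℝ 2 (fun p : ℝ × ℝ × ℝ => H p.1 p.2.1 p.2.2))
    (hf_C1 : ContDiff ℝ 1 (fun p : ℝ × ℝ × ℝ × ℝ => f p.1 p.2.1 p.2.2.1 p.2.2.2))
    (hf_nonneg : ∀ x t rm rp, 0 ≤ f x t rm rp)
    (hf_supp : ∀ x t rm rp, ¬ (Pm ≤ rm ∧ rm ≤ rp ∧ rp ≤ Pp) → f x t rm rp = 0) :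
    ∀ x t ρ : ℝ,
      ∫ rp in Ioi ρ, (QplusF H f x t ρ rp - f x t ρ rp * JF H f x t ρ rp) = 0 :=
  stmt8_general H f Pm Pp hH hf_C1 hf_supp
end

section
/- Let L(x,θ,v) be C² on ℝ×[s,T]×ℝ, strictly concave in v, with −c₀+c₂v² ≤ −L(x,θ,v) ≤ c₀+c₁v² for positive constants c₀,c₁,c₂. Fix s < t ≤ T, y ∈ ℝ and x₁ < x₂. For i = 1,2 let ξⁱ ∈ C²([s,t]) maximize the action ξ ↦ ∫_s^t L(ξ(θ),θ,ξ̇(θ))dθ over all absolutely continuous paths with square-integrable derivative satisfying ξ(s) = y and ξ(t) = xᵢ; assume every such maximizer is C² and satisfies the Euler–Lagrange equation d/dθ[L_v(ξ(θ),θ,ξ̇(θ))] = L_x(ξ(θ),θ,ξ̇(θ)), whose solutions are uniquely determined by the data (ξ(θ₀), ξ̇(θ₀)) at any θ₀. Then ξ¹(θ) < ξ²(θ) for every θ ∈ (s,t]. -/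
open MeasureTheory Set

/-- The action `∫_s^t L(ξ(θ),θ,ξ'(θ)) dθ` of a path `ξ` with velocity `ξ'`. -/
noncomputable def pathAction (L : ℝ → ℝ → ℝ → ℝ) (s t : ℝ) (ξ ξ' : ℝ → ℝ) : ℝ :=
  ∫ θ in s..t, L (ξ θ) θ (ξ' θ)

/-- An admissible path from `(y,s)` to `(x,t)`: absolutely continuous with
square-integrable derivative `ξ'`, i.e. `ξ(θ) = y + ∫_s^θ ξ'` on `[s,t]`. -/
def AdmissiblePath (s t y x : ℝ) (ξ ξ' : ℝ → ℝ) : Prop :=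
  ξ s = y ∧ ξ t = x ∧
  (∀ θ ∈ Icc s t, ξ θ = y + ∫ u in s..θ, ξ' u) ∧
  IntegrableOn ξ' (Icc s t) ∧
  IntegrableOn (fun u => (ξ' u) ^ 2) (Icc s t)

/-- `ξ` is twice continuously differentiable on `[s,t]`. -/
def C2On (s t : ℝ) (ξ : ℝ → ℝ) : Prop :=
  (∀ θ ∈ Icc s t, HasDerivAt ξ (deriv ξ θ) θ) ∧
  (∀ θ ∈ Icc s t, HasDerivAt (deriv ξ) (deriv (deriv ξ) θ) θ) ∧
  ContinuousOn (deriv (deriv ξ)) (Icc s t)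

/-- The Euler--Lagrange equation
`d/dθ [L_v(ξ(θ),θ,ξ̇(θ))] = L_x(ξ(θ),θ,ξ̇(θ))` on `[s,t]`. -/
def SatisfiesEL (L : ℝ → ℝ → ℝ → ℝ) (s t : ℝ) (ξ : ℝ → ℝ) : Prop :=
  ∀ θ ∈ Icc s t,
    HasDerivAt (fun u => deriv (fun w => L (ξ u) u w) (deriv ξ u))
      (deriv (fun a => L a θ (deriv ξ θ)) (ξ θ)) θ

/-- `ξ` (with velocity `ξ'`) maximizes the action among admissible paths from
`(y,s)` to `(x,t)`. -/
def IsMaximizer (L : ℝ → ℝ → ℝ → ℝ) (s t y x : ℝ) (ξ ξ' : ℝ → ℝ) : Prop :=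
  AdmissiblePath s t y x ξ ξ' ∧
  ∀ η η' : ℝ → ℝ, AdmissiblePath s t y x η η' →
    pathAction L s t η η' ≤ pathAction L s t ξ ξ'

/-!
If `ξ¹(θ) ≥ ξ²(θ)` for some `θ ∈ (s,t]`, then since `ξ¹(t) = x₁ < x₂ = ξ²(t)` the two paths
meet at some `θ₀ ∈ (s,t)`. Exchanging their tails at `θ₀` produces admissible paths to `x₂`
and to `x₁` whose actions add up to the sum of the two maximal actions, so both are
maximizers. The maximizer `ξ¹` on `[s,θ₀]` followed by `ξ²` on `[θ₀,t]` is therefore `C²`,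
which forces `ξ̇¹(θ₀) = ξ̇²(θ₀)`; uniqueness for the Euler–Lagrange equation then gives
`ξ¹ = ξ²`, contradicting `x₁ < x₂`.
-/

noncomputable def pathGlue (θ₀ : ℝ) (f g : ℝ → ℝ) : ℝ → ℝ := fun u => if u ≤ θ₀ then f u else g u

section PathGlue

variable {θ₀ : ℝ} {f g : ℝ → ℝ}

theorem pathGlue_of_le {u : ℝ} (hu : u ≤ θ₀) : pathGlue θ₀ f g u = f u := if_pos hu

theorem pathGlue_of_lt {u : ℝ} (hu : θ₀ < u) : pathGlue θ₀ f g u = g u := if_neg hu.not_ge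

theorem pathGlue_sq (f g : ℝ → ℝ) :
    (fun u => pathGlue θ₀ f g u ^ 2) = pathGlue θ₀ (fun u => f u ^ 2) (fun u => g u ^ 2) :=
  funext fun _ => apply_ite (· ^ 2) _ _ _

theorem lagrangian_pathGlue (L : ℝ → ℝ → ℝ → ℝ) (f f' g g' : ℝ → ℝ) :
    (fun u => L (pathGlue θ₀ f g u) u (pathGlue θ₀ f' g' u)) =
      pathGlue θ₀ (fun u => L (f u) u (f' u)) (fun u => L (g u) u (g' u)) := by
  funext u
  unfold pathGlue
  split_ifs <;> rfl

theorem integrableOn_pathGlue {s t : ℝ} (hf : IntegrableOn f (Icc s θ₀))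
    (hg : IntegrableOn g (Icc θ₀ t)) : IntegrableOn (pathGlue θ₀ f g) (Icc s t) := by
  have hf' : IntegrableOn (pathGlue θ₀ f g) (Icc s θ₀) :=
    hf.congr_fun (fun u hu => (pathGlue_of_le hu.2).symm) measurableSet_Icc
  have hg' : IntegrableOn (pathGlue θ₀ f g) (Ioc θ₀ t) :=
    (hg.mono_set Ioc_subset_Icc_self).congr_fun (fun u hu => (pathGlue_of_lt hu.1).symm)
      measurableSet_Ioc
  refine (hf'.union hg').mono_set fun u hu => ?_
  rcases le_or_gt u θ₀ with h | h
  exacts [Or.inl ⟨hu.1, h⟩, Or.inr ⟨h, hu.2⟩]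

theorem integral_pathGlue {s t : ℝ} (hs : s ≤ θ₀) (ht : θ₀ ≤ t)
    (hf : IntervalIntegrable f volume s θ₀) (hg : IntervalIntegrable g volume θ₀ t) :
    ∫ u in s..t, pathGlue θ₀ f g u = (∫ u in s..θ₀, f u) + ∫ u in θ₀..t, g u := by
  have hleft : EqOn (pathGlue θ₀ f g) f (uIcc s θ₀) := fun u hu =>
    pathGlue_of_le (by rw [uIcc_of_le hs] at hu; exact hu.2)
  have hright : EqOn (pathGlue θ₀ f g) g (uIoc θ₀ t) := fun u hu =>
    pathGlue_of_lt (by rw [uIoc_of_le ht] at hu; exact hu.1)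
  rw [← intervalIntegral.integral_add_adjacent_intervals
      (hf.congr (hleft.symm.mono Ioc_subset_Icc_self)) (hg.congr hright.symm),
    intervalIntegral.integral_congr hleft,
    intervalIntegral.integral_congr_ae (Filter.Eventually.of_forall hright)]

end PathGlue

theorem MeasureTheory.IntegrableOn.intervalIntegrable_of_mem_Icc {f : ℝ → ℝ} {s t a b : ℝ}
    (hf : IntegrableOn f (Icc s t)) (ha : a ∈ Icc s t) (hb : b ∈ Icc s t) :
    IntervalIntegrable f volume a b :=
  (hf.mono_set (uIcc_subset_Icc ha hb)).intervalIntegrable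

theorem AdmissiblePath.pathGlue {s t θ₀ y₁ x₁ y₂ x₂ : ℝ} {f f' g g' : ℝ → ℝ}
    (hf : AdmissiblePath s t y₁ x₁ f f') (hg : AdmissiblePath s t y₂ x₂ g g')
    (hθ₀ : θ₀ ∈ Icc s t) (hfg : f θ₀ = g θ₀) :
    AdmissiblePath s t y₁ x₂ (pathGlue θ₀ f g) (pathGlue θ₀ f' g') := by
  obtain ⟨hfs, -, hfrep, hfi, hfi2⟩ := hf
  obtain ⟨-, hgt, hgrep, hgi, hgi2⟩ := hg
  have hsmem : s ∈ Icc s t := left_mem_Icc.2 (hθ₀.1.trans hθ₀.2)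
  refine ⟨by rw [pathGlue_of_le hθ₀.1, hfs], ?_, fun θ hθ => ?_,
    integrableOn_pathGlue (hfi.mono_set (Icc_subset_Icc le_rfl hθ₀.2))
      (hgi.mono_set (Icc_subset_Icc hθ₀.1 le_rfl)), ?_⟩
  · rcases hθ₀.2.eq_or_lt with h | h
    · rw [pathGlue_of_le h.ge, ← h, hfg, h, hgt]
    · rw [pathGlue_of_lt h, hgt]
  · rcases le_or_gt θ θ₀ with h | h
    · rw [pathGlue_of_le h, hfrep θ hθ, intervalIntegral.integral_congr fun u hu =>
        pathGlue_of_le (θ₀ := θ₀) (f := f') (g := g') ((uIcc_of_le hθ.1 ▸ hu).2.trans h)]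
    · have hgi' : ∀ b ∈ Icc s t, IntervalIntegrable g' volume s b :=
        fun b hb => hgi.intervalIntegrable_of_mem_Icc hsmem hb
      rw [pathGlue_of_lt h, integral_pathGlue hθ₀.1 h.le
          (hfi.intervalIntegrable_of_mem_Icc hsmem hθ₀) (hgi.intervalIntegrable_of_mem_Icc hθ₀ hθ),
        ← intervalIntegral.integral_interval_sub_left (hgi' θ hθ) (hgi' θ₀ hθ₀)]
      linarith [hgrep θ hθ, hgrep θ₀ hθ₀, hfrep θ₀ hθ₀]
  · rw [pathGlue_sq]
    exact integrableOn_pathGlue (hfi2.mono_set (Icc_subset_Icc le_rfl hθ₀.2))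
      (hgi2.mono_set (Icc_subset_Icc hθ₀.1 le_rfl))

theorem pathAction_pathGlue_add {L : ℝ → ℝ → ℝ → ℝ} {s t θ₀ : ℝ} {f f' g g' : ℝ → ℝ}
    (hθ₀ : θ₀ ∈ Icc s t) (hf : IntegrableOn (fun u => L (f u) u (f' u)) (Icc s t))
    (hg : IntegrableOn (fun u => L (g u) u (g' u)) (Icc s t)) :
    pathAction L s t (pathGlue θ₀ f g) (pathGlue θ₀ f' g') +
        pathAction L s t (pathGlue θ₀ g f) (pathGlue θ₀ g' f') =
      pathAction L s t f f' + pathAction L s t g g' := by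
  have hsmem : s ∈ Icc s t := left_mem_Icc.2 (hθ₀.1.trans hθ₀.2)
  have htmem : t ∈ Icc s t := right_mem_Icc.2 (hθ₀.1.trans hθ₀.2)
  have hf₁ := hf.intervalIntegrable_of_mem_Icc hsmem hθ₀
  have hf₂ := hf.intervalIntegrable_of_mem_Icc hθ₀ htmem
  have hg₁ := hg.intervalIntegrable_of_mem_Icc hsmem hθ₀
  have hg₂ := hg.intervalIntegrable_of_mem_Icc hθ₀ htmem
  simp only [pathAction]
  rw [lagrangian_pathGlue, lagrangian_pathGlue, integral_pathGlue hθ₀.1 hθ₀.2 hf₁ hg₂,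
    integral_pathGlue hθ₀.1 hθ₀.2 hg₁ hf₂,
    ← intervalIntegral.integral_add_adjacent_intervals hf₁ hf₂,
    ← intervalIntegral.integral_add_adjacent_intervals hg₁ hg₂]
  ring

/-- The tails exchanged the other way give a competitor for `ξ₁`, and the actions of the two
glued paths add up to those of `ξ₁` and `ξ₂`. -/
theorem IsMaximizer.pathGlue {L : ℝ → ℝ → ℝ → ℝ} {s t θ₀ y x₁ x₂ : ℝ}
    {ξ₁ ξ₁' ξ₂ ξ₂' : ℝ → ℝ} (h₁ : IsMaximizer L s t y x₁ ξ₁ ξ₁')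
    (h₂ : IsMaximizer L s t y x₂ ξ₂ ξ₂') (hθ₀ : θ₀ ∈ Icc s t) (hξ : ξ₁ θ₀ = ξ₂ θ₀)
    (hL₁ : IntegrableOn (fun u => L (ξ₁ u) u (ξ₁' u)) (Icc s t))
    (hL₂ : IntegrableOn (fun u => L (ξ₂ u) u (ξ₂' u)) (Icc s t)) :
    IsMaximizer L s t y x₂ (pathGlue θ₀ ξ₁ ξ₂) (pathGlue θ₀ ξ₁' ξ₂') := by
  have hswap := h₁.2 _ _ (h₂.1.pathGlue h₁.1 hθ₀ hξ.symm)
  have hsum := pathAction_pathGlue_add (θ₀ := θ₀) hθ₀ hL₁ hL₂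
  exact ⟨h₁.1.pathGlue h₂.1 hθ₀ hξ, fun η η' hη => by linarith [h₂.2 η η' hη]⟩

theorem HasDerivAt.eq_of_eqOn_pathGlue {ζ f g : ℝ → ℝ} {ζ' f' g' s t θ₀ : ℝ}
    (hθ₀ : θ₀ ∈ Ioo s t) (hfg : f θ₀ = g θ₀) (hζ : EqOn ζ (pathGlue θ₀ f g) (Icc s t))
    (hζ' : HasDerivAt ζ ζ' θ₀) (hf : HasDerivAt f f' θ₀) (hg : HasDerivAt g g' θ₀) :
    f' = g' := by
  have hleft : EqOn ζ f (Icc s θ₀) := fun u hu =>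
    (hζ ⟨hu.1, hu.2.trans hθ₀.2.le⟩).trans (pathGlue_of_le hu.2)
  have hright : EqOn ζ g (Icc θ₀ t) := fun u hu => by
    rw [hζ ⟨hθ₀.1.le.trans hu.1, hu.2⟩]
    rcases hu.1.eq_or_lt with h | h
    · rw [← h, pathGlue_of_le le_rfl, hfg]
    · exact pathGlue_of_lt h
  have h₁ := (uniqueDiffOn_Icc hθ₀.1 θ₀ (right_mem_Icc.2 hθ₀.1.le)).eq_deriv _
    hζ'.hasDerivWithinAt (hf.hasDerivWithinAt.congr hleft (hleft (right_mem_Icc.2 hθ₀.1.le)))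
  have h₂ := (uniqueDiffOn_Icc hθ₀.2 θ₀ (left_mem_Icc.2 hθ₀.2.le)).eq_deriv _
    hζ'.hasDerivWithinAt (hg.hasDerivWithinAt.congr hright (hright (left_mem_Icc.2 hθ₀.2.le)))
  exact h₁.symm.trans h₂

section C2On

variable {s t : ℝ} {ξ : ℝ → ℝ}

theorem C2On.continuousOn (hξ : C2On s t ξ) : ContinuousOn ξ (Icc s t) :=
  fun θ hθ => (hξ.1 θ hθ).continuousAt.continuousWithinAt

theorem C2On.continuousOn_deriv (hξ : C2On s t ξ) : ContinuousOn (deriv ξ) (Icc s t) :=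
  fun θ hθ => (hξ.2.1 θ hθ).continuousAt.continuousWithinAt

theorem C2On.integrableOn_lagrangian {L : ℝ → ℝ → ℝ → ℝ}
    (hL : Continuous fun p : ℝ × ℝ × ℝ => L p.1 p.2.1 p.2.2) (hξ : C2On s t ξ) :
    IntegrableOn (fun u => L (ξ u) u (deriv ξ u)) (Icc s t) :=
  (hL.comp_continuousOn
    (hξ.continuousOn.prodMk (continuousOn_id.prodMk hξ.continuousOn_deriv))).integrableOn_Icc

end C2On

theorem stmt10_general
    (L : ℝ → ℝ → ℝ → ℝ) (s t y x1 x2 : ℝ)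
    (hst : s < t)
    (hL : ContDiff ℝ 2 (fun p : ℝ × ℝ × ℝ => L p.1 p.2.1 p.2.2))
    (hx : x1 < x2)
    (ξ1 ξ2 : ℝ → ℝ)
    (hξ1C2 : C2On s t ξ1) (hξ2C2 : C2On s t ξ2)
    (hmax1 : IsMaximizer L s t y x1 ξ1 (deriv ξ1))
    (hmax2 : IsMaximizer L s t y x2 ξ2 (deriv ξ2))
    (hEL1 : SatisfiesEL L s t ξ1) (hEL2 : SatisfiesEL L s t ξ2)
    (hreg : ∀ y' x' : ℝ, ∀ ξ ξ' : ℝ → ℝ, AdmissiblePath s t y' x' ξ ξ' →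
      (∀ η η', AdmissiblePath s t y' x' η η' →
        pathAction L s t η η' ≤ pathAction L s t ξ ξ') →
      ∃ ζ : ℝ → ℝ, C2On s t ζ ∧ SatisfiesEL L s t ζ ∧ ∀ θ ∈ Icc s t, ζ θ = ξ θ)
    (huniq : ∀ ζ1 ζ2 : ℝ → ℝ, C2On s t ζ1 → C2On s t ζ2 →
      SatisfiesEL L s t ζ1 → SatisfiesEL L s t ζ2 →
      ∀ θ0 ∈ Icc s t, ζ1 θ0 = ζ2 θ0 → deriv ζ1 θ0 = deriv ζ2 θ0 →
      ∀ θ ∈ Icc s t, ζ1 θ = ζ2 θ) :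
    ∀ θ ∈ Ioc s t, ξ1 θ < ξ2 θ := by
  intro θ hθ
  by_contra! hle
  have htmem : t ∈ Icc s t := right_mem_Icc.2 hst.le
  obtain ⟨θ₀, hθ₀, hcross⟩ : ∃ θ₀ ∈ Ico θ t, ξ2 θ₀ - ξ1 θ₀ = 0 :=
    intermediate_value_Ico hθ.2 ((hξ2C2.continuousOn.sub hξ1C2.continuousOn).mono
      (Icc_subset_Icc hθ.1.le le_rfl)) ⟨by simp only [Pi.sub_apply]; linarith,
        by simp only [Pi.sub_apply, hmax1.1.2.1, hmax2.1.2.1]; linarith⟩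
  replace hcross : ξ1 θ₀ = ξ2 θ₀ := (sub_eq_zero.1 hcross).symm
  have hθ₀I : θ₀ ∈ Ioo s t := ⟨hθ.1.trans_le hθ₀.1, hθ₀.2⟩
  have hθ₀mem : θ₀ ∈ Icc s t := Ioo_subset_Icc_self hθ₀I
  have hglue := hmax1.pathGlue hmax2 hθ₀mem hcross
    (hξ1C2.integrableOn_lagrangian hL.continuous) (hξ2C2.integrableOn_lagrangian hL.continuous)
  obtain ⟨ζ, hζ, -, hζeq⟩ := hreg y x2 _ _ hglue.1 hglue.2
  have hderiv : deriv ξ1 θ₀ = deriv ξ2 θ₀ :=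
    (hζ.1 θ₀ hθ₀mem).eq_of_eqOn_pathGlue hθ₀I hcross hζeq (hξ1C2.1 θ₀ hθ₀mem) (hξ2C2.1 θ₀ hθ₀mem)
  have hend := huniq ξ1 ξ2 hξ1C2 hξ2C2 hEL1 hEL2 θ₀ hθ₀mem hcross hderiv t htmem
  rw [hmax1.1.2.1, hmax2.1.2.1] at hend
  exact hx.ne hend

/-- Proposition 5.2(i): maximizing paths with the same starting point `(y,s)`
and ordered endpoints `x₁ < x₂` stay strictly ordered on `(s,t]`. -/
theorem stmt10
    (L : ℝ → ℝ → ℝ → ℝ) (s t T c0 c1 c2 y x1 x2 : ℝ)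
    (hst : s < t) (htT : t ≤ T)
    (hc0 : 0 < c0) (hc1 : 0 < c1) (hc2 : 0 < c2)
    (hL : ContDiff ℝ 2 (fun p : ℝ × ℝ × ℝ => L p.1 p.2.1 p.2.2))
    (hconc : ∀ a θ, StrictConcaveOn ℝ univ (fun w => L a θ w))
    (hgrowth : ∀ a θ w, -c0 + c2 * w ^ 2 ≤ -(L a θ w) ∧ -(L a θ w) ≤ c0 + c1 * w ^ 2)
    (hx : x1 < x2)
    (ξ1 ξ2 : ℝ → ℝ)
    (hξ1C2 : C2On s t ξ1) (hξ2C2 : C2On s t ξ2)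
    (hmax1 : IsMaximizer L s t y x1 ξ1 (deriv ξ1))
    (hmax2 : IsMaximizer L s t y x2 ξ2 (deriv ξ2))
    (hEL1 : SatisfiesEL L s t ξ1) (hEL2 : SatisfiesEL L s t ξ2)
    (hreg : ∀ y' x' : ℝ, ∀ ξ ξ' : ℝ → ℝ, AdmissiblePath s t y' x' ξ ξ' →
      (∀ η η', AdmissiblePath s t y' x' η η' →
        pathAction L s t η η' ≤ pathAction L s t ξ ξ') →
      ∃ ζ : ℝ → ℝ, C2On s t ζ ∧ SatisfiesEL L s t ζ ∧ ∀ θ ∈ Icc s t, ζ θ = ξ θ)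
    (huniq : ∀ ζ1 ζ2 : ℝ → ℝ, C2On s t ζ1 → C2On s t ζ2 →
      SatisfiesEL L s t ζ1 → SatisfiesEL L s t ζ2 →
      ∀ θ0 ∈ Icc s t, ζ1 θ0 = ζ2 θ0 → deriv ζ1 θ0 = deriv ζ2 θ0 →
      ∀ θ ∈ Icc s t, ζ1 θ = ζ2 θ) :
    ∀ θ ∈ Ioc s t, ξ1 θ < ξ2 θ :=
  stmt10_general L s t y x1 x2 hst hL hx ξ1 ξ2 hξ1C2 hξ2C2 hmax1 hmax2 hEL1 hEL2 hreg huniq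
end

section
/- Let L(x,θ,v) be C² on ℝ×[s,T]×ℝ, strictly concave in v, and suppose positive constants c₀,c₁,c₂ exist with: −c₀+c₂v² ≤ −L ≤ c₀+c₁v², −c₀+c₂|v| ≤ |L_v| ≤ c₀+c₁|v|, and |L_{xv}| + |L_{xx}| ≤ c₁; let H(x,θ,p) := sup_v(L(x,θ,v) − pv) be the associated Hamiltonian and assume |H_x| + |H_{xρ}| ≤ c₁ and −c₀+c₂|H_ρ(x,θ,ρ)| ≤ |ρ| ≤ c₀+c₁|H_ρ(x,θ,ρ)|. Then for every s < T and δ ∈ (0,1) there exist positive constants C₀ = C₀(s,δ,T) and C₁ = C₁(s,δ,T) with the following property: for every t ∈ (s,T], every x with |x| ≥ C₀, every y with |y| ≤ (1−δ)|x|, and every C² maximizing path ξ of the action from (y,s) to (x,t) satisfying the Euler–Lagrange equation, the terminal momentum p := L_v(x,t,ξ̇(t)) satisfies x·p < 0 and |p| ≥ C₁|x|. -/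
open MeasureTheory Set

/-!
The heart of the proof is the uniform bound `|L_x| ≤ c₁`. It comes from the envelope argument:
with `p = L_v(a,θ,w)`, concavity makes `w` a maximizer of `L(a,θ,·) - p·`, so `z ↦ L(z,θ,w) - p w` touches `H(·,θ,p)` from below at `a`. The bound
`|L_{xx}| ≤ c₁` makes `H(·,θ,p) + c₁ z²/2` a supremum of convex functions, hence convex, and a
convex function touched from below by a differentiable one has the touching slope between the
limits of its derivatives, which `|H_x| ≤ c₁` controls.

By the Euler–Lagrange equation the momentum `P(θ) = L_v(ξ(θ),θ,ξ̇(θ))` is then `c₁`-Lipschitz.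
Since `|ξ̇| ≲ c₀ + |P|`, a displacement `|x - y| ≥ δ|x|` forces `|P(t)| ≳ |x|`; then `P` keeps the
sign of `P(t)` and exceeds `|L_v(·,·,0)| ≤ c₀` along the path, so by monotonicity of `L_v` the
velocity has the opposite sign throughout, and so does `x - y`, which has the sign of `x`.
-/

open Filter Topology

theorem ConvexOn.dense_differentiableAt {f : ℝ → ℝ} (hf : ConvexOn ℝ univ f) :
    Dense {z | DifferentiableAt ℝ f z} := by
  refine dense_iff_inter_open.2 fun U hU ⟨x, hxU⟩ => ?_
  obtain ⟨K, V, hV, hlip⟩ := hf.locallyLipschitz x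
  set W := interior (U ∩ V)
  have hW : W ∈ 𝓝 x := interior_mem_nhds.2 (inter_mem (hU.mem_nhds hxU) hV)
  have hlipW : LipschitzOnWith K f W := hlip.mono (interior_subset.trans inter_subset_right)
  have hae : ∀ᵐ z ∂volume.restrict W, DifferentiableAt ℝ f z := by
    filter_upwards [ae_restrict_mem isOpen_interior.measurableSet,
      ae_restrict_of_ae (hlipW.ae_differentiableWithinAt_of_mem (μ := volume))] with z hzW hdiff
    exact (hdiff hzW).differentiableAt (isOpen_interior.mem_nhds hzW)
  have : (ae (volume.restrict W)).NeBot :=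
    ae_restrict_neBot.2 (Measure.measure_pos_of_mem_nhds volume hW).ne'
  obtain ⟨z, hzW, hz⟩ := (hae.and (ae_restrict_mem isOpen_interior.measurableSet)).exists
  exact ⟨z, (interior_subset hz).1, hzW⟩

theorem Dense.nhdsWithin_inter_neBot {D t : Set ℝ} {a : ℝ} (hD : Dense D) (ht : IsOpen t)
    (ha : a ∈ closure t) : (𝓝[t ∩ D] a).NeBot :=
  mem_closure_iff_nhdsWithin_neBot.1
    (closure_minimal (hD.open_subset_closure_inter ht) isClosed_closure ha)

section Touching

variable {G g B : ℝ → ℝ} {a g' : ℝ}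

/- `G` need not be differentiable at `a`: the slopes of `g` at `a` are squeezed against `deriv G`
at the differentiability points of `G`, which are dense. -/
theorem ConvexOn.deriv_le_of_touch (hG : ConvexOn ℝ univ G) (hgG : ∀ z, g z ≤ G z)
    (ha : g a = G a) (hg : HasDerivAt g g' a) (hB : ContinuousAt B a)
    (hD : ∀ z, DifferentiableAt ℝ G z → deriv G z ≤ B z) : g' ≤ B a := by
  have := hG.dense_differentiableAt.nhdsWithin_inter_neBot isOpen_Ioi
    (by rw [closure_Ioi]; exact self_mem_Ici : a ∈ closure (Ioi a))
  have hsub : Ioi a ∩ {z | DifferentiableAt ℝ G z} ⊆ {a}ᶜ := fun z hz => ne_of_gt hz.1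
  refine le_of_tendsto_of_tendsto ((hasDerivAt_iff_tendsto_slope.1 hg).mono_left
    (nhdsWithin_mono a hsub)) (hB.tendsto.mono_left nhdsWithin_le_nhds) ?_
  filter_upwards [self_mem_nhdsWithin] with z ⟨haz, hz⟩
  calc slope g a z ≤ slope G a z := by
        simp only [slope_def_field, ha]
        exact div_le_div_of_nonneg_right (by linarith [hgG z]) (sub_nonneg.2 (le_of_lt haz))
    _ ≤ deriv G z := hG.slope_le_deriv (mem_univ a) (mem_univ z) haz hz
    _ ≤ B z := hD z hz

theorem ConvexOn.le_deriv_of_touch (hG : ConvexOn ℝ univ G) (hgG : ∀ z, g z ≤ G z)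
    (ha : g a = G a) (hg : HasDerivAt g g' a) (hB : ContinuousAt B a)
    (hD : ∀ z, DifferentiableAt ℝ G z → B z ≤ deriv G z) : B a ≤ g' := by
  have := hG.dense_differentiableAt.nhdsWithin_inter_neBot isOpen_Iio
    (by rw [closure_Iio]; exact self_mem_Iic : a ∈ closure (Iio a))
  have hsub : Iio a ∩ {z | DifferentiableAt ℝ G z} ⊆ {a}ᶜ := fun z hz => ne_of_lt hz.1
  refine le_of_tendsto_of_tendsto (hB.tendsto.mono_left nhdsWithin_le_nhds)
    ((hasDerivAt_iff_tendsto_slope.1 hg).mono_left (nhdsWithin_mono a hsub)) ?_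
  filter_upwards [self_mem_nhdsWithin] with z ⟨hza, hz⟩
  calc B z ≤ deriv G z := hD z hz
    _ ≤ slope G z a := hG.deriv_le_slope (mem_univ z) (mem_univ a) hza hz
    _ ≤ slope g a z := by
        rw [slope_comm]
        simp only [slope_def_field, ha]
        exact div_le_div_of_nonpos_of_le (sub_nonpos.2 (le_of_lt hza)) (by linarith [hgG z])

end Touching

theorem hasDerivAt_half_mul_sq (c z : ℝ) : HasDerivAt (fun z => c / 2 * z ^ 2) (c * z) z :=
  ((hasDerivAt_pow 2 z).const_mul (c / 2)).congr_deriv (by push_cast; ring)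

def IsSemiconvex (c : ℝ) (f : ℝ → ℝ) : Prop :=
  ConvexOn ℝ univ fun z => f z + c / 2 * z ^ 2

namespace IsSemiconvex

variable {c : ℝ} {f : ℝ → ℝ}

theorem of_neg_le_deriv2 (hf : ContDiff ℝ 2 f) (h : ∀ z, -c ≤ deriv (deriv f) z) :
    IsSemiconvex c f := by
  have hf1 : ContDiff ℝ (1 + 1) f := hf
  have hd2 : Differentiable ℝ (deriv f) :=
    (contDiff_succ_iff_deriv.1 hf1).2.2.differentiable one_ne_zero
  have hG : ∀ z, HasDerivAt (fun z => f z + c / 2 * z ^ 2) (deriv f z + c * z) z := fun z =>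
    (hf.differentiable two_ne_zero z).hasDerivAt.add (hasDerivAt_half_mul_sq c z)
  have hG' : deriv (fun z => f z + c / 2 * z ^ 2) = fun z => deriv f z + c * z :=
    funext fun z => (hG z).deriv
  have hG'' : ∀ z, HasDerivAt (fun z => deriv f z + c * z) (deriv (deriv f) z + c) z :=
    fun z => (hd2 z).hasDerivAt.add ((hasDerivAt_id z).const_mul c |>.congr_deriv (mul_one c))
  refine convexOn_univ_of_deriv2_nonneg (fun z => (hG z).differentiableAt) ?_ fun z => ?_
  · rw [hG']; exact fun z => (hG'' z).differentiableAt
  · rw [Function.iterate_succ_apply, Function.iterate_one, hG', (hG'' z).deriv]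
    linarith [h z]

theorem sub_const (hf : IsSemiconvex c f) (b : ℝ) :
    IsSemiconvex c fun z => f z - b := by
  refine (hf.add_const (-b)).congr fun z _ => ?_
  simp only [Pi.add_apply]
  ring

theorem of_isLUB {ι : Type*} {F : ι → ℝ → ℝ} {g : ℝ → ℝ} (hF : ∀ i, IsSemiconvex c (F i))
    (hg : ∀ z, IsLUB (range fun i => F i z) (g z)) : IsSemiconvex c g := by
  refine ⟨convex_univ, fun u _ v _ α β hα hβ hαβ => ?_⟩
  simp only [smul_eq_mul]
  have hle : g (α * u + β * v) ≤ α * (g u + c / 2 * u ^ 2) + β * (g v + c / 2 * v ^ 2)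
      - c / 2 * (α * u + β * v) ^ 2 := by
    refine (hg _).2 ?_
    rintro _ ⟨i, rfl⟩
    have hi := (hF i).2 (mem_univ u) (mem_univ v) hα hβ hαβ
    simp only [smul_eq_mul] at hi
    have hu := mul_le_mul_of_nonneg_left ((hg u).1 ⟨i, rfl⟩) hα
    have hv := mul_le_mul_of_nonneg_left ((hg v).1 ⟨i, rfl⟩) hβ
    linarith
  linarith

theorem abs_deriv_le_of_touch {g : ℝ → ℝ} {a g' M : ℝ} (hf : IsSemiconvex c f)
    (hgf : ∀ z, g z ≤ f z) (ha : g a = f a) (hg : HasDerivAt g g' a)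
    (hM : ∀ z, DifferentiableAt ℝ f z → |deriv f z| ≤ M) : |g'| ≤ M := by
  have hG : ∀ z, DifferentiableAt ℝ (fun z => f z + c / 2 * z ^ 2) z →
      |deriv (fun z => f z + c / 2 * z ^ 2) z - c * z| ≤ M := fun z hz => by
    have hfz : DifferentiableAt ℝ f z :=
      ((hasDerivAt_half_mul_sq c z).differentiableAt.add_iff_left).1 hz
    have hGz : HasDerivAt (fun z => f z + c / 2 * z ^ 2) (deriv f z + c * z) z :=
      hfz.hasDerivAt.add (hasDerivAt_half_mul_sq c z)
    rw [hGz.deriv, add_sub_cancel_right]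
    exact hM z hfz
  have hcont : Continuous fun z : ℝ => c * z := continuous_const.mul continuous_id
  have hgG : ∀ z, g z + c / 2 * z ^ 2 ≤ f z + c / 2 * z ^ 2 := fun z => by linarith [hgf z]
  have hup := hf.deriv_le_of_touch hgG (by rw [ha]) (hg.add (hasDerivAt_half_mul_sq c a))
    (hcont.add continuous_const).continuousAt (B := fun z => c * z + M)
    fun z hz => by linarith [(abs_le.1 (hG z hz)).2]
  have hlo := hf.le_deriv_of_touch hgG (by rw [ha]) (hg.add (hasDerivAt_half_mul_sq c a))
    (hcont.sub continuous_const).continuousAt (B := fun z => c * z - M)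
    fun z hz => by linarith [(abs_le.1 (hG z hz)).1]
  exact abs_le.2 ⟨by linarith, by linarith⟩

end IsSemiconvex

theorem ConcaveOn.le_add_mul_sub_of_hasDerivAt {f : ℝ → ℝ} {f' x : ℝ} (hf : ConcaveOn ℝ univ f)
    (hx : HasDerivAt f f' x) (y : ℝ) : f y ≤ f x + f' * (y - x) := by
  rcases lt_trichotomy y x with hyx | rfl | hxy
  · have hs := hf.le_slope_of_hasDerivAt (mem_univ y) (mem_univ x) hyx hx
    rw [slope_def_field, le_div_iff₀ (sub_pos.2 hyx)] at hs
    linarith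
  · simp
  · have hs := hf.slope_le_of_hasDerivAt (mem_univ x) (mem_univ y) hxy hx
    rw [slope_def_field, div_le_iff₀ (sub_pos.2 hxy)] at hs
    linarith

theorem ConcaveOn.mul_nonpos_of_mul_deriv_lt {f : ℝ → ℝ} (hf : ConcaveOn ℝ univ f)
    (hd : Differentiable ℝ f) {q w : ℝ} (h : q * deriv f 0 < q * deriv f w) : q * w ≤ 0 := by
  have hanti := hf.antitoneOn_deriv fun z _ => hd z
  by_contra! hqw
  rcases pos_and_pos_or_neg_and_neg_of_mul_pos hqw with ⟨hq, hw⟩ | ⟨hq, hw⟩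
  · have := hanti (mem_univ 0) (mem_univ w) hw.le
    nlinarith
  · have := hanti (mem_univ w) (mem_univ 0) hw.le
    nlinarith

theorem mul_lt_mul_of_abs_sub_le {q r u d e : ℝ} (hr : |q - r| ≤ d) (hu : |u| ≤ e)
    (hq : e + d < |q|) : q * u < q * r := by
  have hq0 : 0 < |q| := by linarith [(abs_nonneg u).trans hu, (abs_nonneg (q - r)).trans hr]
  have hqu : q * u ≤ |q| * e :=
    (le_abs_self _).trans ((abs_mul q u).trans_le (mul_le_mul_of_nonneg_left hu hq0.le))
  have hqr : q * (q - r) ≤ |q| * d :=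
    (le_abs_self _).trans ((abs_mul q (q - r)).trans_le (mul_le_mul_of_nonneg_left hr hq0.le))
  nlinarith [abs_mul_abs_self q, mul_lt_mul_of_pos_left hq hq0]

theorem mul_neg_of_mul_pos_of_mul_nonpos {a b c : ℝ} (hac : 0 < a * c) (hbc : b * c ≤ 0)
    (hb : b ≠ 0) : a * b < 0 := by
  rcases pos_and_pos_or_neg_and_neg_of_mul_pos hac with ⟨ha, hc⟩ | ⟨ha, hc⟩
  · exact mul_neg_of_pos_of_neg ha (lt_of_le_of_ne (nonpos_of_mul_nonpos_left hbc hc) hb)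
  · exact mul_neg_of_neg_of_pos ha (lt_of_le_of_ne' (nonneg_of_mul_nonpos_left hbc hc) hb)

theorem mul_sub_pos_of_abs_le {x y δ : ℝ} (hδ : 0 < δ) (hx : x ≠ 0)
    (hy : |y| ≤ (1 - δ) * |x|) : 0 < x * (x - y) := by
  have hx0 : 0 < |x| := abs_pos.2 hx
  nlinarith [abs_mul_abs_self x, le_abs_self (x * y), abs_mul x y,
    mul_le_mul_of_nonneg_left hy (abs_nonneg x), mul_pos (mul_pos hδ hx0) hx0]

/- The envelope argument, with `ℓ z w = L(z,θ,w)` and `h z p = H(z,θ,p)`. -/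
theorem abs_deriv_le_of_isLUB {ℓ h : ℝ → ℝ → ℝ} {c M a w : ℝ}
    (hsemi : ∀ w, IsSemiconvex c fun z => ℓ z w) (hconc : ConcaveOn ℝ univ (ℓ a))
    (hh : ∀ z p, IsLUB (range fun w => ℓ z w - p * w) (h z p))
    (hM : ∀ p z, DifferentiableAt ℝ (fun z => h z p) z → |deriv (fun z => h z p) z| ≤ M)
    (hda : DifferentiableAt ℝ (fun z => ℓ z w) a) (hdw : DifferentiableAt ℝ (ℓ a) w) :
    |deriv (fun z => ℓ z w) a| ≤ M := by
  set p := deriv (ℓ a) w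
  have hmax : ∀ u, ℓ a u - p * u ≤ ℓ a w - p * w := fun u => by
    linarith [hconc.le_add_mul_sub_of_hasDerivAt hdw.hasDerivAt u]
  have hha : ℓ a w - p * w = h a p :=
    le_antisymm ((hh a p).1 ⟨w, rfl⟩) ((hh a p).2 (forall_mem_range.2 hmax))
  have hsemi_h : IsSemiconvex c fun z => h z p :=
    .of_isLUB (fun w => (hsemi w).sub_const (p * w)) fun z => hh z p
  exact hsemi_h.abs_deriv_le_of_touch (fun z => (hh z p).1 ⟨w, rfl⟩) hha
    (hda.hasDerivAt.sub_const _) (hM p)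

theorem abs_deriv_fst_le_of_hamiltonian {L H : ℝ → ℝ → ℝ → ℝ} {c : ℝ}
    (hL : ContDiff ℝ 2 fun p : ℝ × ℝ × ℝ => L p.1 p.2.1 p.2.2)
    (hconc : ∀ a θ, ConcaveOn ℝ univ fun w => L a θ w)
    (hLxx : ∀ a θ w, -c ≤ deriv (fun z => deriv (fun z' => L z' θ w) z) a)
    (hH : ∀ a θ p, IsLUB (range fun w => L a θ w - p * w) (H a θ p))
    (hHx : ∀ a θ p, |deriv (fun z => H z θ p) a| ≤ c) (a θ w : ℝ) :
    |deriv (fun z => L z θ w) a| ≤ c := by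
  have hLz : ∀ w, ContDiff ℝ 2 fun z => L z θ w := fun w =>
    hL.comp (contDiff_id.prodMk (contDiff_const (c := (θ, w))))
  have hLw : ContDiff ℝ 2 fun w => L a θ w :=
    hL.comp (contDiff_const.prodMk (contDiff_const.prodMk contDiff_id))
  exact abs_deriv_le_of_isLUB (h := fun z p => H z θ p)
    (fun w => .of_neg_le_deriv2 (hLz w) fun z => hLxx z θ w) (hconc a θ) (fun z p => hH z θ p)
    (fun p z _ => hHx z θ p) ((hLz w).differentiable two_ne_zero a)
    (hLw.differentiable two_ne_zero w)

noncomputable def momentum (L : ℝ → ℝ → ℝ → ℝ) (ξ : ℝ → ℝ) (θ : ℝ) : ℝ :=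
  deriv (fun w => L (ξ θ) θ w) (deriv ξ θ)

theorem SatisfiesEL.abs_momentum_sub_le {L : ℝ → ℝ → ℝ → ℝ} {s t K θ : ℝ} {ξ : ℝ → ℝ}
    (hEL : SatisfiesEL L s t ξ) (hLx : ∀ a θ w, |deriv (fun z => L z θ w) a| ≤ K)
    (hθ : θ ∈ Icc s t) : |momentum L ξ t - momentum L ξ θ| ≤ K * (t - θ) := by
  have h := (convex_Icc s t).norm_image_sub_le_of_norm_hasDerivWithin_le (f := momentum L ξ)
    (f' := fun θ => deriv (fun a => L a θ (deriv ξ θ)) (ξ θ))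
    (fun u hu => (hEL u hu).hasDerivWithinAt) (fun u _ => hLx _ _ _) hθ
    ⟨hθ.1.trans hθ.2, le_rfl⟩
  rwa [Real.norm_eq_abs, Real.norm_eq_abs, abs_of_nonneg (sub_nonneg.2 hθ.2)] at h

namespace AdmissiblePath

variable {L : ℝ → ℝ → ℝ → ℝ} {s t y x K c0 : ℝ} {ξ ξ' : ℝ → ℝ}

theorem sub_eq_integral (hξ : AdmissiblePath s t y x ξ ξ') (hst : s ≤ t) :
    x - y = ∫ θ in s..t, ξ' θ := by
  have h := hξ.2.2.1 t ⟨hst, le_rfl⟩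
  rw [hξ.2.1] at h
  linarith

theorem abs_sub_le (hξ : AdmissiblePath s t y x ξ ξ') (hst : s ≤ t) {M : ℝ}
    (hM : ∀ θ ∈ Icc s t, |ξ' θ| ≤ M) : |x - y| ≤ M * (t - s) := by
  have h := intervalIntegral.norm_integral_le_of_norm_le_const (a := s) (b := t) (f := ξ')
    fun θ hθ => hM θ (Ioc_subset_Icc_self (uIoc_of_le hst ▸ hθ))
  rwa [Real.norm_eq_abs, abs_of_nonneg (sub_nonneg.2 hst), ← hξ.sub_eq_integral hst] at h

theorem mul_sub_nonpos (hξ : AdmissiblePath s t y x ξ ξ') (hst : s ≤ t) {q : ℝ}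
    (hq : ∀ θ ∈ Icc s t, q * ξ' θ ≤ 0) : q * (x - y) ≤ 0 := by
  have h : 0 ≤ ∫ θ in s..t, -(q * ξ' θ) :=
    intervalIntegral.integral_nonneg hst fun θ hθ => neg_nonneg.2 (hq θ hθ)
  rw [intervalIntegral.integral_neg, intervalIntegral.integral_const_mul,
    ← hξ.sub_eq_integral hst] at h
  linarith

theorem mul_abs_sub_le_momentum {c2 : ℝ} (hξ : AdmissiblePath s t y x ξ (deriv ξ))
    (hEL : SatisfiesEL L s t ξ) (hst : s ≤ t) (hc2 : 0 < c2)
    (hLx : ∀ a θ w, |deriv (fun z => L z θ w) a| ≤ K)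
    (hLv : ∀ a θ w, -c0 + c2 * |w| ≤ |deriv (fun u => L a θ u) w|) :
    c2 * |x - y| ≤ (c0 + |momentum L ξ t| + K * (t - s)) * (t - s) := by
  have hK : 0 ≤ K := (abs_nonneg _).trans (hLx 0 0 0)
  have hvel : ∀ θ ∈ Icc s t, |deriv ξ θ| ≤ (c0 + |momentum L ξ t| + K * (t - s)) / c2 :=
    fun θ hθ => by
      have hPθ := hEL.abs_momentum_sub_le hLx hθ
      have hKθ : K * (t - θ) ≤ K * (t - s) := mul_le_mul_of_nonneg_left (by linarith [hθ.1]) hK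
      have hvθ : -c0 + c2 * |deriv ξ θ| ≤ |momentum L ξ θ| := hLv (ξ θ) θ (deriv ξ θ)
      rw [le_div_iff₀ hc2]
      linarith [abs_sub_abs_le_abs_sub (momentum L ξ θ) (momentum L ξ t),
        abs_sub_comm (momentum L ξ θ) (momentum L ξ t)]
  have h := mul_le_mul_of_nonneg_left (hξ.abs_sub_le hst hvel) hc2.le
  rwa [← mul_assoc, mul_div_cancel₀ _ hc2.ne'] at h

theorem le_abs_momentum {c2 δ τ : ℝ} (hξ : AdmissiblePath s t y x ξ (deriv ξ))
    (hEL : SatisfiesEL L s t ξ) (hst : s ≤ t) (hτ : t - s ≤ τ) (hτ0 : 0 < τ) (hc0 : 0 ≤ c0)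
    (hc2 : 0 < c2) (hLx : ∀ a θ w, |deriv (fun z => L z θ w) a| ≤ K)
    (hLv : ∀ a θ w, -c0 + c2 * |w| ≤ |deriv (fun u => L a θ u) w|)
    (hy : |y| ≤ (1 - δ) * |x|) : c2 * δ * |x| / τ ≤ c0 + |momentum L ξ t| + K * τ := by
  have hK : 0 ≤ K := (abs_nonneg _).trans (hLx 0 0 0)
  rw [div_le_iff₀ hτ0]
  calc c2 * δ * |x| ≤ c2 * |x - y| := by
        rw [mul_assoc]; gcongr; linarith [abs_sub_abs_le_abs_sub x y]
    _ ≤ (c0 + |momentum L ξ t| + K * (t - s)) * (t - s) :=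
        hξ.mul_abs_sub_le_momentum hEL hst hc2 hLx hLv
    _ ≤ (c0 + |momentum L ξ t| + K * τ) * τ := by gcongr <;> linarith

/- The momentum stays on the side of `P t` beyond `|L_v(·,·,0)| ≤ c₀`, and since `L_v` is
antitone the velocity points the other way. -/
theorem momentum_mul_sub_nonpos (hξ : AdmissiblePath s t y x ξ (deriv ξ))
    (hEL : SatisfiesEL L s t ξ) (hst : s ≤ t) (hLx : ∀ a θ w, |deriv (fun z => L z θ w) a| ≤ K)
    (hconc : ∀ a θ, ConcaveOn ℝ univ fun w => L a θ w)
    (hdiff : ∀ a θ, Differentiable ℝ fun w => L a θ w)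
    (hL0 : ∀ a θ, |deriv (fun w => L a θ w) 0| ≤ c0)
    (hP : c0 + K * (t - s) < |momentum L ξ t|) : momentum L ξ t * (x - y) ≤ 0 := by
  have hK : 0 ≤ K := (abs_nonneg _).trans (hLx 0 0 0)
  refine hξ.mul_sub_nonpos hst fun θ hθ => ?_
  have hPθ := (hEL.abs_momentum_sub_le hLx hθ).trans
    (mul_le_mul_of_nonneg_left (by linarith [hθ.1] : t - θ ≤ t - s) hK)
  exact (hconc (ξ θ) θ).mul_nonpos_of_mul_deriv_lt (hdiff (ξ θ) θ)
    (mul_lt_mul_of_abs_sub_le hPθ (hL0 (ξ θ) θ) hP)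

end AdmissiblePath

theorem stmt12_general
    (L H : ℝ → ℝ → ℝ → ℝ) (s T c0 c1 c2 : ℝ)
    (hsT : s < T)
    (hc0 : 0 < c0) (hc1 : 0 < c1) (hc2 : 0 < c2)
    (hL : ContDiff ℝ 2 (fun p : ℝ × ℝ × ℝ => L p.1 p.2.1 p.2.2))
    (hconc : ∀ a θ, StrictConcaveOn ℝ univ (fun w => L a θ w))
    (hL2 : ∀ a θ w, -c0 + c2 * |w| ≤ |deriv (fun u => L a θ u) w| ∧
      |deriv (fun u => L a θ u) w| ≤ c0 + c1 * |w|)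
    (hL3 : ∀ a θ w, |deriv (fun z => deriv (fun u => L z θ u) w) a|
      + |deriv (fun z => deriv (fun z' => L z' θ w) z) a| ≤ c1)
    (hH : ∀ a θ p, IsLUB (Set.range fun w => L a θ w - p * w) (H a θ p))
    (hH1 : ∀ a θ p, |deriv (fun z => H z θ p) a|
      + |deriv (fun z => deriv (fun q => H z θ q) p) a| ≤ c1) :
    ∀ δ ∈ Ioo (0 : ℝ) 1, ∃ C0 : ℝ, 0 < C0 ∧ ∃ C1 : ℝ, 0 < C1 ∧
      ∀ t ∈ Ioc s T, ∀ x y : ℝ, C0 ≤ |x| → |y| ≤ (1 - δ) * |x| →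
        ∀ ξ : ℝ → ℝ, C2On s t ξ → IsMaximizer L s t y x ξ (deriv ξ) →
          SatisfiesEL L s t ξ →
          x * deriv (fun w => L x t w) (deriv ξ t) < 0 ∧
          C1 * |x| ≤ |deriv (fun w => L x t w) (deriv ξ t)| := by
  rintro δ ⟨hδ0, -⟩
  set T' := T - s
  have hT' : 0 < T' := sub_pos.2 hsT
  set C1 := c2 * δ / (2 * T')
  have hC1 : 0 < C1 := by positivity
  refine ⟨(c0 + c1 * T' + 1) / C1, by positivity, C1, hC1, ?_⟩
  rintro t ⟨hst, htT⟩ x y hx hy ξ - ⟨hξ, -⟩ hEL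
  have hLx := abs_deriv_fst_le_of_hamiltonian hL (fun a θ => (hconc a θ).concaveOn)
    (fun a θ w => neg_le_of_abs_le ((le_add_of_nonneg_left (abs_nonneg _)).trans (hL3 a θ w)))
    hH fun a θ p => (le_add_of_nonneg_right (abs_nonneg _)).trans (hH1 a θ p)
  have hLw : ∀ a θ, ContDiff ℝ 2 fun w => L a θ w := fun a θ =>
    hL.comp (contDiff_const.prodMk (contDiff_const.prodMk contDiff_id))
  set P := momentum L ξ t
  have hPt : deriv (fun w => L x t w) (deriv ξ t) = P := by rw [← hξ.2.1]; rfl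
  rw [hPt]
  have hC1x : c0 + c1 * T' + 1 ≤ C1 * |x| := (div_le_iff₀' hC1).1 hx
  have hmag : C1 * |x| + 1 ≤ |P| := by
    have h := hξ.le_abs_momentum hEL hst.le (by linarith : t - s ≤ T') hT' hc0.le hc2 hLx
      (fun a θ w => (hL2 a θ w).1) hy
    have h2C1 : c2 * δ * |x| / T' = 2 * (C1 * |x|) := by simp only [C1]; field_simp
    linarith
  have hsign := hξ.momentum_mul_sub_nonpos hEL hst.le hLx (fun a θ => (hconc a θ).concaveOn)
    (fun a θ => (hLw a θ).differentiable two_ne_zero) (fun a θ => by simpa using (hL2 a θ 0).2)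
    (by nlinarith : c0 + c1 * (t - s) < |P|)
  have hx0 : x ≠ 0 := abs_pos.1 (lt_of_lt_of_le (by positivity) hx)
  have hP0 : P ≠ 0 := abs_pos.1 (by nlinarith [abs_nonneg x])
  exact ⟨mul_neg_of_mul_pos_of_mul_nonpos (mul_sub_pos_of_abs_le hδ0 hx0 hy) hsign hP0,
    by linarith⟩

/-- Proposition 5.2(iii): for `|x|` large and `|y| ≤ (1−δ)|x|`, the terminal
momentum `p = L_v(x,t,ξ̇(t))` of any maximizing path from `(y,s)` to `(x,t)`
has sign opposite to `x` and magnitude at least `C₁|x|`. -/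
theorem stmt12
    (L H : ℝ → ℝ → ℝ → ℝ) (s T c0 c1 c2 : ℝ)
    (hsT : s < T)
    (hc0 : 0 < c0) (hc1 : 0 < c1) (hc2 : 0 < c2)
    (hL : ContDiff ℝ 2 (fun p : ℝ × ℝ × ℝ => L p.1 p.2.1 p.2.2))
    (hconc : ∀ a θ, StrictConcaveOn ℝ univ (fun w => L a θ w))
    (hL1 : ∀ a θ w, -c0 + c2 * w ^ 2 ≤ -(L a θ w) ∧ -(L a θ w) ≤ c0 + c1 * w ^ 2)
    (hL2 : ∀ a θ w, -c0 + c2 * |w| ≤ |deriv (fun u => L a θ u) w| ∧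
      |deriv (fun u => L a θ u) w| ≤ c0 + c1 * |w|)
    (hL3 : ∀ a θ w, |deriv (fun z => deriv (fun u => L z θ u) w) a|
      + |deriv (fun z => deriv (fun z' => L z' θ w) z) a| ≤ c1)
    (hH : ∀ a θ p, IsLUB (Set.range fun w => L a θ w - p * w) (H a θ p))
    (hH1 : ∀ a θ p, |deriv (fun z => H z θ p) a|
      + |deriv (fun z => deriv (fun q => H z θ q) p) a| ≤ c1)
    (hH2 : ∀ a θ r, -c0 + c2 * |deriv (fun q => H a θ q) r| ≤ |r| ∧
      |r| ≤ c0 + c1 * |deriv (fun q => H a θ q) r|) :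
    ∀ δ ∈ Ioo (0 : ℝ) 1, ∃ C0 : ℝ, 0 < C0 ∧ ∃ C1 : ℝ, 0 < C1 ∧
      ∀ t ∈ Ioc s T, ∀ x y : ℝ, C0 ≤ |x| → |y| ≤ (1 - δ) * |x| →
        ∀ ξ : ℝ → ℝ, C2On s t ξ → IsMaximizer L s t y x ξ (deriv ξ) →
          SatisfiesEL L s t ξ →
          x * deriv (fun w => L x t w) (deriv ξ t) < 0 ∧
          C1 * |x| ≤ |deriv (fun w => L x t w) (deriv ξ t)| :=
  stmt12_general L H s T c0 c1 c2 hsT hc0 hc1 hc2 hL hconc hL2 hL3 hH hH1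
end

section
/- Let g(y₋,y₊) be a nonnegative continuous kernel vanishing unless Y₋ ≤ y₋ ≤ y₊ ≤ Y₊, and let v̂(y₋,y₊) be a bounded continuous function. Then the collision operator Q̂(g) := Q̂⁺(g) − g·Ĵ(g) has vanishing zeroth moment: ∫_{y₋}^∞ [Q̂⁺(g)(y₋,y₊) − g(y₋,y₊)Ĵ(g)(y₋,y₊)]dy₊ = 0 for every y₋. In fact Â(Q̂⁺(g))(y₋) = ∫ g(y₋,y★)Â(v̂g)(y★)dy★ − ∫ (v̂g)(y₋,y★)Â(g)(y★)dy★, and Â(g·Ĵ(g))(y₋) equals the same expression. -/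
open MeasureTheory Set

/-!
Exchanging the order of integration over the triangle `y₋ < y★ < y₊` turns `Â(Q̂⁺(g))(y₋)` into
`∫ g(y₋,y★) Â(v̂g)(y★) - (v̂g)(y₋,y★) Â(g)(y★) dy★`. Multiplying `Ĵ(g)` by `g`, the terms evaluated
at `y₊` produce the same integrand, while those evaluated at `y₋` integrate to
`Â(v̂g)(y₋) Â(g)(y₋) - Â(g)(y₋) Â(v̂g)(y₋) = 0`. Since `v̂` and `g` are bounded and `g(y₋,y₊)`
vanishes for `y₊` outside a set of finite measure, every integral involved converges absolutely,
which justifies Fubini and the splitting of integrals.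
-/

/-- `Ah k y = ∫_y^∞ k(y,y★) dy★`. -/
noncomputable def Ah (k : ℝ → ℝ → ℝ) (y : ℝ) : ℝ :=
  ∫ ys in Ioi y, k y ys

/-- The gain term `Q̂⁺(g)`. -/
noncomputable def Qh (v g : ℝ → ℝ → ℝ) (ym yp : ℝ) : ℝ :=
  ∫ ys in Ioo ym yp, (v ys yp - v ym ys) * g ym ys * g ys yp

/-- The loss kernel `Ĵ(g)`. -/
noncomputable def Jh (v g : ℝ → ℝ → ℝ) (ym yp : ℝ) : ℝ :=
  (Ah (fun a c => v a c * g a c) yp - Ah (fun a c => v a c * g a c) ym)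
    - v ym yp * (Ah g yp - Ah g ym)

lemma integrable_of_norm_le_of_support_subset {α E : Type*} [MeasurableSpace α]
    [NormedAddCommGroup E] {μ : Measure α} {f : α → E} {s : Set α} {C : ℝ}
    (hs : μ s ≠ ⊤) (hf : AEStronglyMeasurable f μ) (hC : ∀ x, ‖f x‖ ≤ C)
    (hsupp : Function.support f ⊆ s) : Integrable f μ :=
  (integrableOn_iff_integrable_of_support_subset hsupp).1
    (Measure.integrableOn_of_bounded hs hf (ae_of_all _ hC))

section Triangle

variable {E : Type*} [NormedAddCommGroup E] [NormedSpace ℝ E]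

lemma measurableSet_triangle (a : ℝ) : MeasurableSet {q : ℝ × ℝ | a < q.1 ∧ q.1 < q.2} :=
  (measurableSet_lt measurable_const measurable_fst).inter
    (measurableSet_lt measurable_fst measurable_snd)

lemma integral_indicator_triangle_left (a p : ℝ) (F : ℝ → ℝ → E) :
    ∫ s, {q : ℝ × ℝ | a < q.1 ∧ q.1 < q.2}.indicator (Function.uncurry F) (s, p)
      = ∫ s in Ioo a p, F s p := by
  rw [← integral_indicator measurableSet_Ioo]
  simp only [indicator_apply, mem_Ioo, Function.uncurry_apply_pair]
  rfl

lemma integral_indicator_triangle_right (a s : ℝ) (F : ℝ → ℝ → E) :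
    ∫ p, {q : ℝ × ℝ | a < q.1 ∧ q.1 < q.2}.indicator (Function.uncurry F) (s, p)
      = (Ioi a).indicator (fun s => ∫ p in Ioi s, F s p) s := by
  by_cases hs : a < s
  · rw [indicator_of_mem (mem_Ioi.2 hs), ← integral_indicator measurableSet_Ioi]
    simp [indicator_apply, hs]
  · simp [hs]

theorem setIntegral_Ioi_integral_Ioo_comm [CompleteSpace E] {a : ℝ} {F : ℝ → ℝ → E}
    (hF : IntegrableOn (Function.uncurry F) {q | a < q.1 ∧ q.1 < q.2} (volume.prod volume)) :
    ∫ p in Ioi a, ∫ s in Ioo a p, F s p = ∫ s in Ioi a, ∫ p in Ioi s, F s p := by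
  have hout : ∀ p ∉ Ioi a, ∫ s in Ioo a p, F s p = 0 := fun p hp => by
    rw [Ioo_eq_empty (by simpa using hp), Measure.restrict_empty, integral_zero_measure]
  calc ∫ p in Ioi a, ∫ s in Ioo a p, F s p
      = ∫ p, ∫ s, {q : ℝ × ℝ | a < q.1 ∧ q.1 < q.2}.indicator (Function.uncurry F) (s, p) := by
        simp only [integral_indicator_triangle_left]
        exact setIntegral_eq_integral_of_forall_compl_eq_zero hout
    _ = ∫ s, ∫ p, {q : ℝ × ℝ | a < q.1 ∧ q.1 < q.2}.indicator (Function.uncurry F) (s, p) :=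
        (integral_integral_swap (f := fun s p => {q : ℝ × ℝ | a < q.1 ∧ q.1 < q.2}.indicator
          (Function.uncurry F) (s, p)) (hF.integrable_indicator (measurableSet_triangle a))).symm
    _ = ∫ s in Ioi a, ∫ p in Ioi s, F s p := by
        simp only [integral_indicator_triangle_right, integral_indicator measurableSet_Ioi]

theorem integrableOn_Ioi_integral_Ioo [CompleteSpace E] {a : ℝ} {F : ℝ → ℝ → E}
    (hF : IntegrableOn (Function.uncurry F) {q | a < q.1 ∧ q.1 < q.2} (volume.prod volume)) :
    IntegrableOn (fun p => ∫ s in Ioo a p, F s p) (Ioi a) := by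
  have h := (hF.integrable_indicator (measurableSet_triangle a)).swap.integral_prod_left
  simp only [Function.comp_apply, Prod.swap_prod_mk, integral_indicator_triangle_left] at h
  exact h.integrableOn

end Triangle

section Kernels

variable {v g k : ℝ → ℝ → ℝ}

lemma stronglyMeasurable_Ah (hk : StronglyMeasurable (Function.uncurry k)) :
    StronglyMeasurable (Ah k) := by
  have hind := hk.indicator (measurableSet_lt measurable_fst measurable_snd)
  convert hind.integral_prod_right' (ν := volume) using 2 with y
  rw [Ah, ← integral_indicator measurableSet_Ioi]
  simp [indicator_apply]

lemma norm_Ah_le {S : Set ℝ} {C y : ℝ} (hS : volume S < ⊤) (hk : ∀ c, ‖k y c‖ ≤ C)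
    (hsupp : Function.support (k y) ⊆ S) : ‖Ah k y‖ ≤ C * volume.real S := by
  have hzero : ∀ c ∉ S, (Ioi y).indicator (k y) c = 0 := fun c hc =>
    indicator_apply_eq_zero.2 fun _ => Function.notMem_support.1 fun h => hc (hsupp h)
  rw [Ah, ← integral_indicator measurableSet_Ioi,
    ← setIntegral_eq_integral_of_forall_compl_eq_zero hzero]
  exact norm_setIntegral_le_of_norm_le_const hS fun c _ =>
    (norm_indicator_le_norm_self _ _).trans (hk c)

theorem Ah_Qh_eq {ym : ℝ}
    (hF : IntegrableOn (fun q : ℝ × ℝ => (v q.1 q.2 - v ym q.1) * g ym q.1 * g q.1 q.2)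
      {q | ym < q.1 ∧ q.1 < q.2} (volume.prod volume))
    (hg : ∀ s, IntegrableOn (g s) (Ioi s))
    (hvg : ∀ s, IntegrableOn (fun c => v s c * g s c) (Ioi s)) :
    Ah (Qh v g) ym = ∫ s in Ioi ym,
      (g ym s * Ah (fun a c => v a c * g a c) s - v ym s * g ym s * Ah g s) := by
  rw [Ah]
  simp only [Qh]
  rw [setIntegral_Ioi_integral_Ioo_comm (F := fun s p => (v s p - v ym s) * g ym s * g s p) hF]
  refine setIntegral_congr_fun measurableSet_Ioi fun s _ => ?_
  have hsplit : ∀ p, (v s p - v ym s) * g ym s * g s p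
      = g ym s * (v s p * g s p) - v ym s * g ym s * g s p := fun p => by ring
  simp only [hsplit]
  rw [integral_sub ((hvg s).const_mul _) ((hg s).const_mul _), integral_const_mul,
    integral_const_mul, Ah, Ah]

theorem integrableOn_Qh {ym : ℝ}
    (hF : IntegrableOn (fun q : ℝ × ℝ => (v q.1 q.2 - v ym q.1) * g ym q.1 * g q.1 q.2)
      {q | ym < q.1 ∧ q.1 < q.2} (volume.prod volume)) :
    IntegrableOn (Qh v g ym) (Ioi ym) :=
  integrableOn_Ioi_integral_Ioo (F := fun s p => (v s p - v ym s) * g ym s * g s p) hF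

lemma mul_Jh_eq (ym p : ℝ) :
    g ym p * Jh v g ym p
      = (g ym p * Ah (fun a c => v a c * g a c) p - v ym p * g ym p * Ah g p)
        - (Ah (fun a c => v a c * g a c) ym * g ym p - Ah g ym * (v ym p * g ym p)) := by
  rw [Jh]
  ring

theorem integrableOn_mul_Jh {ym : ℝ} (hg : IntegrableOn (g ym) (Ioi ym))
    (hvg : IntegrableOn (fun c => v ym c * g ym c) (Ioi ym))
    (hgA : IntegrableOn (fun s => g ym s * Ah (fun a c => v a c * g a c) s
      - v ym s * g ym s * Ah g s) (Ioi ym)) :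
    IntegrableOn (fun p => g ym p * Jh v g ym p) (Ioi ym) := by
  simp only [mul_Jh_eq]
  exact hgA.sub ((hg.const_mul _).sub (hvg.const_mul _))

theorem Ah_mul_Jh_eq {ym : ℝ} (hg : IntegrableOn (g ym) (Ioi ym))
    (hvg : IntegrableOn (fun c => v ym c * g ym c) (Ioi ym))
    (hgA : IntegrableOn (fun s => g ym s * Ah (fun a c => v a c * g a c) s
      - v ym s * g ym s * Ah g s) (Ioi ym)) :
    Ah (fun a c => g a c * Jh v g a c) ym = ∫ s in Ioi ym,
      (g ym s * Ah (fun a c => v a c * g a c) s - v ym s * g ym s * Ah g s) := by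
  rw [Ah]
  simp only [mul_Jh_eq]
  set A₁ := Ah (fun a c => v a c * g a c) ym
  set A₂ := Ah g ym
  have hg' : IntegrableOn (fun p => A₁ * g ym p) (Ioi ym) := hg.const_mul _
  have hvg' : IntegrableOn (fun p => A₂ * (v ym p * g ym p)) (Ioi ym) := hvg.const_mul _
  have hdiff : IntegrableOn (fun p => A₁ * g ym p - A₂ * (v ym p * g ym p)) (Ioi ym) :=
    hg'.sub hvg'
  rw [integral_sub hgA hdiff, integral_sub hg' hvg', integral_const_mul, integral_const_mul]
  change _ - (A₁ * A₂ - A₂ * A₁) = _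
  rw [mul_comm, sub_self, sub_zero]

end Kernels

section BoundedKernels

variable {v g k : ℝ → ℝ → ℝ} {S : Set ℝ} {Cv Cg C : ℝ}

lemma integrable_apply_of_norm_le (hk : StronglyMeasurable (Function.uncurry k))
    (hkC : ∀ a c, ‖k a c‖ ≤ C) (hkS : ∀ a, Function.support (k a) ⊆ S) (hS : volume S < ⊤)
    (a : ℝ) : Integrable (k a) :=
  integrable_of_norm_le_of_support_subset hS.ne hk.of_uncurry_left.aestronglyMeasurable
    (hkC a) (hkS a)

lemma integrable_gain_kernel (hv : StronglyMeasurable (Function.uncurry v))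
    (hvC : ∀ a c, ‖v a c‖ ≤ Cv) (hg : StronglyMeasurable (Function.uncurry g))
    (hgC : ∀ a c, ‖g a c‖ ≤ Cg) (hgS : ∀ a, Function.support (g a) ⊆ S)
    (hS : volume S < ⊤) (ym : ℝ) :
    Integrable (fun q : ℝ × ℝ => (v q.1 q.2 - v ym q.1) * g ym q.1 * g q.1 q.2)
      (volume.prod volume) := by
  have hmeas : StronglyMeasurable
      (fun q : ℝ × ℝ => (v q.1 q.2 - v ym q.1) * g ym q.1 * g q.1 q.2) :=
    ((hv.sub (hv.of_uncurry_left.comp_measurable measurable_fst)).mul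
      (hg.of_uncurry_left.comp_measurable measurable_fst)).mul hg
  have hsupp : Function.support
      (fun q : ℝ × ℝ => (v q.1 q.2 - v ym q.1) * g ym q.1 * g q.1 q.2) ⊆ S ×ˢ S :=
    fun q hq => by
      obtain ⟨hvg, hg₂⟩ := mul_ne_zero_iff.1 (Function.mem_support.1 hq)
      exact ⟨hgS ym (mul_ne_zero_iff.1 hvg).2, hgS q.1 hg₂⟩
  refine integrable_of_norm_le_of_support_subset ?_ hmeas.aestronglyMeasurable
    (fun q => norm_mul_le_of_le (norm_mul_le_of_le (norm_sub_le_of_le (hvC _ _) (hvC _ _))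
      (hgC _ _)) (hgC _ _)) hsupp
  rw [Measure.prod_prod]
  exact (ENNReal.mul_lt_top hS hS).ne

lemma integrable_mul_Ah {f : ℝ → ℝ} {Cf : ℝ} (hf : StronglyMeasurable f) (hfC : ∀ s, ‖f s‖ ≤ Cf)
    (hfS : Function.support f ⊆ S) (hk : StronglyMeasurable (Function.uncurry k))
    (hkC : ∀ a c, ‖k a c‖ ≤ C) (hkS : ∀ a, Function.support (k a) ⊆ S) (hS : volume S < ⊤) :
    Integrable (fun s => f s * Ah k s) :=
  integrable_of_norm_le_of_support_subset hS.ne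
    (hf.mul (stronglyMeasurable_Ah hk)).aestronglyMeasurable
    (fun s => norm_mul_le_of_le (hfC s) (norm_Ah_le hS (hkC s) (hkS s)))
    ((Function.support_mul_subset_left _ _).trans hfS)

theorem collision_zeroth_moment (hv : StronglyMeasurable (Function.uncurry v))
    (hvC : ∀ a c, ‖v a c‖ ≤ Cv) (hg : StronglyMeasurable (Function.uncurry g))
    (hgC : ∀ a c, ‖g a c‖ ≤ Cg) (hgS : ∀ a, Function.support (g a) ⊆ S)
    (hS : volume S < ⊤) (ym : ℝ) :
    (∫ yp in Ioi ym, (Qh v g ym yp - g ym yp * Jh v g ym yp)) = 0 ∧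
      Ah (Qh v g) ym
        = (∫ ys in Ioi ym, g ym ys * Ah (fun a c => v a c * g a c) ys)
          - ∫ ys in Ioi ym, v ym ys * g ym ys * Ah g ys ∧
      Ah (fun a c => g a c * Jh v g a c) ym
        = (∫ ys in Ioi ym, g ym ys * Ah (fun a c => v a c * g a c) ys)
          - ∫ ys in Ioi ym, v ym ys * g ym ys * Ah g ys := by
  have hvg : StronglyMeasurable (Function.uncurry fun a c => v a c * g a c) := hv.mul hg
  have hvgC : ∀ a c, ‖v a c * g a c‖ ≤ Cv * Cg := fun a c =>
    norm_mul_le_of_le (hvC a c) (hgC a c)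
  have hvgS : ∀ a, Function.support (fun c => v a c * g a c) ⊆ S := fun a =>
    (Function.support_mul_subset_right _ _).trans (hgS a)
  have hg_int := integrable_apply_of_norm_le hg hgC hgS hS
  have hvg_int := integrable_apply_of_norm_le hvg hvgC hvgS hS
  have hF := (integrable_gain_kernel hv hvC hg hgC hgS hS ym).integrableOn
    (s := {q | ym < q.1 ∧ q.1 < q.2})
  have h₁ : Integrable (fun s => g ym s * Ah (fun a c => v a c * g a c) s) :=
    integrable_mul_Ah hg.of_uncurry_left (hgC ym) (hgS ym) hvg hvgC hvgS hS
  have h₂ : Integrable (fun s => v ym s * g ym s * Ah g s) :=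
    integrable_mul_Ah hvg.of_uncurry_left (hvgC ym) (hvgS ym) hg hgC hgS hS
  have h₁₂ : IntegrableOn (fun s => g ym s * Ah (fun a c => v a c * g a c) s
      - v ym s * g ym s * Ah g s) (Ioi ym) := (h₁.sub h₂).integrableOn
  have gain := Ah_Qh_eq hF (fun s => (hg_int s).integrableOn) (fun s => (hvg_int s).integrableOn)
  have loss := Ah_mul_Jh_eq (hg_int ym).integrableOn (hvg_int ym).integrableOn h₁₂
  rw [integral_sub h₁.integrableOn h₂.integrableOn] at gain loss
  refine ⟨?_, gain, loss⟩
  rw [integral_sub (integrableOn_Qh hF)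
    (integrableOn_mul_Jh (hg_int ym).integrableOn (hvg_int ym).integrableOn h₁₂)]
  exact sub_eq_zero.2 (gain.trans loss.symm)

end BoundedKernels

theorem stmt14_general
    (Ym Yp : ℝ) (v g : ℝ → ℝ → ℝ)
    (hg_cont : Continuous (fun p : ℝ × ℝ => g p.1 p.2))
    (hg_supp : ∀ a c, ¬ (Ym ≤ a ∧ a ≤ c ∧ c ≤ Yp) → g a c = 0)
    (hv_bdd : ∃ M : ℝ, ∀ a c, |v a c| ≤ M)
    (hv_cont : Continuous (fun p : ℝ × ℝ => v p.1 p.2)) :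
    ∀ ym : ℝ,
      (∫ yp in Ioi ym, (Qh v g ym yp - g ym yp * Jh v g ym yp)) = 0 ∧
      Ah (Qh v g) ym
        = (∫ ys in Ioi ym, g ym ys * Ah (fun a c => v a c * g a c) ys)
          - ∫ ys in Ioi ym, v ym ys * g ym ys * Ah g ys ∧
      Ah (fun a c => g a c * Jh v g a c) ym
        = (∫ ys in Ioi ym, g ym ys * Ah (fun a c => v a c * g a c) ys)
          - ∫ ys in Ioi ym, v ym ys * g ym ys * Ah g ys := by
  obtain ⟨Cv, hCv⟩ := hv_bdd
  have hsupp : Function.support (Function.uncurry g) ⊆ Icc Ym Yp ×ˢ Icc Ym Yp := fun q hq => by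
    obtain ⟨h₁, h₂, h₃⟩ := not_not.1 (mt (hg_supp q.1 q.2) hq)
    exact ⟨⟨h₁, h₂.trans h₃⟩, h₁.trans h₂, h₃⟩
  obtain ⟨Cg, hCg⟩ := hg_cont.bounded_above_of_compact_support
    (.of_support_subset_isCompact (isCompact_Icc.prod isCompact_Icc) hsupp)
  exact collision_zeroth_moment (S := Icc Ym Yp) hv_cont.stronglyMeasurable hCv
    hg_cont.stronglyMeasurable (fun a c => hCg (a, c)) (fun a c hc => (hsupp (a := (a, c)) hc).2)
    measure_Icc_lt_top

/-- The collision operator `Q̂(g) = Q̂⁺(g) − g·Ĵ(g)` has vanishing zeroth moment;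
moreover both `Â(Q̂⁺(g))` and `Â(g·Ĵ(g))` equal
`∫ g(y₋,y★)Â(v̂g)(y★)dy★ − ∫ (v̂g)(y₋,y★)Â(g)(y★)dy★`. -/
theorem stmt14
    (Ym Yp : ℝ) (v g : ℝ → ℝ → ℝ)
    (hg_nonneg : ∀ a c, 0 ≤ g a c)
    (hg_cont : Continuous (fun p : ℝ × ℝ => g p.1 p.2))
    (hg_supp : ∀ a c, ¬ (Ym ≤ a ∧ a ≤ c ∧ c ≤ Yp) → g a c = 0)
    (hv_bdd : ∃ M : ℝ, ∀ a c, |v a c| ≤ M)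
    (hv_cont : Continuous (fun p : ℝ × ℝ => v p.1 p.2)) :
    ∀ ym : ℝ,
      (∫ yp in Ioi ym, (Qh v g ym yp - g ym yp * Jh v g ym yp)) = 0 ∧
      Ah (Qh v g) ym
        = (∫ ys in Ioi ym, g ym ys * Ah (fun a c => v a c * g a c) ys)
          - ∫ ys in Ioi ym, v ym ys * g ym ys * Ah g ys ∧
      Ah (fun a c => g a c * Jh v g a c) ym
        = (∫ ys in Ioi ym, g ym ys * Ah (fun a c => v a c * g a c) ys)
          - ∫ ys in Ioi ym, v ym ys * g ym ys * Ah g ys :=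
  stmt14_general Ym Yp v g hg_cont hg_supp hv_bdd hv_cont
end

section
/- Fix (x₁,x₂) and suppose b¹(ρ), b²(ρ) are C² functions and f¹(ρ₋,ρ₊), f²(ρ₋,ρ₊) are C² kernels compactly supported in {ρ₋ ≤ ρ₊}. Define the adjoint operators A^{i*}ℓ := ℓ∗fⁱ − A(fⁱ)ℓ − (bⁱℓ)_ρ acting on C² compactly supported densities ℓ(ρ). Then the commutator satisfies the identity: A^{1*}A^{2*}ℓ − A^{2*}A^{1*}ℓ = ℓ∗[Q(f²,f¹) − Q(f¹,f²)] + [(b¹b²_ρ − b²b¹_ρ)ℓ]_ρ + ℓ·[A(f²)_ρ·b¹ − A(f¹)_ρ·b²]. -/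
open MeasureTheory Set

/-- `A(k)(ρ₋) = ∫_{ρ₋}^∞ k(ρ₋,ρ₊) dρ₊`. -/
noncomputable def Aop (k : ℝ → ℝ → ℝ) (ρ : ℝ) : ℝ := ∫ rp in Ioi ρ, k ρ rp

/-- `(ℓ∗k)(ρ) = ∫ ℓ(ρ★) k(ρ★,ρ) dρ★`. -/
noncomputable def convL (ℓ : ℝ → ℝ) (k : ℝ → ℝ → ℝ) (ρ : ℝ) : ℝ :=
  ∫ rs, ℓ rs * k rs ρ

/-- `(k∗m)(ρ₋,ρ₊) = ∫ k(ρ₋,ρ★) m(ρ★,ρ₊) dρ★`. -/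
noncomputable def convK (k m : ℝ → ℝ → ℝ) (rm rp : ℝ) : ℝ :=
  ∫ rs, k rm rs * m rs rp

/-- `Q(f^j,f^i) = f^j∗f^i − A(f^j)⊗f^i − f^j⊗A(f^i) + b^j⊗f^i_{ρ₋} − (f^j⊗b^i)_{ρ₊}`. -/
noncomputable def Qop (bj : ℝ → ℝ) (fj : ℝ → ℝ → ℝ) (bi : ℝ → ℝ) (fi : ℝ → ℝ → ℝ)
    (rm rp : ℝ) : ℝ :=
  convK fj fi rm rp - Aop fj rm * fi rm rp - fj rm rp * Aop fi rp
    + bj rm * deriv (fun r => fi r rp) rm - deriv (fun r => fj rm r * bi r) rp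

/-- The adjoint generator `A* ℓ = ℓ∗f − A(f)ℓ − (bℓ)_ρ`. -/
noncomputable def Astar (b : ℝ → ℝ) (f : ℝ → ℝ → ℝ) (ℓ : ℝ → ℝ) (ρ : ℝ) : ℝ :=
  convL ℓ f ρ - Aop f ρ * ℓ ρ - deriv (fun r => b r * ℓ r) ρ

/-!
Unfolding `A^{1*}(A^{2*}ℓ) = (A^{2*}ℓ)∗f¹ − A(f¹)·A^{2*}ℓ − (b¹·A^{2*}ℓ)_ρ`, Fubini turns
`(ℓ∗f²)∗f¹` into `ℓ∗(f²∗f¹)`, an integration by parts moves the derivative in `(b²ℓ)_ρ ∗ f¹`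
onto `f¹`, and differentiation under the integral sign gives `ℓ∗(f²⊗b¹)_{ρ₊} = (b¹·(ℓ∗f²))_ρ`.
Together these yield `A^{1*}A^{2*}ℓ = ℓ∗Q(f²,f¹) + A(f¹)M² + (b¹M²)_ρ` with
`M² = A(f²)ℓ + (b²ℓ)_ρ`. In the commutator the terms `A(f¹)A(f²)ℓ` cancel and the product rule
collapses the rest. Triangular support makes `A(f)(ρ)` the integral of `f(ρ,·)` over the whole
line, hence differentiable.
-/

open Function

section Kernel

variable {F : ℝ → ℝ → ℝ} {g : ℝ → ℝ}

theorem HasCompactSupport.uncurry_left (x : ℝ) (hF : HasCompactSupport (uncurry F)) :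
    HasCompactSupport (F x) :=
  HasCompactSupport.intro (hF.image continuous_snd) fun y hy =>
    image_eq_zero_of_notMem_tsupport (x := (x, y)) fun h => hy ⟨_, h, rfl⟩

theorem HasCompactSupport.uncurry_right (y : ℝ) (hF : HasCompactSupport (uncurry F)) :
    HasCompactSupport fun x => F x y :=
  HasCompactSupport.intro (hF.image continuous_fst) fun x hx =>
    image_eq_zero_of_notMem_tsupport (x := (x, y)) fun h => hx ⟨_, h, rfl⟩

theorem HasCompactSupport.uncurry_flip (hF : HasCompactSupport (uncurry F)) :
    HasCompactSupport (uncurry (flip F)) := by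
  rw [Function.uncurry_flip]
  exact hF.comp_isClosedEmbedding (Homeomorph.prodComm ℝ ℝ).isClosedEmbedding

theorem Continuous.uncurry_flip (hF : Continuous (uncurry F)) : Continuous (uncurry (flip F)) := by
  rw [Function.uncurry_flip]
  exact hF.comp continuous_swap

theorem ContDiff.uncurry_flip {n : WithTop ℕ∞} (hF : ContDiff ℝ n (uncurry F)) :
    ContDiff ℝ n (uncurry (flip F)) := by
  rw [Function.uncurry_flip]
  exact hF.comp (contDiff_snd.prodMk contDiff_fst)

theorem ContDiff.uncurry_mul_right {n : WithTop ℕ∞} {b : ℝ → ℝ} (hF : ContDiff ℝ n (uncurry F))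
    (hb : ContDiff ℝ n b) : ContDiff ℝ n (uncurry fun s x => F s x * b x) :=
  hF.mul (hb.comp contDiff_snd)

theorem Differentiable.hasDerivAt_uncurry_left (hF : Differentiable ℝ (uncurry F)) (s x : ℝ) :
    HasDerivAt (F s) (fderiv ℝ (uncurry F) (s, x) (0, 1)) x :=
  (hF (s, x)).hasFDerivAt.comp_hasDerivAt x ((hasDerivAt_const x s).prodMk (hasDerivAt_id x))

theorem Differentiable.uncurry_left (hF : Differentiable ℝ (uncurry F)) (s : ℝ) :
    Differentiable ℝ (F s) :=
  fun x => (hF.hasDerivAt_uncurry_left s x).differentiableAt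

theorem uncurry_deriv_eq_fderiv (hF : Differentiable ℝ (uncurry F)) :
    uncurry (fun s => deriv (F s)) = fun p => fderiv ℝ (uncurry F) p (0, 1) :=
  funext fun p => (hF.hasDerivAt_uncurry_left p.1 p.2).deriv

theorem ContDiff.continuous_uncurry_deriv (hF : ContDiff ℝ 1 (uncurry F)) :
    Continuous (uncurry fun s => deriv (F s)) := by
  rw [uncurry_deriv_eq_fderiv (hF.differentiable one_ne_zero)]
  exact (hF.continuous_fderiv one_ne_zero).clm_apply continuous_const

theorem ContDiff.hasCompactSupport_uncurry_deriv (hF : ContDiff ℝ 1 (uncurry F))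
    (hFs : HasCompactSupport (uncurry F)) :
    HasCompactSupport (uncurry fun s => deriv (F s)) := by
  rw [uncurry_deriv_eq_fderiv (hF.differentiable one_ne_zero)]
  exact hFs.fderiv ℝ |>.comp_left (g := fun L : ℝ × ℝ →L[ℝ] ℝ => L (0, 1)) rfl

theorem integrable_mul_kernel (hg : Continuous g) (hF : Continuous (uncurry F))
    (hFs : HasCompactSupport (uncurry F)) (x : ℝ) :
    Integrable fun s => g s * F s x :=
  (hg.mul (hF.uncurry_right x)).integrable_of_hasCompactSupport (hFs.uncurry_right x).mul_left

theorem continuous_integral_mul_kernel (hg : Continuous g)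
    (hF : Continuous (uncurry F)) (hFs : HasCompactSupport (uncurry F)) :
    Continuous fun x => ∫ s, g s * F s x := by
  set K := Prod.fst '' tsupport (uncurry F)
  have hK : ∀ x, ∫ s in K, g s * F s x = ∫ s, g s * F s x := fun x =>
    setIntegral_eq_integral_of_forall_compl_eq_zero fun s hs => by
      have hF0 : uncurry F (s, x) = 0 := image_eq_zero_of_notMem_tsupport fun h => hs ⟨_, h, rfl⟩
      rw [uncurry_apply_pair] at hF0
      rw [hF0, mul_zero]
  simp_rw [← hK]
  exact continuous_parametric_integral_of_continuous (by fun_prop) (hFs.image continuous_fst)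

theorem hasDerivAt_integral_mul_kernel (hg : Continuous g) (hF : ContDiff ℝ 1 (uncurry F))
    (hFs : HasCompactSupport (uncurry F)) (x₀ : ℝ) :
    HasDerivAt (fun x => ∫ s, g s * F s x) (∫ s, g s * deriv (F s) x₀) x₀ := by
  set G : ℝ × ℝ → ℝ := fun p => g p.1 * deriv (F p.1) p.2
  have hGs : HasCompactSupport G := (hF.hasCompactSupport_uncurry_deriv hFs).mul_left
  obtain ⟨C, hC⟩ := hGs.exists_bound_of_continuous
    ((hg.comp continuous_fst).mul hF.continuous_uncurry_deriv)
  set K := Prod.fst '' tsupport G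
  have hK : IsCompact K := hGs.image continuous_fst
  have hbound : ∀ s, ∀ x ∈ Metric.ball x₀ 1,
      ‖g s * deriv (F s) x‖ ≤ K.indicator (fun _ => C) s := by
    intro s x _
    by_cases hs : s ∈ K
    · rw [indicator_of_mem hs]
      exact hC (s, x)
    · have hG0 : G (s, x) = 0 := image_eq_zero_of_notMem_tsupport fun h => hs ⟨_, h, rfl⟩
      rw [indicator_of_notMem hs]
      exact (norm_eq_zero.2 hG0).le
  refine (hasDerivAt_integral_of_dominated_loc_of_deriv_le (Metric.ball_mem_nhds x₀ one_pos)
    (.of_forall fun x => (integrable_mul_kernel hg hF.continuous hFs x).aestronglyMeasurable)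
    (integrable_mul_kernel hg hF.continuous hFs x₀)
    (integrable_mul_kernel hg hF.continuous_uncurry_deriv
      (hF.hasCompactSupport_uncurry_deriv hFs) x₀).aestronglyMeasurable
    (.of_forall hbound)
    ((integrable_indicator_iff hK.measurableSet).2 (integrableOn_const hK.measure_lt_top.ne))
    (.of_forall fun s x _ => ?_)).2
  exact ((hF.differentiable one_ne_zero).uncurry_left s x).hasDerivAt.const_mul (g s)

end Kernel

section Operators

variable {ℓ : ℝ → ℝ} {F G : ℝ → ℝ → ℝ}

theorem hasDerivAt_convL (hℓ : Continuous ℓ) (hF : ContDiff ℝ 1 (uncurry F))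
    (hFs : HasCompactSupport (uncurry F)) (ρ : ℝ) :
    HasDerivAt (convL ℓ F) (convL ℓ (fun s => deriv (F s)) ρ) ρ :=
  hasDerivAt_integral_mul_kernel hℓ hF hFs ρ

theorem differentiable_convL (hℓ : Continuous ℓ) (hF : ContDiff ℝ 1 (uncurry F))
    (hFs : HasCompactSupport (uncurry F)) : Differentiable ℝ (convL ℓ F) :=
  fun ρ => (hasDerivAt_convL hℓ hF hFs ρ).differentiableAt

theorem continuous_convK_left (hG : Continuous (uncurry G)) (hGs : HasCompactSupport (uncurry G))
    (hF : Continuous (uncurry F)) (ρ : ℝ) : Continuous fun s => convK G F s ρ := by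
  simpa only [convK, mul_comm (G _ _), flip] using continuous_integral_mul_kernel (F := flip G)
    (hF.uncurry_right ρ) hG.uncurry_flip hGs.uncurry_flip

theorem Aop_eq_integral (htri : ∀ rm rp, rp < rm → F rm rp = 0) (ρ : ℝ) :
    Aop F ρ = ∫ s, F ρ s := by
  rw [Aop, ← integral_Ici_eq_integral_Ioi]
  exact setIntegral_eq_integral_of_forall_compl_eq_zero fun s hs => htri ρ s (not_le.1 hs)

theorem differentiable_Aop (hF : ContDiff ℝ 1 (uncurry F)) (hFs : HasCompactSupport (uncurry F))
    (htri : ∀ rm rp, rp < rm → F rm rp = 0) : Differentiable ℝ (Aop F) := by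
  have h : Aop F = fun r => ∫ s, (fun _ => (1 : ℝ)) s * flip F s r :=
    funext fun r => by simp only [Aop_eq_integral htri, one_mul, flip]
  rw [h]
  exact fun ρ => (hasDerivAt_integral_mul_kernel continuous_const hF.uncurry_flip
    hFs.uncurry_flip ρ).differentiableAt

theorem convL_convL (hℓ : Continuous ℓ) (hG : Continuous (uncurry G))
    (hGs : HasCompactSupport (uncurry G)) (hF : Continuous (uncurry F)) (ρ : ℝ) :
    convL (convL ℓ G) F ρ = convL ℓ (convK G F) ρ := by
  have hint : Integrable (uncurry fun s t => ℓ t * G t s * F s ρ) (volume.prod volume) := by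
    rw [← Measure.volume_eq_prod]
    refine Continuous.integrable_of_hasCompactSupport (by fun_prop) ?_
    exact (hGs.uncurry_flip.mul_left (f := fun p : ℝ × ℝ => ℓ p.2)).mul_right
      (f' := fun p => F p.1 ρ)
  calc convL (convL ℓ G) F ρ = ∫ s, ∫ t, ℓ t * G t s * F s ρ := by
        simp only [convL, ← integral_mul_const]
    _ = ∫ t, ∫ s, ℓ t * G t s * F s ρ := integral_integral_swap hint
    _ = convL ℓ (convK G F) ρ := by
        simp only [convL, convK, mul_assoc, integral_const_mul]

theorem convL_deriv {u : ℝ → ℝ} (hu : ContDiff ℝ 1 u) (hus : HasCompactSupport u)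
    (hF : ContDiff ℝ 1 (uncurry F)) (ρ : ℝ) :
    convL (deriv u) F ρ = - convL u (fun s x => deriv (fun r => F r x) s) ρ := by
  have hFd := hF.uncurry_flip.differentiable one_ne_zero
  have hF' : Continuous fun s => deriv (fun r => F r ρ) s :=
    hF.uncurry_flip.continuous_uncurry_deriv.uncurry_left ρ
  have hFρ : Continuous fun s => F s ρ := hF.continuous.uncurry_right ρ
  simp only [convL, mul_comm (deriv u _), mul_comm (u _)]
  exact integral_mul_deriv_eq_deriv_mul_of_integrable
    (fun s _ => (hFd.uncurry_left ρ s).hasDerivAt)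
    (fun s _ => (hu.differentiable one_ne_zero s).hasDerivAt)
    ((hFρ.mul (hu.continuous_deriv le_rfl)).integrable_of_hasCompactSupport hus.deriv.mul_left)
    ((hF'.mul hu.continuous).integrable_of_hasCompactSupport hus.mul_left)
    ((hFρ.mul hu.continuous).integrable_of_hasCompactSupport hus.mul_left)

theorem convL_sub {K L : ℝ → ℝ → ℝ} (hℓ : Continuous ℓ) (hℓs : HasCompactSupport ℓ) {ρ : ℝ}
    (hK : Continuous fun s => K s ρ) (hL : Continuous fun s => L s ρ) :
    convL ℓ (fun s x => K s x - L s x) ρ = convL ℓ K ρ - convL ℓ L ρ := by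
  simp only [convL, mul_sub]
  exact integral_sub ((hℓ.mul hK).integrable_of_hasCompactSupport hℓs.mul_right)
    ((hℓ.mul hL).integrable_of_hasCompactSupport hℓs.mul_right)

theorem hasDerivAt_deriv_mul {b : ℝ → ℝ} (hb : ContDiff ℝ 2 b) (hℓ : ContDiff ℝ 2 ℓ) (ρ : ℝ) :
    HasDerivAt (deriv fun x => b x * ℓ x)
      (deriv (deriv b) ρ * ℓ ρ + 2 * (deriv b ρ * deriv ℓ ρ) + b ρ * deriv (deriv ℓ) ρ) ρ := by
  have hbd := hb.differentiable two_ne_zero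
  have hℓd := hℓ.differentiable two_ne_zero
  have h : (deriv fun x => b x * ℓ x) = fun r => deriv b r * ℓ r + b r * deriv ℓ r :=
    funext fun r => deriv_fun_mul (hbd r) (hℓd r)
  rw [h]
  have hb' := ((ContDiff.deriv' (n := 1) hb).differentiable one_ne_zero ρ).hasDerivAt
  have hℓ' := ((ContDiff.deriv' (n := 1) hℓ).differentiable one_ne_zero ρ).hasDerivAt
  exact ((hb'.fun_mul (hℓd ρ).hasDerivAt).fun_add ((hbd ρ).hasDerivAt.fun_mul hℓ')).congr_deriv
    (by ring)

theorem differentiable_deriv_mul {b : ℝ → ℝ} (hb : ContDiff ℝ 2 b) (hℓ : ContDiff ℝ 2 ℓ) :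
    Differentiable ℝ (deriv fun x => b x * ℓ x) :=
  fun ρ => (hasDerivAt_deriv_mul hb hℓ ρ).differentiableAt

end Operators

section Commutator

variable {ℓ bj bi : ℝ → ℝ} {fj fi : ℝ → ℝ → ℝ}

theorem deriv_mul_convL (hℓ : Continuous ℓ) (hbi : ContDiff ℝ 1 bi)
    (hfj : ContDiff ℝ 1 (uncurry fj)) (hfjs : HasCompactSupport (uncurry fj)) (ρ : ℝ) :
    deriv (fun r => bi r * convL ℓ fj r) ρ
      = convL ℓ (fun s => deriv (fun r => fj s r * bi r)) ρ := by
  have hKs : HasCompactSupport (uncurry fun s r => fj s r * bi r) := hfjs.mul_right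
  have h : (fun r => bi r * convL ℓ fj r) = convL ℓ fun s r => fj s r * bi r := by
    funext r
    simp only [convL, ← mul_assoc, integral_mul_const, mul_comm (bi r)]
  rw [h]
  exact (hasDerivAt_convL hℓ (hfj.uncurry_mul_right hbi) hKs ρ).deriv

theorem convL_Qop (hℓ : Continuous ℓ) (hℓs : HasCompactSupport ℓ) (hbj : Continuous bj)
    (hbi : ContDiff ℝ 1 bi) (hfj : ContDiff ℝ 1 (uncurry fj))
    (hfjs : HasCompactSupport (uncurry fj)) (hfjt : ∀ rm rp, rp < rm → fj rm rp = 0)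
    (hfi : ContDiff ℝ 1 (uncurry fi)) (ρ : ℝ) :
    convL ℓ (Qop bj fj bi fi) ρ
      = convL ℓ (convK fj fi) ρ - (∫ s, ℓ s * (Aop fj s * fi s ρ))
        - Aop fi ρ * convL ℓ fj ρ + (∫ s, ℓ s * (bj s * deriv (fun r => fi r ρ) s))
        - deriv (fun r => bi r * convL ℓ fj r) ρ := by
  have hint {h : ℝ → ℝ} (hh : Continuous h) : Integrable fun s => ℓ s * h s :=
    (hℓ.mul hh).integrable_of_hasCompactSupport hℓs.mul_right
  have ha : Integrable fun s => ℓ s * convK fj fi s ρ :=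
    hint (continuous_convK_left hfj.continuous hfjs hfi.continuous ρ)
  have hb : Integrable fun s => ℓ s * (Aop fj s * fi s ρ) :=
    hint ((differentiable_Aop hfj hfjs hfjt).continuous.mul (hfi.continuous.uncurry_right ρ))
  have hc : Integrable fun s => ℓ s * (fj s ρ * Aop fi ρ) :=
    hint ((hfj.continuous.uncurry_right ρ).mul continuous_const)
  have hd : Integrable fun s => ℓ s * (bj s * deriv (fun r => fi r ρ) s) :=
    hint (hbj.mul (hfi.uncurry_flip.continuous_uncurry_deriv.uncurry_left ρ))
  have he : Integrable fun s => ℓ s * deriv (fun r => fj s r * bi r) ρ :=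
    hint ((hfj.uncurry_mul_right hbi).continuous_uncurry_deriv.uncurry_right ρ)
  have hc' : ∫ s, ℓ s * (fj s ρ * Aop fi ρ) = Aop fi ρ * convL ℓ fj ρ := by
    simp only [convL, ← mul_assoc, integral_mul_const, mul_comm (Aop fi ρ)]
  rw [deriv_mul_convL hℓ hbi hfj hfjs, ← hc']
  simp only [convL, Qop, mul_sub, mul_add]
  rw [integral_sub (((ha.sub' hb).sub' hc).fun_add hd) he,
    integral_add ((ha.sub' hb).sub' hc) hd, integral_sub (ha.sub' hb) hc,
    integral_sub ha hb]

theorem convL_Astar (hℓ : ContDiff ℝ 1 ℓ) (hℓs : HasCompactSupport ℓ) (hbj : ContDiff ℝ 1 bj)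
    (hbi : ContDiff ℝ 1 bi) (hfj : ContDiff ℝ 1 (uncurry fj))
    (hfjs : HasCompactSupport (uncurry fj)) (hfjt : ∀ rm rp, rp < rm → fj rm rp = 0)
    (hfi : ContDiff ℝ 1 (uncurry fi)) (hfis : HasCompactSupport (uncurry fi)) (ρ : ℝ) :
    convL (Astar bj fj ℓ) fi ρ
      = convL ℓ (Qop bj fj bi fi) ρ + Aop fi ρ * convL ℓ fj ρ
        + deriv (fun r => bi r * convL ℓ fj r) ρ := by
  have hbℓ : ContDiff ℝ 1 fun r => bj r * ℓ r := hbj.mul hℓ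
  have hint {h : ℝ → ℝ} (hh : Continuous h) : Integrable fun s => h s * fi s ρ :=
    integrable_mul_kernel hh hfi.continuous hfis ρ
  have ha : Integrable fun s => convL ℓ fj s * fi s ρ :=
    hint (differentiable_convL hℓ.continuous hfj hfjs).continuous
  have hb : Integrable fun s => Aop fj s * ℓ s * fi s ρ :=
    hint ((differentiable_Aop hfj hfjs hfjt).continuous.mul hℓ.continuous)
  have hc : Integrable fun s => deriv (fun r => bj r * ℓ r) s * fi s ρ :=
    hint (hbℓ.continuous_deriv le_rfl)
  have hsplit : convL (Astar bj fj ℓ) fi ρ = convL (convL ℓ fj) fi ρ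
      - (∫ s, Aop fj s * ℓ s * fi s ρ) - convL (deriv fun r => bj r * ℓ r) fi ρ := by
    change ∫ s, (convL ℓ fj s - Aop fj s * ℓ s - deriv (fun r => bj r * ℓ r) s) * fi s ρ = _
    simp only [sub_mul]
    rw [integral_sub (ha.sub' hb) hc, integral_sub ha hb]
    rfl
  have hAop : ∫ s, Aop fj s * ℓ s * fi s ρ = ∫ s, ℓ s * (Aop fj s * fi s ρ) := by
    simp only [mul_left_comm (Aop fj _), mul_assoc]
  have hdrift : convL (fun r => bj r * ℓ r) (fun s x => deriv (fun r => fi r x) s) ρ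
      = ∫ s, ℓ s * (bj s * deriv (fun r => fi r ρ) s) := by
    simp only [convL, mul_left_comm (bj _), mul_assoc]
  rw [hsplit, hAop, convL_convL hℓ.continuous hfj.continuous hfjs hfi.continuous,
    convL_deriv hbℓ hℓs.mul_left hfi, hdrift,
    convL_Qop hℓ.continuous hℓs hbj.continuous hbi hfj hfjs hfjt hfi]
  ring

theorem Astar_Astar (hℓ : ContDiff ℝ 2 ℓ) (hℓs : HasCompactSupport ℓ) (hbj : ContDiff ℝ 2 bj)
    (hbi : ContDiff ℝ 1 bi) (hfj : ContDiff ℝ 1 (uncurry fj))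
    (hfjs : HasCompactSupport (uncurry fj)) (hfjt : ∀ rm rp, rp < rm → fj rm rp = 0)
    (hfi : ContDiff ℝ 1 (uncurry fi)) (hfis : HasCompactSupport (uncurry fi)) (ρ : ℝ) :
    Astar bi fi (Astar bj fj ℓ) ρ
      = convL ℓ (Qop bj fj bi fi) ρ
        + Aop fi ρ * (Aop fj ρ * ℓ ρ + deriv (fun x => bj x * ℓ x) ρ)
        + deriv (fun r => bi r * (Aop fj r * ℓ r + deriv (fun x => bj x * ℓ x) r)) ρ := by
  set M := fun r => Aop fj r * ℓ r + deriv (fun x => bj x * ℓ x) r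
  have hM : Differentiable ℝ M := ((differentiable_Aop hfj hfjs hfjt).mul
    (hℓ.differentiable two_ne_zero)).add (differentiable_deriv_mul hbj hℓ)
  have hC : Differentiable ℝ (convL ℓ fj) := differentiable_convL hℓ.continuous hfj hfjs
  have hbid := hbi.differentiable one_ne_zero
  have hL : Astar bj fj ℓ = fun r => convL ℓ fj r - M r :=
    funext fun r => by simp only [Astar, M]; ring
  have hderiv : deriv (fun r => bi r * Astar bj fj ℓ r) ρ
      = deriv (fun r => bi r * convL ℓ fj r) ρ - deriv (fun r => bi r * M r) ρ := by
    simp only [hL, mul_sub]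
    exact deriv_fun_sub ((hbid ρ).mul (hC ρ)) ((hbid ρ).mul (hM ρ))
  rw [Astar, hderiv, convL_Astar (hℓ.of_le one_le_two) hℓs (hbj.of_le one_le_two) hbi hfj hfjs
    hfjt hfi hfis, hL]
  ring

theorem continuous_Qop_left (hbj : Continuous bj) (hbi : ContDiff ℝ 1 bi)
    (hfj : ContDiff ℝ 1 (uncurry fj)) (hfjs : HasCompactSupport (uncurry fj))
    (hfjt : ∀ rm rp, rp < rm → fj rm rp = 0) (hfi : ContDiff ℝ 1 (uncurry fi)) (ρ : ℝ) :
    Continuous fun s => Qop bj fj bi fi s ρ :=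
  ((((continuous_convK_left hfj.continuous hfjs hfi.continuous ρ).sub
    ((differentiable_Aop hfj hfjs hfjt).continuous.mul (hfi.continuous.uncurry_right ρ))).sub
    ((hfj.continuous.uncurry_right ρ).mul continuous_const)).add
    (hbj.mul (hfi.uncurry_flip.continuous_uncurry_deriv.uncurry_left ρ))).sub
    ((hfj.uncurry_mul_right hbi).continuous_uncurry_deriv.uncurry_right ρ)

theorem drift_commutator_eq {a₁ a₂ b₁ b₂ : ℝ → ℝ} (hℓ : ContDiff ℝ 2 ℓ)
    (hb₁ : ContDiff ℝ 2 b₁) (hb₂ : ContDiff ℝ 2 b₂) (ha₁ : Differentiable ℝ a₁)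
    (ha₂ : Differentiable ℝ a₂) (ρ : ℝ) :
    a₁ ρ * (a₂ ρ * ℓ ρ + deriv (fun x => b₂ x * ℓ x) ρ)
        + deriv (fun r => b₁ r * (a₂ r * ℓ r + deriv (fun x => b₂ x * ℓ x) r)) ρ
      - (a₂ ρ * (a₁ ρ * ℓ ρ + deriv (fun x => b₁ x * ℓ x) ρ)
        + deriv (fun r => b₂ r * (a₁ r * ℓ r + deriv (fun x => b₁ x * ℓ x) r)) ρ)
      = deriv (fun r => (b₁ r * deriv b₂ r - b₂ r * deriv b₁ r) * ℓ r) ρ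
        + ℓ ρ * (deriv a₂ ρ * b₁ ρ - deriv a₁ ρ * b₂ ρ) := by
  have hℓd := hℓ.differentiable two_ne_zero
  have hbℓ {b : ℝ → ℝ} (hb : ContDiff ℝ 2 b) :
      deriv (fun x => b x * ℓ x) ρ = deriv b ρ * ℓ ρ + b ρ * deriv ℓ ρ :=
    deriv_fun_mul (hb.differentiable two_ne_zero ρ) (hℓd ρ)
  have hdrift {a b c : ℝ → ℝ} (ha : Differentiable ℝ a) (hb : ContDiff ℝ 2 b)
      (hc : ContDiff ℝ 2 c) :
      deriv (fun r => c r * (a r * ℓ r + deriv (fun x => b x * ℓ x) r)) ρ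
        = deriv c ρ * (a ρ * ℓ ρ + deriv (fun x => b x * ℓ x) ρ)
          + c ρ * (deriv a ρ * ℓ ρ + a ρ * deriv ℓ ρ + (deriv (deriv b) ρ * ℓ ρ
            + 2 * (deriv b ρ * deriv ℓ ρ) + b ρ * deriv (deriv ℓ) ρ)) :=
    ((hc.differentiable two_ne_zero ρ).hasDerivAt.fun_mul (((ha ρ).hasDerivAt.fun_mul
      (hℓd ρ).hasDerivAt).fun_add (hasDerivAt_deriv_mul hb hℓ ρ))).deriv
  have hb' {b : ℝ → ℝ} (hb : ContDiff ℝ 2 b) : HasDerivAt (deriv b) (deriv (deriv b) ρ) ρ :=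
    ((ContDiff.deriv' (n := 1) hb).differentiable one_ne_zero ρ).hasDerivAt
  have hwronskian : deriv (fun r => (b₁ r * deriv b₂ r - b₂ r * deriv b₁ r) * ℓ r) ρ
      = (deriv b₁ ρ * deriv b₂ ρ + b₁ ρ * deriv (deriv b₂) ρ
          - (deriv b₂ ρ * deriv b₁ ρ + b₂ ρ * deriv (deriv b₁) ρ)) * ℓ ρ
        + (b₁ ρ * deriv b₂ ρ - b₂ ρ * deriv b₁ ρ) * deriv ℓ ρ :=
    (((((hb₁.differentiable two_ne_zero ρ).hasDerivAt.fun_mul (hb' hb₂)).fun_sub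
      ((hb₂.differentiable two_ne_zero ρ).hasDerivAt.fun_mul (hb' hb₁))).fun_mul
      (hℓd ρ).hasDerivAt)).deriv
  rw [hdrift ha₂ hb₂ hb₁, hdrift ha₁ hb₁ hb₂, hwronskian, hbℓ hb₁, hbℓ hb₂]
  ring

end Commutator

/-- The commutator identity (Subsection 1.4):
`A^{1*}A^{2*}ℓ − A^{2*}A^{1*}ℓ = ℓ∗[Q(f²,f¹) − Q(f¹,f²)]
  + [(b¹b²_ρ − b²b¹_ρ)ℓ]_ρ + ℓ·[A(f²)_ρ b¹ − A(f¹)_ρ b²]`. -/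
theorem stmt15
    (b1 b2 : ℝ → ℝ) (f1 f2 : ℝ → ℝ → ℝ)
    (hb1 : ContDiff ℝ 2 b1) (hb2 : ContDiff ℝ 2 b2)
    (hf1 : ContDiff ℝ 2 (fun p : ℝ × ℝ => f1 p.1 p.2))
    (hf2 : ContDiff ℝ 2 (fun p : ℝ × ℝ => f2 p.1 p.2))
    (hf1supp : HasCompactSupport (fun p : ℝ × ℝ => f1 p.1 p.2))
    (hf2supp : HasCompactSupport (fun p : ℝ × ℝ => f2 p.1 p.2))
    (hf1tri : ∀ rm rp, rp < rm → f1 rm rp = 0)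
    (hf2tri : ∀ rm rp, rp < rm → f2 rm rp = 0)
    (ℓ : ℝ → ℝ) (hℓ : ContDiff ℝ 2 ℓ) (hℓsupp : HasCompactSupport ℓ) :
    ∀ ρ : ℝ,
      Astar b1 f1 (fun r => Astar b2 f2 ℓ r) ρ
          - Astar b2 f2 (fun r => Astar b1 f1 ℓ r) ρ
        = convL ℓ (fun rm rp => Qop b2 f2 b1 f1 rm rp - Qop b1 f1 b2 f2 rm rp) ρ
          + deriv (fun r => (b1 r * deriv b2 r - b2 r * deriv b1 r) * ℓ r) ρ
          + ℓ ρ * (deriv (fun r => Aop f2 r) ρ * b1 ρ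
            - deriv (fun r => Aop f1 r) ρ * b2 ρ) := by
  intro ρ
  have hf1' : ContDiff ℝ 1 (uncurry f1) := hf1.of_le one_le_two
  have hf2' : ContDiff ℝ 1 (uncurry f2) := hf2.of_le one_le_two
  rw [Astar_Astar hℓ hℓsupp hb2 (hb1.of_le one_le_two) hf2' hf2supp hf2tri hf1' hf1supp ρ,
    Astar_Astar hℓ hℓsupp hb1 (hb2.of_le one_le_two) hf1' hf1supp hf1tri hf2' hf2supp ρ,
    convL_sub hℓ.continuous hℓsupp
      (continuous_Qop_left hb2.continuous (hb1.of_le one_le_two) hf2' hf2supp hf2tri hf1' ρ)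
      (continuous_Qop_left hb1.continuous (hb2.of_le one_le_two) hf1' hf1supp hf1tri hf2' ρ)]
  linear_combination drift_commutator_eq hℓ hb1 hb2 (differentiable_Aop hf1' hf1supp hf1tri)
    (differentiable_Aop hf2' hf2supp hf2tri) ρ
end

section
/- Fix (x₁,x₂) and suppose b¹(ρ), b²(ρ) are C¹ functions and f¹(ρ₋,ρ₊), f²(ρ₋,ρ₊) are C¹ kernels compactly supported in {ρ₋ ≤ ρ₊}. Then for i,j ∈ {1,2}: A(Q(f^j,f^i))(ρ) = −A(f^j)(ρ)·A(f^i)(ρ) + b^j(ρ)·∂_ρ[A(f^i)(ρ)]. -/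
/-!
Integrate `Q(f^j,f^i)(ρ, ·)` over `(ρ, ∞)` term by term. By Fubini and the triangular support,
`∫ (f^j∗f^i)(ρ, ρ₊) dρ₊ = ∫ f^j(ρ, ρ★) A(f^i)(ρ★) dρ★`, which cancels the third term; the second
term gives `A(f^j)(ρ) A(f^i)(ρ)`. Since `A(f^i)(ρ) = ∫_ℝ f^i(ρ, ρ₊) dρ₊`, differentiating under
the integral sign turns the fourth term into `b^j(ρ) ∂_ρ A(f^i)(ρ)`. The last term integrates to
`f^j(ρ, ρ) b^i(ρ)`, which vanishes because a continuous kernel supported in `{ρ₋ ≤ ρ₊}` vanishes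
on the diagonal.
-/

open MeasureTheory Set

open Filter Function Topology

section Slice

variable {X Y E : Type*} [TopologicalSpace X] [TopologicalSpace Y] [R1Space Y] [Zero E]
  {F : X × Y → E}

theorem HasCompactSupport.comp_prodMk (hF : HasCompactSupport F) (x : X) :
    HasCompactSupport (fun y => F (x, y)) :=
  HasCompactSupport.intro (hF.isCompact.image continuous_snd) fun y hy =>
    image_eq_zero_of_notMem_tsupport fun h => hy ⟨(x, y), h, rfl⟩

end Slice

section ParametricIntegral

variable {E : Type*} [NormedAddCommGroup E] {F : ℝ → ℝ → E}

theorem integrable_of_hasCompactSupport_uncurry (hF : Continuous (uncurry F))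
    (hFc : HasCompactSupport (uncurry F)) (x : ℝ) : Integrable (F x) :=
  (hF.comp (Continuous.prodMk_right x)).integrable_of_hasCompactSupport (hFc.comp_prodMk x)

variable [NormedSpace ℝ E]

theorem hasDerivAt_integral_of_contDiff_uncurry (hF : ContDiff ℝ 1 (uncurry F))
    (hFc : HasCompactSupport (uncurry F)) (x₀ : ℝ) :
    Integrable (fun y => deriv (fun x => F x y) x₀) ∧
      HasDerivAt (fun x => ∫ y, F x y) (∫ y, deriv (fun x => F x y) x₀) x₀ := by
  set F' : ℝ → ℝ → E := fun x y => fderiv ℝ (uncurry F) (x, y) (1, 0)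
  have hF'_cont : Continuous (uncurry F') :=
    (hF.continuous_fderiv one_ne_zero).clm_apply continuous_const
  have hF'_deriv : ∀ x y, HasDerivAt (fun x => F x y) (F' x y) x := fun x y => by
    have hpair : HasDerivAt (fun r : ℝ => (r, y)) ((1 : ℝ), (0 : ℝ)) x :=
      (hasDerivAt_id x).prodMk (hasDerivAt_const x y)
    exact (hF.differentiable one_ne_zero (x, y)).hasFDerivAt.comp_hasDerivAt x hpair
  obtain ⟨C, hC⟩ :=
    hF'_cont.bounded_above_of_compact_support (HasCompactSupport.fderiv_apply ℝ hFc (1, 0))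
  set K := Prod.snd '' tsupport (uncurry F)
  have hK : IsCompact K := hFc.isCompact.image continuous_snd
  have hF'_bound : ∀ x y, ‖F' x y‖ ≤ K.indicator (fun _ => C) y := by
    intro x y
    by_cases hy : y ∈ K
    · simpa [indicator_of_mem hy] using hC (x, y)
    · have : F' x y = 0 := image_eq_zero_of_notMem_tsupport (f := uncurry F') fun h =>
        hy ⟨(x, y), tsupport_fderiv_apply_subset ℝ _ h, rfl⟩
      simp [this, indicator_of_notMem hy]
  have hslice : ∀ x, Integrable (F x) := integrable_of_hasCompactSupport_uncurry hF.continuous hFc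
  simp_rw [fun y => (hF'_deriv x₀ y).deriv]
  exact hasDerivAt_integral_of_dominated_loc_of_deriv_le univ_mem
    (Eventually.of_forall fun x => (hslice x).aestronglyMeasurable) (hslice x₀)
    (hF'_cont.comp (Continuous.prodMk_right x₀)).aestronglyMeasurable
    (ae_of_all _ fun y x _ => hF'_bound x y)
    ((integrable_indicator_iff hK.measurableSet).2 (integrableOn_const hK.measure_lt_top.ne))
    (ae_of_all _ fun y x _ => hF'_deriv x y)

end ParametricIntegral

theorem setIntegral_Ioi_eq_integral_of_eq_zero {E : Type*} [NormedAddCommGroup E]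
    [NormedSpace ℝ E] {g : ℝ → E} {x : ℝ} (hg : ∀ y < x, g y = 0) :
    ∫ y in Ioi x, g y = ∫ y, g y := by
  rw [setIntegral_congr_set Ioi_ae_eq_Ici]
  exact setIntegral_eq_integral_of_forall_compl_eq_zero fun y hy => hg y (not_le.1 hy)

section UpperTriangular

variable {f g : ℝ → ℝ → ℝ}

theorem Aop_eq_integral_s16 (hg : ∀ x y, y < x → g x y = 0) (x : ℝ) : Aop g x = ∫ y, g x y :=
  setIntegral_Ioi_eq_integral_of_eq_zero fun y => hg x y

theorem apply_self_eq_zero_of_continuous (hg : Continuous (uncurry g))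
    (hgt : ∀ x y, y < x → g x y = 0) (x : ℝ) : g x x = 0 := by
  have hclosed : IsClosed {y | g x y = 0} :=
    isClosed_eq (hg.comp (Continuous.prodMk_right x)) continuous_const
  have : Iic x ⊆ {y | g x y = 0} := by
    rw [← closure_Iio]
    exact closure_minimal (fun y hy => hgt x y hy) hclosed
  exact this (mem_Iic.2 le_rfl)

theorem hasDerivAt_Aop (hg : ContDiff ℝ 1 (uncurry g)) (hgc : HasCompactSupport (uncurry g))
    (hgt : ∀ x y, y < x → g x y = 0) (x : ℝ) :
    HasDerivAt (Aop g) (∫ y in Ioi x, deriv (fun r => g r y) x) x := by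
  have hderiv_zero : ∀ y < x, deriv (fun r => g r y) x = 0 := fun y hy => by
    have hlocal : (fun r => g r y) =ᶠ[𝓝 x] fun _ => 0 :=
      (eventually_gt_nhds hy).mono fun r hr => hgt r y hr
    rw [hlocal.deriv_eq, deriv_const]
  rw [setIntegral_Ioi_eq_integral_of_eq_zero hderiv_zero, funext (Aop_eq_integral_s16 hgt)]
  exact (hasDerivAt_integral_of_contDiff_uncurry hg hgc x).2

theorem integrable_convK_integrand (hf : Continuous (uncurry f)) (hg : Continuous (uncurry g))
    (hgc : HasCompactSupport (uncurry g)) (x : ℝ) :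
    Integrable (fun p : ℝ × ℝ => f x p.1 * g p.1 p.2) (volume.prod volume) := by
  rw [← Measure.volume_eq_prod]
  exact ((hf.comp (Continuous.prodMk_right x)).comp continuous_fst |>.mul hg)
    |>.integrable_of_hasCompactSupport hgc.mul_left

theorem setIntegral_Ioi_convK (hf : Continuous (uncurry f)) (hft : ∀ x y, y < x → f x y = 0)
    (hg : Continuous (uncurry g)) (hgc : HasCompactSupport (uncurry g))
    (hgt : ∀ x y, y < x → g x y = 0) (x : ℝ) :
    ∫ y in Ioi x, convK f g x y = ∫ y in Ioi x, f x y * Aop g y := by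
  have hconv_zero : ∀ y < x, convK f g x y = 0 := fun y hy => by
    have : ∀ s, f x s * g s y = 0 := fun s => by
      rcases lt_or_ge s x with hs | hs
      · rw [hft x s hs, zero_mul]
      · rw [hgt s y (hy.trans_le hs), mul_zero]
    simp only [convK, this, integral_zero]
  rw [setIntegral_Ioi_eq_integral_of_eq_zero hconv_zero,
    setIntegral_Ioi_eq_integral_of_eq_zero fun y hy => by rw [hft x y hy, zero_mul]]
  simp only [convK, Aop_eq_integral_s16 hgt, ← integral_const_mul]
  exact (integral_integral_swap (integrable_convK_integrand hf hg hgc x)).symm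

theorem Aop_Qop_eq {bf bg : ℝ → ℝ} (hbg : ContDiff ℝ 1 bg)
    (hf : ContDiff ℝ 1 (uncurry f)) (hfc : HasCompactSupport (uncurry f))
    (hft : ∀ x y, y < x → f x y = 0) (hg : ContDiff ℝ 1 (uncurry g))
    (hgc : HasCompactSupport (uncurry g)) (hgt : ∀ x y, y < x → g x y = 0) (x : ℝ) :
    Aop (fun rm rp => Qop bf f bg g rm rp) x =
      -(Aop f x * Aop g x) + bf x * deriv (Aop g) x := by
  show ∫ y in Ioi x, Qop bf f bg g x y = _
  simp only [Qop]
  set φ : ℝ → ℝ := fun r => f x r * bg r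
  have hφ : ContDiff ℝ 1 φ := (hf.comp (contDiff_const.prodMk contDiff_id)).mul hbg
  have hφc : HasCompactSupport φ := (hfc.comp_prodMk x).mul_right
  have hAg : Continuous (Aop g) := continuous_iff_continuousAt.2 fun y =>
    (hasDerivAt_Aop hg hgc hgt y).continuousAt
  have i₁ : Integrable (convK f g x) :=
    (integrable_convK_integrand hf.continuous hg.continuous hgc x).integral_prod_right
  have i₂ : Integrable fun y => Aop f x * g x y :=
    (integrable_of_hasCompactSupport_uncurry hg.continuous hgc x).const_mul _
  have i₃ : Integrable fun y => f x y * Aop g y :=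
    ((hf.continuous.comp (Continuous.prodMk_right x)).mul hAg).integrable_of_hasCompactSupport
      (hfc.comp_prodMk x).mul_right
  have i₄ : Integrable fun y => bf x * deriv (fun r => g r y) x :=
    (hasDerivAt_integral_of_contDiff_uncurry hg hgc x).1.const_mul _
  have i₅ : Integrable (deriv φ) :=
    (hφ.continuous_deriv le_rfl).integrable_of_hasCompactSupport hφc.deriv
  have hboundary : ∫ y in Ioi x, deriv φ y = 0 := by
    rw [hφc.integral_Ioi_deriv_eq hφ, neg_eq_zero]
    exact mul_eq_zero_of_left (apply_self_eq_zero_of_continuous hf.continuous hft x) _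
  rw [integral_sub ?_ i₅.integrableOn, integral_add ?_ i₄.integrableOn,
    integral_sub ?_ i₃.integrableOn, integral_sub i₁.integrableOn i₂.integrableOn, hboundary,
    integral_const_mul, integral_const_mul,
    setIntegral_Ioi_convK hf.continuous hft hg.continuous hgc hgt,
    (hasDerivAt_Aop hg hgc hgt x).deriv]
  · simp only [Aop]
    ring
  · exact (i₁.sub i₂).integrableOn
  · exact ((i₁.sub i₂).sub i₃).integrableOn
  · exact (((i₁.sub i₂).sub i₃).add i₄).integrableOn

end UpperTriangular

/-- Identity `A(Q(f^j,f^i)) = −A(f^j)A(f^i) + b^j ∂_ρ A(f^i)` for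
`i,j ∈ {1,2}`. -/
theorem stmt16
    (b : Fin 2 → ℝ → ℝ) (f : Fin 2 → ℝ → ℝ → ℝ)
    (hb : ∀ i, ContDiff ℝ 1 (b i))
    (hf : ∀ i, ContDiff ℝ 1 (fun p : ℝ × ℝ => f i p.1 p.2))
    (hfsupp : ∀ i, HasCompactSupport (fun p : ℝ × ℝ => f i p.1 p.2))
    (hftri : ∀ i rm rp, rp < rm → f i rm rp = 0) :
    ∀ i j : Fin 2, ∀ ρ : ℝ,
      Aop (fun rm rp => Qop (b j) (f j) (b i) (f i) rm rp) ρ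
        = -(Aop (f j) ρ * Aop (f i) ρ) + b j ρ * deriv (fun r => Aop (f i) r) ρ := by
  intro i j ρ
  exact Aop_Qop_eq (hb i) (hf j) (hfsupp j) (hftri j) (hf i) (hfsupp i) (hftri i) ρ
end

section
/- Let K > 0 and t₀ < T, and let A, B, C : [t₀,T] → ℝ be continuous with A(t) ≥ 0, C(t) ≤ 0, |B(t)| ≤ K and |C(t)| ≤ K for all t. Let b : [t₀,T] → ℝ be a C¹ solution of the Riccati equation b'(t) = A(t)b(t)² + 2B(t)b(t) + C(t). If b(t₀) ≤ 0, then b(t) ≤ 0 for all t ∈ [t₀,T]; moreover b(t) ≥ e^{2K(T−t₀)}(b(t₀) − K(T−t₀)) for all t ∈ [t₀,T], so b does not blow up on [t₀,T]. -/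
open Set

private theorem gronwall_aux {f f' : ℝ → ℝ} {δ L ε a c : ℝ}
    (hf : ContinuousOn f (Icc a c))
    (hf' : ∀ x ∈ Ico a c, HasDerivWithinAt f (f' x) (Ici x) x)
    (ha : f a ≤ δ) (bound : ∀ x ∈ Ico a c, f' x ≤ L * f x + ε) :
    ∀ x ∈ Icc a c, f x ≤ gronwallBound δ L ε (x - a) :=
  le_gronwallBound_of_liminf_deriv_right_le hf
    (fun x hx _r hr => (hf' x hx).liminf_right_slope_le hr) ha bound

private theorem exp_sub_one_le {x : ℝ} (hx : 0 ≤ x) :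
    Real.exp x - 1 ≤ x * Real.exp x := by
  have h1 : (1 - x) * Real.exp x ≤ Real.exp (-x) * Real.exp x :=
    mul_le_mul_of_nonneg_right (by linarith [Real.add_one_le_exp (-x)])
      (Real.exp_pos x).le
  rw [← Real.exp_add, neg_add_cancel, Real.exp_zero] at h1
  nlinarith

/-- Remark 1.2(ii): a Riccati solution `b' = A b² + 2B b + C` with `A ≥ 0`,
`C ≤ 0`, `|B| ≤ K`, `|C| ≤ K`, starting nonpositive, stays nonpositive and
satisfies the lower bound `b(t) ≥ e^{2K(T−t₀)}(b(t₀) − K(T−t₀))`, so it does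
not blow up on `[t₀,T]`. -/
theorem stmt18
    (K t0 T : ℝ) (hK : 0 < K) (hT : t0 < T)
    (A B C b : ℝ → ℝ)
    (hA : ContinuousOn A (Icc t0 T))
    (hB : ContinuousOn B (Icc t0 T))
    (hC : ContinuousOn C (Icc t0 T))
    (hApos : ∀ t ∈ Icc t0 T, 0 ≤ A t)
    (hCneg : ∀ t ∈ Icc t0 T, C t ≤ 0)
    (hBbd : ∀ t ∈ Icc t0 T, |B t| ≤ K)
    (hCbd : ∀ t ∈ Icc t0 T, |C t| ≤ K)
    (hb : ∀ t ∈ Icc t0 T, HasDerivAt b (A t * b t ^ 2 + 2 * B t * b t + C t) t)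
    (hb0 : b t0 ≤ 0) :
    ∀ t ∈ Icc t0 T,
      b t ≤ 0 ∧ Real.exp (2 * K * (T - t0)) * (b t0 - K * (T - t0)) ≤ b t := by
  have hbc : ContinuousOn b (Icc t0 T) := fun t ht =>
    (hb t ht).continuousAt.continuousWithinAt
  -- bounds on A and b
  obtain ⟨M, hM⟩ := isCompact_Icc.exists_bound_of_continuousOn hA
  obtain ⟨Mb, hMb⟩ := isCompact_Icc.exists_bound_of_continuousOn hbc
  have ht0 : t0 ∈ Icc t0 T := ⟨le_rfl, hT.le⟩
  have hM0 : 0 ≤ M := le_trans (norm_nonneg _) (hM t0 ht0)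
  have hMb0 : 0 ≤ Mb := le_trans (norm_nonneg _) (hMb t0 ht0)
  set L : ℝ := M * Mb + 2 * K with hL
  -- Step 1 : nonpositivity
  have key : ∀ s ∈ Icc t0 T, b s ≤ 0 := by
    intro s hs
    by_contra hpos
    push_neg at hpos
    have hsub : Icc t0 s ⊆ Icc t0 T := Icc_subset_Icc le_rfl hs.2
    set S : Set ℝ := {t | t ∈ Icc t0 s ∧ b t ≤ 0} with hS
    have hSne : S.Nonempty := ⟨t0, ⟨le_rfl, hs.1⟩, hb0⟩
    have hSbdd : BddAbove S := ⟨s, fun t ht => ht.1.2⟩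
    have hSclosed : IsClosed S := by
      have : S = Icc t0 s ∩ b ⁻¹' Iic 0 := by
        ext t; simp [hS, and_assoc]
      rw [this]
      exact (hbc.mono hsub).preimage_isClosed_of_isClosed isClosed_Icc isClosed_Iic
    set τ : ℝ := sSup S with hτ
    have hτS : τ ∈ S := hSclosed.csSup_mem hSne hSbdd
    have hτle : τ ≤ s := hτS.1.2
    have hτ0 : t0 ≤ τ := hτS.1.1
    have hτlt : τ < s := lt_of_le_of_ne hτle fun h => absurd (h ▸ hτS.2) (not_le.2 hpos)
    -- b τ = 0
    have hbτ0 : b τ = 0 := by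
      refine le_antisymm hτS.2 ?_
      by_contra hlt
      push_neg at hlt
      have hca : ContinuousAt b τ := (hb τ (hsub hτS.1)).continuousAt
      have h1 : ∀ᶠ t in nhdsWithin τ (Ioi τ), b t < 0 :=
        (hca.eventually_lt continuousAt_const hlt).filter_mono nhdsWithin_le_nhds
      have h2 : Ioo τ s ∈ nhdsWithin τ (Ioi τ) := Ioo_mem_nhdsGT_of_mem ⟨le_rfl, hτlt⟩
      obtain ⟨t, ht1, ht2⟩ := Filter.nonempty_of_mem (Filter.inter_mem h1 h2)
      have : t ∈ S := ⟨⟨le_trans hτ0 ht2.1.le, ht2.2.le⟩, ht1.le⟩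
      exact absurd (le_csSup hSbdd this) (not_le.2 ht2.1)
    -- b ≥ 0 on (τ, s]
    have hbnn : ∀ t ∈ Ico τ s, 0 ≤ b t := by
      intro t ht
      rcases eq_or_lt_of_le ht.1 with rfl | hlt
      · exact hbτ0.ge
      · by_contra hneg
        push_neg at hneg
        have : t ∈ S := ⟨⟨le_trans hτ0 hlt.le, ht.2.le⟩, hneg.le⟩
        exact absurd (le_csSup hSbdd this) (not_le.2 hlt)
    -- Gronwall on [τ, s]
    have hmem : ∀ t ∈ Ico τ s, t ∈ Icc t0 T :=
      fun t ht => ⟨le_trans hτ0 ht.1, le_trans ht.2.le hs.2⟩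
    have := gronwall_aux (f' := fun t => A t * b t ^ 2 + 2 * B t * b t + C t)
      (δ := 0) (L := L) (ε := 0)
      (hbc.mono fun t ht => hsub ⟨le_trans hτ0 ht.1, ht.2⟩)
      (fun t ht => (hb t (hmem t ht)).hasDerivWithinAt)
      hbτ0.le ?_ s ⟨hτle, le_rfl⟩
    · rw [gronwallBound_ε0_δ0] at this
      linarith
    · intro t ht
      have htm := hmem t ht
      have h1 : 0 ≤ A t := hApos t htm
      have h2 : A t ≤ M := (abs_le.1 (by simpa using hM t htm)).2
      have h3 : b t ≤ Mb := (abs_le.1 (by simpa using hMb t htm)).2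
      have h4 : B t ≤ K := (abs_le.1 (hBbd t htm)).2
      have h5 : C t ≤ 0 := hCneg t htm
      have h6 : 0 ≤ b t := hbnn t ht
      have h7 : A t * b t ≤ M * Mb :=
        mul_le_mul h2 h3 h6 hM0
      show A t * b t ^ 2 + 2 * B t * b t + C t ≤ L * b t + 0
      rw [hL]
      nlinarith [mul_le_mul_of_nonneg_right h7 h6, mul_le_mul_of_nonneg_right h4 h6]
  -- Step 2 : lower bound via Gronwall for -b
  intro t ht
  refine ⟨key t ht, ?_⟩
  have hgr := gronwall_aux (f := fun t => -b t)
    (f' := fun t => -(A t * b t ^ 2 + 2 * B t * b t + C t))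
    (δ := -b t0) (L := 2 * K) (ε := K)
    (hbc.neg)
    (fun x hx => ((hb x ⟨hx.1, hx.2.le⟩).hasDerivWithinAt).neg)
    le_rfl ?_ t ht
  · have h2K : (2 : ℝ) * K ≠ 0 := by positivity
    rw [gronwallBound_of_K_ne_0 h2K] at hgr
    simp only at hgr
    set E1 : ℝ := Real.exp (2 * K * (t - t0)) with hE1
    set E2 : ℝ := Real.exp (2 * K * (T - t0)) with hE2
    have hE12 : E1 ≤ E2 := Real.exp_le_exp.2 (by nlinarith [ht.2])
    have hE1pos : (0 : ℝ) < E1 := Real.exp_pos _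
    have hkey : E2 - 1 ≤ 2 * K * (T - t0) * E2 :=
      exp_sub_one_le (by nlinarith)
    have hδ : 0 ≤ -b t0 := by linarith
    have hdiv : K / (2 * K) = 1 / 2 := by
      field_simp
    rw [hdiv] at hgr
    nlinarith [mul_le_mul_of_nonneg_left hE12 hδ]
  · intro x hx
    have hxm : x ∈ Icc t0 T := ⟨hx.1, hx.2.le⟩
    have h1 : 0 ≤ A x := hApos x hxm
    have h4 : |B x| ≤ K := hBbd x hxm
    have h5 : |C x| ≤ K := hCbd x hxm
    have h6 : b x ≤ 0 := key x hxm
    have h7 : 2 * B x * b x ≥ 2 * K * b x := by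
      nlinarith [(abs_le.1 h4).1, (abs_le.1 h4).2]
    have h8 : -C x ≤ K := by linarith [(abs_le.1 h5).1]
    have h9 : 0 ≤ A x * b x ^ 2 := by positivity
    linarith
end
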